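/- arXiv:1606.05520 — 10 statements merged into one kernel-verified Lean document; each statement's English description precedes it below -/
import Mathlib

section
/- For every natural number l ≥ 1, log(l!) = ∫₀^∞ (l - (1 - e^{-ls})/(1 - e^{-s})) · e^{-s}/s ds. -/
open Real MeasureTheory Set

/-- The antiderivative computation: for `s ≠ 0`,
`t ↦ -exp (-(t*s))/s` has derivative `exp (-(t*s))`. -/
lemma hasDerivAt_aux (s : ℝ) (hs : s ≠ 0) (t : ℝ) :
    HasDerivAt (fun t : ℝ => -(Real.exp (-(t * s)) / s)) (Real.exp (-(t * s))) t := by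
  have h1 : HasDerivAt (fun t : ℝ => t * s) s t := hasDerivAt_mul_const s
  have h2 := ((h1.neg.exp).div_const s).neg
  convert h2 using 1
  · rfl
  · rfl
  · rfl
  simp only [Pi.neg_apply]
  rw [mul_neg, neg_div, neg_neg, mul_div_cancel_right₀ _ hs]

/-- Inner integral in `t`. -/
lemma inner_t (a s : ℝ) (ha : 1 ≤ a) (hs : 0 < s) :
    ∫ t in Ioc (1 : ℝ) a, Real.exp (-(t * s)) =
      (Real.exp (-s) - Real.exp (-(a * s))) / s := by
  rw [← intervalIntegral.integral_of_le ha]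
  rw [intervalIntegral.integral_eq_sub_of_hasDerivAt
      (fun t _ => hasDerivAt_aux s hs.ne' t)
      ((Real.continuous_exp.comp (continuous_neg.comp
        (continuous_id.mul continuous_const))).continuousOn.intervalIntegrable)]
  field_simp
  ring

/-- Inner integral in `s`. -/
lemma inner_s (t : ℝ) (ht : 0 < t) :
    ∫ s in Ioi (0 : ℝ), Real.exp (-(t * s)) = 1 / t := by
  have := MeasureTheory.integral_comp_mul_left_Ioi (fun x => Real.exp (-x)) 0 ht
  simp only [mul_zero] at this
  rw [this, integral_exp_neg_Ioi_zero, smul_eq_mul, mul_one, one_div]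

/-- Integrability of `(s,t) ↦ exp (-(t*s))` on `Ioi 0 ×ˢ Ioc 1 a`. -/
lemma integrable_prod (a : ℝ) :
    Integrable (Function.uncurry fun s t : ℝ => Real.exp (-(t * s)))
      ((volume.restrict (Ioi (0 : ℝ))).prod (volume.restrict (Ioc (1 : ℝ) a))) := by
  have hg : Integrable (fun p : ℝ × ℝ => Real.exp (-p.1) * 1)
      ((volume.restrict (Ioi (0 : ℝ))).prod (volume.restrict (Ioc (1 : ℝ) a))) := by
    have h1 : IntegrableOn (fun x : ℝ => Real.exp (-x)) (Ioi (0 : ℝ)) := by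
      simpa using exp_neg_integrableOn_Ioi 0 (one_pos)
    have h2 : IntegrableOn (fun _ : ℝ => (1 : ℝ)) (Ioc (1 : ℝ) a) :=
      integrableOn_const measure_Ioc_lt_top.ne
    exact Integrable.mul_prod h1 h2
  have hmeas : AEStronglyMeasurable (Function.uncurry fun s t : ℝ => Real.exp (-(t * s)))
      ((volume.restrict (Ioi (0 : ℝ))).prod (volume.restrict (Ioc (1 : ℝ) a))) := by
    apply Continuous.aestronglyMeasurable
    exact Real.continuous_exp.comp (continuous_neg.comp (continuous_snd.mul continuous_fst))
  refine hg.mono hmeas ?_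
  rw [Measure.prod_restrict]
  filter_upwards [ae_restrict_mem ((measurableSet_Ioi).prod measurableSet_Ioc)] with p hp
  obtain ⟨hp1, hp2⟩ := hp
  simp only [Function.uncurry, Real.norm_eq_abs, abs_of_pos (Real.exp_pos _), mul_one]
  exact Real.exp_le_exp.2 (by nlinarith [(show (0:ℝ) < p.1 from hp1).le, hp2.1.le, hp2.2])

/-- Frullani integral for `a ≥ 1`. -/
lemma frullani (a : ℝ) (ha : 1 ≤ a) :
    ∫ s in Ioi (0 : ℝ), (Real.exp (-s) - Real.exp (-(a * s))) / s = Real.log a := by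
  have swap := MeasureTheory.integral_integral_swap (integrable_prod a)
  have lhs_eq : ∫ s in Ioi (0 : ℝ), ∫ t in Ioc (1 : ℝ) a, Real.exp (-(t * s)) =
      ∫ s in Ioi (0 : ℝ), (Real.exp (-s) - Real.exp (-(a * s))) / s := by
    apply setIntegral_congr_fun measurableSet_Ioi
    intro s hs
    exact inner_t a s ha hs
  have rhs_eq : ∫ t in Ioc (1 : ℝ) a, ∫ s in Ioi (0 : ℝ), Real.exp (-(t * s)) = Real.log a := by
    have : ∫ t in Ioc (1 : ℝ) a, ∫ s in Ioi (0 : ℝ), Real.exp (-(t * s)) =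
        ∫ t in Ioc (1 : ℝ) a, 1 / t := by
      apply setIntegral_congr_fun measurableSet_Ioc
      intro t ht
      exact inner_s t (lt_of_lt_of_le one_pos ht.1.le)
    rw [this, ← intervalIntegral.integral_of_le ha, integral_one_div (by
      intro h
      rw [Set.mem_uIcc] at h
      rcases h with ⟨h1, _⟩ | ⟨_, h2⟩ <;> linarith)]
    simp
  rw [← lhs_eq, swap, rhs_eq]

/-- Each Frullani integrand is integrable. -/
lemma frullani_integrable (a : ℝ) (ha : 1 ≤ a) :
    IntegrableOn (fun s => (Real.exp (-s) - Real.exp (-(a * s))) / s) (Ioi (0 : ℝ)) := by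
  have he : IntegrableOn (fun x : ℝ => Real.exp (-x)) (Ioi (0 : ℝ)) := by
    simpa using exp_neg_integrableOn_Ioi 0 one_pos
  have hg : IntegrableOn (fun s => (a - 1) * Real.exp (-s)) (Ioi (0 : ℝ)) :=
    he.const_mul (a - 1)
  refine Integrable.mono hg ?_ ?_
  · apply ContinuousOn.aestronglyMeasurable ?_ measurableSet_Ioi
    apply ContinuousOn.div
    · exact (Real.continuous_exp.comp continuous_neg).continuousOn.sub
        ((Real.continuous_exp.comp (continuous_const.mul continuous_id).neg).continuousOn)
    · exact continuousOn_id
    · intro x hx; exact (ne_of_gt hx)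
  · filter_upwards [ae_restrict_mem measurableSet_Ioi] with s hs
    have hs0 : (0 : ℝ) < s := hs
    have hnum : 0 ≤ Real.exp (-s) - Real.exp (-(a * s)) := by
      have : -(a * s) ≤ -s := by nlinarith
      linarith [Real.exp_le_exp.2 this]
    rw [Real.norm_eq_abs, Real.norm_eq_abs, abs_of_nonneg (div_nonneg hnum hs0.le),
      abs_of_nonneg (mul_nonneg (by linarith) (Real.exp_pos (-s)).le)]
    rw [div_le_iff₀ hs0]
    have key : Real.exp (-s) - Real.exp (-(a * s)) ≤ Real.exp (-s) * ((a - 1) * s) := by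
      have h1 : Real.exp (-(a * s)) = Real.exp (-s) * Real.exp (-((a - 1) * s)) := by
        rw [← Real.exp_add]; ring_nf
      rw [h1]
      have h2 : 1 - Real.exp (-((a - 1) * s)) ≤ (a - 1) * s := by
        have := Real.add_one_le_exp (-((a - 1) * s))
        linarith
      nlinarith [Real.exp_pos (-s)]
    nlinarith [Real.exp_pos (-s)]

theorem log_factorial_integral (l : ℕ) (hl : 1 ≤ l) :
    Real.log (Nat.factorial l) =
      ∫ s in Set.Ioi (0 : ℝ),
        ((l : ℝ) - (1 - Real.exp (-(l : ℝ) * s)) / (1 - Real.exp (-s))) * Real.exp (-s) / s := by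
  have hfac : (Nat.factorial l : ℝ) = ∏ x ∈ Finset.range l, ((x : ℝ) + 1) := by
    rw [← Finset.prod_range_add_one_eq_factorial]
    push_cast
    rfl
  have hlog : Real.log (Nat.factorial l) =
      ∑ x ∈ Finset.range l, Real.log ((x : ℝ) + 1) := by
    rw [hfac, Real.log_prod]
    intro x _
    positivity
  have hsum : ∑ x ∈ Finset.range l, Real.log ((x : ℝ) + 1) =
      ∑ x ∈ Finset.range l, ∫ s in Ioi (0 : ℝ),
        (Real.exp (-s) - Real.exp (-(((x : ℝ) + 1) * s))) / s := by
    apply Finset.sum_congr rfl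
    intro x _
    rw [frullani _ (by linarith [Nat.cast_nonneg (α := ℝ) x])]
  rw [hlog, hsum, ← integral_finset_sum _
    (fun x _ => frullani_integrable _ (by linarith [Nat.cast_nonneg (α := ℝ) x]))]
  apply setIntegral_congr_fun measurableSet_Ioi
  intro s hs
  have hs0 : (0 : ℝ) < s := hs
  have hexp_lt : Real.exp (-s) < 1 := Real.exp_lt_one_iff.2 (by linarith)
  have hne : (1 : ℝ) - Real.exp (-s) ≠ 0 := by linarith
  have hxne : Real.exp (-s) ≠ 1 := by linarith
  -- sum of exponentials is geometric
  have hgeom : ∑ x ∈ Finset.range l, Real.exp (-(((x : ℝ) + 1) * s)) =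
      Real.exp (-s) * ((1 - Real.exp (-(l : ℝ) * s)) / (1 - Real.exp (-s))) := by
    have h1 : ∀ x : ℕ, Real.exp (-(((x : ℝ) + 1) * s)) =
        Real.exp (-s) * (Real.exp (-s)) ^ x := by
      intro x
      rw [← Real.exp_nat_mul, ← Real.exp_add]
      ring_nf
    simp_rw [h1]
    rw [← Finset.mul_sum, geom_sum_eq hxne]
    rw [← Real.exp_nat_mul]
    congr 1
    rw [div_eq_div_iff (by intro h; apply hxne; linarith) hne]
    ring_nf
  have hterm : ∑ x ∈ Finset.range l, (Real.exp (-s) - Real.exp (-(((x : ℝ) + 1) * s))) / s =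
      ((l : ℝ) * Real.exp (-s) - ∑ x ∈ Finset.range l, Real.exp (-(((x : ℝ) + 1) * s))) / s := by
    rw [← Finset.sum_div, Finset.sum_sub_distrib, Finset.sum_const, Finset.card_range,
      nsmul_eq_mul]
  simp only [hterm, hgeom]
  field_simp
end

section
/- For every natural number l ≥ 1, log(l!) = ∫₀^1 ((1 - (1-t)^l)/t - l) · dt / log(1-t). -/
open Real MeasureTheory intervalIntegral

lemma aux_meas (a : ℝ) :
    AEStronglyMeasurable (fun x : ℝ => x ^ a) (volume.restrict (Set.uIoc (0:ℝ) 1)) := by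
  apply AEStronglyMeasurable.congr
    (f := fun x : ℝ => Real.exp (Real.log x * a))
  · exact (Real.measurable_log.mul_const a).exp.aestronglyMeasurable
  · filter_upwards [ae_restrict_mem measurableSet_uIoc] with x hx
    rw [Set.uIoc_of_le zero_le_one] at hx
    rw [Real.rpow_def_of_pos hx.1]

lemma aux_meas' (a : ℝ) :
    AEStronglyMeasurable (fun x : ℝ => (x ^ a - 1) / Real.log x)
      (volume.restrict (Set.uIoc (0:ℝ) 1)) := by
  simp only [div_eq_mul_inv]
  exact (((aux_meas a).aemeasurable.sub aemeasurable_const).mul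
    Real.measurable_log.aemeasurable.inv).aestronglyMeasurable

lemma aux_int (a : ℝ) (ha : 0 ≤ a) :
    IntervalIntegrable (fun x : ℝ => (x ^ a - 1) / Real.log x) volume 0 1 := by
  rw [intervalIntegrable_iff]
  apply MeasureTheory.Integrable.mono' (g := fun _ : ℝ => a)
  · have : IsFiniteMeasure (volume.restrict (Set.uIoc (0:ℝ) 1)) := by
      constructor
      rw [Measure.restrict_apply_univ]
      exact measure_Ioc_lt_top
    exact integrable_const a
  · exact aux_meas' a
  · filter_upwards [ae_restrict_mem measurableSet_uIoc] with x hx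
    rw [Set.uIoc_of_le zero_le_one] at hx
    rcases eq_or_lt_of_le hx.2 with h1 | h1
    · simp [h1, Real.one_rpow, ha]
    · have hx0 : 0 < x := hx.1
      have hlog : Real.log x < 0 := Real.log_neg hx0 h1
      have hle : x ^ a ≤ 1 := Real.rpow_le_one hx0.le h1.le ha
      have hge : 1 + a * Real.log x ≤ x ^ a := by
        rw [Real.rpow_def_of_pos hx0, mul_comm]
        linarith [Real.add_one_le_exp (Real.log x * a)]
      rw [Real.norm_eq_abs, abs_div, abs_of_nonpos (by linarith : x ^ a - 1 ≤ 0),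
        abs_of_neg hlog]
      rw [div_le_iff₀ (by linarith : 0 < -Real.log x)]
      nlinarith

noncomputable def Fa (a : ℝ) : ℝ := ∫ x in (0:ℝ)..1, (x ^ a - 1) / Real.log x

lemma Fa_hasDeriv (a₀ : ℝ) (ha : 0 ≤ a₀) : HasDerivAt Fa (1 / (a₀ + 1)) a₀ := by
  have hne : ∀ᵐ t : ℝ ∂volume, t ≠ 1 := by
    rw [ae_iff]
    simp only [not_not]
    exact measure_singleton 1
  have key := intervalIntegral.hasDerivAt_integral_of_dominated_loc_of_deriv_le
    (F := fun a t => (t ^ a - 1) / Real.log t) (F' := fun a t => t ^ a)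
    (x₀ := a₀) (a := (0:ℝ)) (b := 1) (μ := volume)
    (bound := fun t => t ^ (-(1/2) : ℝ)) (s := Metric.ball a₀ (1/2)) (Metric.ball_mem_nhds _ (by norm_num))
    (Filter.Eventually.of_forall fun a => aux_meas' a)
    (aux_int a₀ ha) (aux_meas a₀)
    ?_ (intervalIntegrable_rpow' (by norm_num)) ?_
  · have h2 : (∫ t in (0:ℝ)..1, t ^ a₀) = 1 / (a₀ + 1) := by
      rw [integral_rpow (Or.inl (by linarith : (-1:ℝ) < a₀))]
      rw [Real.one_rpow, Real.zero_rpow (by linarith : a₀ + 1 ≠ 0)]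
      ring
    rw [h2] at key
    exact key.2
  · filter_upwards with t ht a hba
    rw [Set.uIoc_of_le zero_le_one] at ht
    rw [Real.norm_eq_abs, abs_of_nonneg (Real.rpow_nonneg ht.1.le _)]
    apply Real.rpow_le_rpow_of_exponent_ge ht.1 ht.2
    have := abs_lt.mp (by simpa [Real.dist_eq] using hba)
    linarith [this.1]
  · filter_upwards [hne] with t ht1 ht a _
    rw [Set.uIoc_of_le zero_le_one] at ht
    have ht0 : 0 < t := ht.1
    have htlt : t < 1 := lt_of_le_of_ne ht.2 ht1
    have hlog : Real.log t ≠ 0 := ne_of_lt (Real.log_neg ht0 htlt)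
    have hd : HasDerivAt (fun a : ℝ => t ^ a) (t ^ a * Real.log t) a :=
      (Real.hasStrictDerivAt_const_rpow ht0 a).hasDerivAt
    have := (hd.sub_const 1).div_const (Real.log t)
    simpa [mul_div_assoc, div_self hlog] using this

lemma Fa_zero : Fa 0 = 0 := by
  unfold Fa
  simp [Real.rpow_zero]

lemma key_rpow (k : ℕ) :
    (∫ x in (0:ℝ)..1, (x ^ (k:ℝ) - 1) / Real.log x) = Real.log (k + 1) := by
  have hk0 : (0:ℝ) ≤ k := Nat.cast_nonneg k
  have hftc : ∫ s in (0:ℝ)..(k:ℝ), (s + 1)⁻¹ = Fa k - Fa 0 := by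
    apply intervalIntegral.integral_eq_sub_of_hasDerivAt
    · intro s hs
      rw [Set.uIcc_of_le hk0] at hs
      have := Fa_hasDeriv s hs.1
      rwa [one_div] at this
    · apply ContinuousOn.intervalIntegrable
      apply ContinuousOn.inv₀ (by fun_prop)
      intro s hs
      rw [Set.uIcc_of_le hk0] at hs
      linarith [hs.1]
  have hlhs : ∫ s in (0:ℝ)..(k:ℝ), (s + 1)⁻¹ = Real.log (k + 1) := by
    have := intervalIntegral.integral_comp_add_right (a := (0:ℝ)) (b := (k:ℝ))
      (fun u : ℝ => u⁻¹) 1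
    rw [this, zero_add, integral_inv (by
      rw [Set.uIcc_of_le (by linarith : (1:ℝ) ≤ k + 1)]
      intro h
      linarith [h.1] : (0:ℝ) ∉ Set.uIcc 1 ((k:ℝ) + 1))]
    rw [div_one]
  rw [Fa_zero, sub_zero] at hftc
  rw [show (∫ x in (0:ℝ)..1, (x ^ (k:ℝ) - 1) / Real.log x) = Fa k from rfl,
    ← hftc, hlhs]

lemma key_nat (k : ℕ) :
    (∫ x in (0:ℝ)..1, ((x:ℝ) ^ k - 1) / Real.log x) = Real.log (k + 1) := by
  have := key_rpow k
  simpa [Real.rpow_natCast] using this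

lemma aux_int_nat (k : ℕ) :
    IntervalIntegrable (fun x : ℝ => ((x:ℝ) ^ k - 1) / Real.log x) volume 0 1 := by
  have := aux_int (k:ℝ) (Nat.cast_nonneg k)
  have heq : (fun x : ℝ => (x ^ (k:ℝ) - 1) / Real.log x)
      = fun x : ℝ => ((x:ℝ) ^ k - 1) / Real.log x := by
    funext x; rw [Real.rpow_natCast]
  rwa [heq] at this

lemma gk_int (k : ℕ) :
    IntervalIntegrable (fun t : ℝ => ((1 - t) ^ k - 1) / Real.log (1 - t)) volume 0 1 := by
  have := ((aux_int_nat k).comp_sub_left 1).symm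
  simpa using this

lemma gk_val (k : ℕ) :
    (∫ t in (0:ℝ)..1, ((1 - t) ^ k - 1) / Real.log (1 - t)) = Real.log (k + 1) := by
  have := intervalIntegral.integral_comp_sub_left (a := (0:ℝ)) (b := 1)
    (fun x : ℝ => ((x:ℝ) ^ k - 1) / Real.log x) 1
  simpa [key_nat k] using this

theorem log_factorial_integral' (l : ℕ) (hl : 1 ≤ l) :
    Real.log (Nat.factorial l) =
      ∫ t in (0:ℝ)..1, ((1 - (1 - t) ^ l) / t - (l : ℝ)) / Real.log (1 - t) := by
  have hcongr : Set.EqOn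
      (fun t : ℝ => ((1 - (1 - t) ^ l) / t - (l : ℝ)) / Real.log (1 - t))
      (fun t : ℝ => ∑ k ∈ Finset.range l, ((1 - t) ^ k - 1) / Real.log (1 - t))
      (Set.uIcc (0:ℝ) 1) := by
    intro t ht
    simp only
    rcases eq_or_ne t 0 with rfl | ht0
    · simp
    · have hgeom : ∑ k ∈ Finset.range l, (1 - t) ^ k = (1 - (1 - t) ^ l) / t := by
        rw [geom_sum_eq (by intro h; apply ht0; linarith [sub_eq_iff_eq_add.mp h] : (1:ℝ) - t ≠ 1)]
        rw [show (1:ℝ) - t - 1 = -t by ring, div_neg, ← neg_div, neg_sub]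
      rw [← hgeom, ← Finset.sum_div, Finset.sum_sub_distrib, Finset.sum_const,
        Finset.card_range, nsmul_eq_mul, mul_one]
  rw [intervalIntegral.integral_congr hcongr,
    intervalIntegral.integral_finset_sum (fun k _ => gk_int k)]
  have hsum : ∀ k ∈ Finset.range l,
      (∫ t in (0:ℝ)..1, ((1 - t) ^ k - 1) / Real.log (1 - t)) = Real.log (k + 1) :=
    fun k _ => gk_val k
  rw [Finset.sum_congr rfl hsum]
  rw [← Finset.prod_range_add_one_eq_factorial l]
  push_cast
  rw [Real.log_prod]
  intro k _
  positivity
end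

section
/- For real x > 0, n > 0, and integer j ≥ 2, ∫₀^1 t^{j-1}(1-t)^n (1 + x t)^{-(n+j+1)} dt = ((j-1)/((n+1)(x+1))) · ∫₀^1 t^{j-2}(1-t)^{n+1} (1 + x t)^{-(n+j+1)} dt. -/
open Real

theorem integral_parts_identity (x n : ℝ) (hx : 0 < x) (hn : 0 < n) (j : ℕ) (hj : 2 ≤ j) :
    ∫ t in (0:ℝ)..1, t ^ (j - 1) * (1 - t) ^ n * (1 + x * t) ^ (-(n + j + 1)) =
      ((j : ℝ) - 1) / ((n + 1) * (x + 1)) *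
        ∫ t in (0:ℝ)..1, t ^ (j - 2) * (1 - t) ^ (n + 1) * (1 + x * t) ^ (-(n + j + 1)) := by
  set q : ℕ := j - 2 with hq
  have hj1 : j - 1 = q + 1 := by omega
  have hjq : (j : ℝ) = (q : ℝ) + 2 := by
    have : j = q + 2 := by omega
    rw [this]; push_cast; ring
  -- the auxiliary function u
  set u : ℝ → ℝ := fun t => t ^ q * (1 - t) ^ n * (1 + x * t) ^ (-(n + (j:ℝ) + 1)) with hu
  -- positivity of base on [0,1]
  have hbase : ∀ t ∈ Set.uIcc (0:ℝ) 1, 0 < 1 + x * t := by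
    intro t ht
    rw [Set.uIcc_of_le (by norm_num)] at ht
    nlinarith [ht.1]
  -- continuity of u on [0,1]
  have hucont : ContinuousOn u (Set.uIcc (0:ℝ) 1) := by
    intro t ht
    apply ContinuousWithinAt.mul
    apply ContinuousWithinAt.mul
    · exact (continuous_pow q).continuousWithinAt
    · exact ((Real.continuous_rpow_const hn.le).comp (by continuity)).continuousWithinAt
    · exact (((continuous_const.add (continuous_const.mul continuous_id)).continuousAt).rpow_const
        (Or.inl (hbase t ht).ne')).continuousWithinAt
  have huint : IntervalIntegrable u MeasureTheory.volume 0 1 :=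
    hucont.intervalIntegrable
  have htucont : ContinuousOn (fun t => t * u t) (Set.uIcc (0:ℝ) 1) :=
    continuousOn_id.mul hucont
  have htuint : IntervalIntegrable (fun t => t * u t) MeasureTheory.volume 0 1 :=
    htucont.intervalIntegrable
  -- FTC on F
  set K : ℝ := (n + j) + x * (n + 1) with hK
  set F : ℝ → ℝ := fun t => t ^ (q + 1) * (1 - t) ^ (n + 1) * (1 + x * t) ^ (-(n + (j:ℝ))) with hF
  have hderiv : ∀ t ∈ Set.uIcc (0:ℝ) 1,
      HasDerivAt F (((q:ℝ) + 1) * u t - K * (t * u t)) t := by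
    intro t ht
    have hb := hbase t ht
    rw [Set.uIcc_of_le (by norm_num)] at ht
    have h1 : HasDerivAt (fun t : ℝ => t ^ (q + 1)) (((q:ℝ) + 1) * t ^ q) t := by
      have := hasDerivAt_pow (q + 1) t
      simpa using this
    have h2 : HasDerivAt (fun t : ℝ => (1 - t) ^ (n + 1))
        (((n + 1) * (1 - t) ^ n) * (-1)) t := by
      have hinner : HasDerivAt (fun t : ℝ => 1 - t) (-1) t := by
        simpa using (hasDerivAt_id t).const_sub 1
      have houter : HasDerivAt (fun y : ℝ => y ^ (n + 1)) ((n + 1) * (1 - t) ^ n) (1 - t) := by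
        have := Real.hasDerivAt_rpow_const (x := 1 - t) (p := n + 1)
          (Or.inr (by linarith))
        simpa using this
      exact houter.comp t hinner
    have h3 : HasDerivAt (fun t : ℝ => (1 + x * t) ^ (-(n + (j:ℝ))))
        ((-(n + (j:ℝ)) * (1 + x * t) ^ (-(n + (j:ℝ)) - 1)) * x) t := by
      have hinner : HasDerivAt (fun t : ℝ => 1 + x * t) x t := by
        simpa using ((hasDerivAt_id t).const_mul x).const_add 1
      have houter : HasDerivAt (fun y : ℝ => y ^ (-(n + (j:ℝ))))
          (-(n + (j:ℝ)) * (1 + x * t) ^ (-(n + (j:ℝ)) - 1)) (1 + x * t) :=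
        Real.hasDerivAt_rpow_const (Or.inl hb.ne')
      exact houter.comp t hinner
    have hD := (h1.mul h2).mul h3
    refine hD.congr_deriv ?_
    -- algebraic identity
    have e1 : (1 - t) ^ (n + 1) = (1 - t) ^ n * (1 - t) := by
      rw [Real.rpow_add' (by linarith [ht.2]) (by linarith), Real.rpow_one]
    have e2 : (1 + x * t) ^ (-(n + (j:ℝ))) =
        (1 + x * t) ^ (-(n + (j:ℝ) + 1)) * (1 + x * t) := by
      rw [show -(n + (j:ℝ)) = -(n + (j:ℝ) + 1) + 1 by ring, Real.rpow_add hb, Real.rpow_one]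
    have e3 : (1 + x * t) ^ (-(n + (j:ℝ)) - 1) = (1 + x * t) ^ (-(n + (j:ℝ) + 1)) := by
      ring_nf
    rw [hu]
    simp only [Pi.mul_apply]
    rw [e1, e2, e3, hK, hjq, pow_succ]
    ring
  have hcont2 : ContinuousOn (fun t => ((q:ℝ) + 1) * u t - K * (t * u t)) (Set.uIcc 0 1) :=
    (continuousOn_const.mul hucont).sub (continuousOn_const.mul htucont)
  have hFTC : ∫ t in (0:ℝ)..1, (((q:ℝ) + 1) * u t - K * (t * u t)) = F 1 - F 0 :=
    intervalIntegral.integral_eq_sub_of_hasDerivAt hderiv hcont2.intervalIntegrable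
  have hF1 : F 1 = 0 := by
    simp only [hF]
    rw [sub_self, Real.zero_rpow (by linarith)]
    ring
  have hF0 : F 0 = 0 := by
    simp only [hF]
    rw [zero_pow (Nat.succ_ne_zero q)]
    ring
  rw [hF1, hF0, sub_self] at hFTC
  rw [intervalIntegral.integral_sub ((huint.const_mul _)) ((htuint.const_mul _)),
    intervalIntegral.integral_const_mul, intervalIntegral.integral_const_mul] at hFTC
  -- identify the two integrals
  have hA : (∫ t in (0:ℝ)..1, t ^ (j - 1) * (1 - t) ^ n * (1 + x * t) ^ (-(n + j + 1)))
      = ∫ t in (0:ℝ)..1, t * u t := by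
    apply intervalIntegral.integral_congr
    intro t ht
    rw [hu]
    simp only [hj1, pow_succ]
    ring
  have hB : (∫ t in (0:ℝ)..1, t ^ (j - 2) * (1 - t) ^ (n + 1) * (1 + x * t) ^ (-(n + j + 1)))
      = (∫ t in (0:ℝ)..1, u t) - ∫ t in (0:ℝ)..1, t * u t := by
    rw [← intervalIntegral.integral_sub huint htuint]
    apply intervalIntegral.integral_congr
    intro t ht
    rw [Set.uIcc_of_le (by norm_num)] at ht
    have e1 : (1 - t) ^ (n + 1) = (1 - t) ^ n * (1 - t) := by
      rw [Real.rpow_add' (by linarith [ht.2]) (by linarith), Real.rpow_one]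
    rw [hu, ← hq]
    simp only []
    rw [e1]
    ring
  rw [hA, hB]
  set Iu : ℝ := ∫ t in (0:ℝ)..1, u t
  set It : ℝ := ∫ t in (0:ℝ)..1, t * u t
  have hne : (n + 1) * (x + 1) ≠ 0 := by positivity
  rw [div_mul_eq_mul_div, eq_div_iff hne]
  rw [hK, hjq] at hFTC
  rw [hjq]
  linear_combination -hFTC
end

section
/- For real x > 0, n > 0, and integer j ≥ 1, ∫₀^1 t^{j-1}(1-t)^n (1 + x t)^{-(n+j+1)} dt = (j-1)! / ((n+1)(n+2)···(n+j)) · (x+1)^{-j}. -/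
open Real Finset intervalIntegral

lemma aux_beta : ∀ (j : ℕ) (n : ℝ), 0 < n →
    ∫ y in (0:ℝ)..1, y ^ n * (1 - y) ^ j =
      (Nat.factorial j : ℝ) / ∏ i ∈ Finset.range (j + 1), (n + i + 1) := by
  intro j
  induction j with
  | zero =>
    intro n hn
    simp only [pow_zero, mul_one, Nat.factorial_zero, Finset.range_one, Finset.prod_singleton]
    rw [integral_rpow (Or.inl (by linarith))]
    rw [Real.one_rpow, Real.zero_rpow (by linarith : n + 1 ≠ 0)]
    norm_num
  | succ j ih =>
    intro n hn
    have hcont_pow : ∀ m : ℕ, Continuous (fun y : ℝ => (1 - y) ^ m) := by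
      intro m; fun_prop
    have hrpowc : ∀ p : ℝ, 0 ≤ p → Continuous (fun y : ℝ => y ^ p) :=
      fun p hp => Real.continuous_rpow_const hp
    -- IBP : u = (1-y)^(j+1), v = y^(n+1)/(n+1)
    have hu : ∀ y ∈ Set.uIcc (0:ℝ) 1, HasDerivAt (fun y : ℝ => (1 - y) ^ (j+1))
        (-( (j+1) * (1 - y) ^ j)) y := by
      intro y _
      have h1 : HasDerivAt (fun y : ℝ => 1 - y) (-1) y := by
        simpa using (hasDerivAt_id y).const_sub 1
      have := h1.pow (j+1)
      refine this.congr_deriv ?_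
      push_cast; ring
    have hv : ∀ y ∈ Set.uIcc (0:ℝ) 1, HasDerivAt (fun y : ℝ => y ^ (n+1) / (n+1))
        (y ^ n) y := by
      intro y _
      have h1 : HasDerivAt (fun y : ℝ => y ^ (n+1)) ((n+1) * y ^ n) y := by
        have := Real.hasDerivAt_rpow_const (x := y) (p := n+1) (Or.inr (by linarith))
        simpa using this
      have := h1.div_const (n+1)
      refine this.congr_deriv ?_
      field_simp [show n + 1 ≠ 0 by linarith]
    have hIBP := intervalIntegral.integral_mul_deriv_eq_deriv_mul hu hv
      ((by fun_prop : Continuous fun y : ℝ => -(((j:ℝ)+1) * (1 - y) ^ j)).intervalIntegrable 0 1)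
      ((hrpowc n hn.le).intervalIntegrable 0 1)
    have key : ∫ y in (0:ℝ)..1, y ^ n * (1 - y) ^ (j+1)
        = ((j:ℝ)+1) / (n+1) * ∫ y in (0:ℝ)..1, y ^ (n+1) * (1 - y) ^ j := by
      rw [show (∫ y in (0:ℝ)..1, y ^ n * (1 - y) ^ (j+1))
          = ∫ y in (0:ℝ)..1, (1 - y) ^ (j+1) * y ^ n by
        congr 1; ext y; ring]
      rw [hIBP]
      simp only [Real.one_rpow, Real.zero_rpow (by linarith : n + 1 ≠ 0)]
      rw [← intervalIntegral.integral_const_mul]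
      rw [show (∫ y in (0:ℝ)..1, ((j:ℝ)+1)/(n+1) * (y ^ (n+1) * (1-y)^j))
          = ∫ y in (0:ℝ)..1, -(((j:ℝ)+1) * (1-y)^j) * (y^(n+1)/(n+1)) * (-1) by
        congr 1; ext y; push_cast; ring]
      rw [intervalIntegral.integral_mul_const]
      push_cast
      ring
    rw [key, ih (n+1) (by linarith)]
    have hms : (∏ i ∈ Finset.range (j+1), (n + 1 + i + 1)) =
        ∏ i ∈ Finset.range (j+1), (n + ((i:ℝ)+1) + 1) :=
      Finset.prod_congr rfl (fun i _ => by ring)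
    rw [Finset.prod_range_succ' (fun i => (n + i + 1)) (j+1)]
    have hprodpos : (0:ℝ) < ∏ i ∈ Finset.range (j+1), (n + 1 + i + 1) := by
      apply Finset.prod_pos; intro i _; positivity
    push_cast
    rw [← hms, Nat.factorial_succ]
    push_cast
    field_simp
    ring


theorem integral_beta_identity (x n : ℝ) (hx : 0 < x) (hn : 0 < n) (j : ℕ) (hj : 1 ≤ j) :
    ∫ t in (0:ℝ)..1, t ^ (j - 1) * (1 - t) ^ n * (1 + x * t) ^ (-(n + j + 1)) =
      (Nat.factorial (j - 1) : ℝ) / (∏ i ∈ Finset.range j, (n + i + 1)) * (x + 1) ^ (-(j:ℝ)) := by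
  set g : ℝ → ℝ := fun t => (1 - t) / (1 + x * t) with hg
  set g' : ℝ → ℝ := fun t => -(1 + x) / (1 + x * t) ^ 2 with hg'
  set f : ℝ → ℝ := fun y => y ^ n * (1 - y) ^ (j - 1) with hf
  have hd : ∀ t ∈ Set.uIcc (0:ℝ) 1, 0 < 1 + x * t := by
    intro t ht
    rw [Set.uIcc_of_le zero_le_one] at ht
    nlinarith [ht.1, ht.2]
  have hgd : ∀ t ∈ Set.uIcc (0:ℝ) 1, HasDerivAt g (g' t) t := by
    intro t ht
    have h1 : HasDerivAt (fun t : ℝ => 1 - t) (-1) t := by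
      simpa using (hasDerivAt_id t).const_sub 1
    have h2 : HasDerivAt (fun t : ℝ => 1 + x * t) x t := by
      simpa using ((hasDerivAt_id t).const_mul x).const_add 1
    have := h1.div h2 (ne_of_gt (hd t ht))
    refine this.congr_deriv ?_
    rw [hg']
    field_simp
    ring
  have hg'c : ContinuousOn g' (Set.uIcc (0:ℝ) 1) := by
    apply ContinuousOn.div continuousOn_const (by fun_prop)
    intro t ht
    exact pow_ne_zero 2 (ne_of_gt (hd t ht))
  have hfc : Continuous f :=
    (Real.continuous_rpow_const hn.le).mul (by fun_prop)
  have hsub := intervalIntegral.integral_comp_smul_deriv hgd hg'c hfc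
  have hg0 : g 0 = 1 := by simp [hg]
  have hg1 : g 1 = 0 := by simp [hg]
  have hpt : ∀ t ∈ Set.uIcc (0:ℝ) 1,
      t ^ (j - 1) * (1 - t) ^ n * (1 + x * t) ^ (-(n + j + 1)) =
        (-(x + 1) ^ (-(j:ℝ))) * (g' t • f (g t)) := by
    intro t ht
    have hdt := hd t ht
    have h1t : 0 ≤ 1 - t := by
      rw [Set.uIcc_of_le zero_le_one] at ht; linarith [ht.2]
    have ht0 : 0 ≤ t := by
      rw [Set.uIcc_of_le zero_le_one] at ht; exact ht.1
    have hc : (0:ℝ) < 1 + x := by linarith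
    have h1g : 1 - (1 - t) / (1 + x * t) = (1 + x) * t / (1 + x * t) := by
      field_simp; ring
    simp only [smul_eq_mul, hf, hg, hg']
    rw [h1g]
    rw [Real.div_rpow h1t hdt.le]
    rw [div_pow, mul_pow]
    -- now pure algebra with rpow
    have e1 : (1 + x * t) ^ (-(n + j + 1)) =
        ((1 + x * t) ^ n * ((1 + x * t) ^ (j-1) * (1 + x * t) ^ 2))⁻¹ := by
      rw [← Real.rpow_natCast (1 + x * t) (j-1), ← Real.rpow_natCast (1 + x * t) 2,
        ← Real.rpow_add hdt, ← Real.rpow_add hdt, ← Real.rpow_neg hdt.le]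
      congr 1
      have : ((j - 1 : ℕ) : ℝ) = (j : ℝ) - 1 := by
        have := Nat.cast_sub hj (R := ℝ); simpa using this
      rw [this]; push_cast; ring
    have e2 : (x + 1) ^ (-(j:ℝ)) * ((1 + x) * (1 + x) ^ (j - 1)) = 1 := by
      rw [← pow_succ' (1 + x) (j-1), Nat.sub_add_cancel hj,
        show x + 1 = 1 + x by ring,
        ← Real.rpow_natCast (1 + x) j, ← Real.rpow_add hc]
      simp
    rw [e1]
    have hne : (0:ℝ) < (1 + x * t) ^ n * ((1 + x * t) ^ (j-1) * (1 + x * t) ^ 2) := by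
      have := Real.rpow_pos_of_pos hdt n
      positivity
    generalize 1 + x * t = A at *
    linear_combination (-(t ^ (j-1) * (1-t)^n *
      (A ^ n * (A ^ (j-1) * A ^ 2))⁻¹)) * e2
  rw [intervalIntegral.integral_congr hpt, intervalIntegral.integral_const_mul]
  simp only [Function.comp] at hsub
  rw [hsub, hg0, hg1, intervalIntegral.integral_symm]
  have haux := aux_beta (j-1) n hn
  rw [Nat.sub_add_cancel hj] at haux
  rw [hf, haux]
  ring
end

section
/- The derivative of the Shannon entropy of the Poisson distribution is completely monotonic: for H(x) := -∑_{k=0}^∞ (x^k e^{-x}/k!) log(x^k e^{-x}/k!), one has (-1)^k H^{(k+1)}(x) ≥ 0 for all integers k ≥ 0 and all x > 0. -/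
open Real

namespace PoissonEntropyProof
open Filter MeasureTheory Set intervalIntegral
noncomputable section
namespace PoissonAux


def Good (c : ℕ → ℝ) : Prop := ∃ M q : ℝ, 0 ≤ M ∧ 1 ≤ q ∧ ∀ j, |c j| ≤ M * q ^ j

def S (c : ℕ → ℝ) (x : ℝ) : ℝ := ∑' j, c j * x ^ j / (Nat.factorial j)

def E (c : ℕ → ℝ) (x : ℝ) : ℝ := Real.exp (-x) * S c x

def sh (c : ℕ → ℝ) : ℕ → ℝ := fun j => c (j + 1)

def Δ (c : ℕ → ℝ) : ℕ → ℝ := fun j => c (j + 1) - c j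

theorem Good.sh {c : ℕ → ℝ} (h : Good c) : Good (sh c) := by
  obtain ⟨M, q, hM, hq, hb⟩ := h
  refine ⟨M * q, q, by positivity, hq, fun j => ?_⟩
  calc |c (j+1)| ≤ M * q ^ (j+1) := hb (j+1)
    _ = M * q * q ^ j := by ring

theorem Good.delta {c : ℕ → ℝ} (h : Good c) : Good (Δ c) := by
  obtain ⟨M, q, hM, hq, hb⟩ := h
  refine ⟨2 * M * q, q, by positivity, hq, fun j => ?_⟩
  have h1 := hb (j+1); have h2 := hb j
  have hq0 : (0:ℝ) < q := lt_of_lt_of_le one_pos hq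
  have hqj : (0:ℝ) < q ^ j := pow_pos hq0 j
  have hs : q ^ (j+1) = q * q ^ j := by ring
  calc |c (j+1) - c j| ≤ |c (j+1)| + |c j| := abs_sub _ _
    _ ≤ M * q ^ (j+1) + M * q ^ j := add_le_add h1 h2
    _ ≤ 2 * M * q * q ^ j := by
        rw [hs]
        nlinarith [mul_nonneg hM hqj.le, mul_nonneg (mul_nonneg hM hqj.le) (sub_nonneg.mpr hq)]

theorem Good.summable {c : ℕ → ℝ} (h : Good c) (x : ℝ) :
    Summable (fun j => c j * x ^ j / (Nat.factorial j)) := by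
  obtain ⟨M, q, hM, hq, hb⟩ := h
  apply Summable.of_norm
  refine Summable.of_nonneg_of_le (fun j => norm_nonneg _) (fun j => ?_)
    (((Real.summable_pow_div_factorial (q * |x|)).mul_left M))
  have hfj : (0:ℝ) < (Nat.factorial j : ℝ) := by positivity
  have hrhs : M * ((q * |x|) ^ j / (Nat.factorial j : ℝ)) =
      M * q ^ j * |x| ^ j / (Nat.factorial j : ℝ) := by rw [mul_pow]; ring
  rw [norm_eq_abs, abs_div, abs_mul, abs_pow, Nat.abs_cast, hrhs]
  gcongr
  exact hb j

/-- summability of the (reindexed) derivative series -/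
theorem Good.summable' {c : ℕ → ℝ} (h : Good c) (x : ℝ) :
    Summable (fun j => c j * ((j:ℝ) * x ^ (j-1)) / (Nat.factorial j)) := by
  obtain ⟨M, q, hM, hq, hb⟩ := h
  set R : ℝ := |x| + 1 with hR
  have hR1 : (1:ℝ) ≤ R := by have := abs_nonneg x; simp only [hR]; linarith
  apply Summable.of_norm
  refine Summable.of_nonneg_of_le (fun j => norm_nonneg _) (fun j => ?_)
    (((Real.summable_pow_div_factorial (2 * q * R)).mul_left M))
  have hfj : (0:ℝ) < (Nat.factorial j : ℝ) := by positivity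
  have hrhs : M * ((2*q*R) ^ j / (Nat.factorial j : ℝ)) * (Nat.factorial j : ℝ)
      = M * (2*q*R) ^ j := by field_simp
  rw [norm_eq_abs, abs_div, abs_mul, abs_mul, Nat.abs_cast, Nat.abs_cast, abs_pow,
    div_le_iff₀ hfj, hrhs]
  have hq0 : (0:ℝ) < q := lt_of_lt_of_le one_pos hq
  have hxR : |x| ≤ R := by simp only [hR]; linarith
  have h1 : |x| ^ (j-1) ≤ R ^ (j-1) := pow_le_pow_left₀ (abs_nonneg x) hxR _
  have h2 : R ^ (j-1) ≤ R ^ j := pow_le_pow_right₀ hR1 (Nat.sub_le j 1)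
  have h3 : (j:ℝ) ≤ 2 ^ j := by
    exact_mod_cast (Nat.lt_two_pow_self (n := j)).le
  have hcb := hb j
  have hcnn : (0:ℝ) ≤ |c j| := abs_nonneg _
  have hqj : (0:ℝ) < q ^ j := pow_pos hq0 j
  have hRj : (0:ℝ) < R ^ j := pow_pos (lt_of_lt_of_le one_pos hR1) j
  have key : |c j| * ((j:ℝ) * |x| ^ (j-1)) ≤ M * (2*q*R) ^ j := by
    have e1 : (2*q*R) ^ j = 2^j * q^j * R^j := by rw [mul_pow, mul_pow]
    rw [e1]
    have t1 : (j:ℝ) * |x| ^ (j-1) ≤ 2^j * R^j := by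
      have := mul_le_mul h3 (h1.trans h2) (by positivity) (by positivity)
      linarith
    calc |c j| * ((j:ℝ) * |x| ^ (j-1)) ≤ (M * q^j) * (2^j * R^j) :=
          mul_le_mul hcb t1 (by positivity) (by positivity)
      _ = M * (2^j * q^j * R^j) := by ring
  linarith

theorem hasDerivAt_S {c : ℕ → ℝ} (h : Good c) (x : ℝ) :
    HasDerivAt (S c) (S (sh c) x) x := by
  have hgood := h
  obtain ⟨M, q, hM, hq, hb⟩ := h
  set R : ℝ := |x| + 1 with hR
  have hR1 : (1:ℝ) ≤ R := by have := abs_nonneg x; simp only [hR]; linarith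
  have hR0 : (0:ℝ) < R := by linarith
  have hq0 : (0:ℝ) < q := lt_of_lt_of_le one_pos hq
  have hxball : x ∈ Metric.ball (0:ℝ) R := by
    simp only [Metric.mem_ball, dist_zero_right, norm_eq_abs, hR]; linarith
  have key : HasDerivAt (S c) (∑' j, c j * ((j:ℝ) * x ^ (j-1)) / (Nat.factorial j)) x := by
    apply hasDerivAt_of_tendstoUniformlyOn (l := (atTop : Filter (Finset ℕ)))
      (f := fun (t : Finset ℕ) y => ∑ j ∈ t, c j * y ^ j / (Nat.factorial j))
      (f' := fun (t : Finset ℕ) y => ∑ j ∈ t, c j * ((j:ℝ) * y ^ (j-1)) / (Nat.factorial j))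
      Metric.isOpen_ball ?_ ?_ ?_ hxball
    · apply tendstoUniformlyOn_tsum
        (u := fun j => M * ((2*q*R) ^ j / (Nat.factorial j)))
        ((Real.summable_pow_div_factorial (2*q*R)).mul_left M)
      intro j z hz
      simp only [Metric.mem_ball, dist_zero_right, norm_eq_abs] at hz
      have hfj : (0:ℝ) < (Nat.factorial j : ℝ) := by positivity
      have hrhs : M * ((2*q*R) ^ j / (Nat.factorial j : ℝ)) * (Nat.factorial j : ℝ)
          = M * (2*q*R) ^ j := by field_simp
      rw [norm_eq_abs, abs_div, abs_mul, abs_mul, Nat.abs_cast, Nat.abs_cast, abs_pow,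
        div_le_iff₀ hfj, hrhs]
      have h1 : |z| ^ (j-1) ≤ R ^ (j-1) := pow_le_pow_left₀ (abs_nonneg z) hz.le _
      have h2 : R ^ (j-1) ≤ R ^ j := pow_le_pow_right₀ hR1 (Nat.sub_le j 1)
      have h3 : (j:ℝ) ≤ 2 ^ j := by exact_mod_cast (Nat.lt_two_pow_self (n := j)).le
      have e1 : (2*q*R) ^ j = 2^j * q^j * R^j := by rw [mul_pow, mul_pow]
      rw [e1]
      have t1 : (j:ℝ) * |z| ^ (j-1) ≤ 2^j * R^j := by
        have := mul_le_mul h3 (h1.trans h2) (by positivity) (by positivity)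
        linarith
      calc |c j| * ((j:ℝ) * |z| ^ (j-1)) ≤ (M * q^j) * (2^j * R^j) :=
            mul_le_mul (hb j) t1 (by positivity) (by positivity)
        _ = M * (2^j * q^j * R^j) := by ring
    · filter_upwards with t z hz
      apply HasDerivAt.fun_sum
      intro j hj
      have hp : HasDerivAt (fun w : ℝ => w ^ j) ((j:ℝ) * z ^ (j-1)) z := hasDerivAt_pow j z
      simpa [mul_div_assoc] using ((hp.const_mul (c j)).div_const (Nat.factorial j : ℝ))
    · intro z hz
      exact (hgood.summable z).hasSum
  convert key using 1
  -- S (sh c) x = ∑' j, c j * (j * x^(j-1)) / j !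
  have hsum' := hgood.summable' x
  rw [Summable.tsum_eq_zero_add hsum']
  simp only [Nat.cast_zero, zero_mul, mul_zero, zero_div, zero_add]
  unfold S sh
  apply tsum_congr
  intro j
  have hfj : (0:ℝ) < (Nat.factorial j : ℝ) := by positivity
  rw [Nat.factorial_succ]
  push_cast
  field_simp



theorem S_sub {c c' : ℕ → ℝ} (h : Good c) (h' : Good c') (x : ℝ) :
    S (fun j => c j - c' j) x = S c x - S c' x := by
  unfold S
  rw [← Summable.tsum_sub (h.summable x) (h'.summable x)]
  apply tsum_congr; intro j; ring

theorem hasDerivAt_E {c : ℕ → ℝ} (h : Good c) (x : ℝ) :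
    HasDerivAt (E c) (E (Δ c) x) x := by
  have h2 : HasDerivAt (fun y : ℝ => Real.exp (-y)) (-Real.exp (-x)) x := by
    simpa using (hasDerivAt_neg x).exp
  have key := h2.mul (hasDerivAt_S h x)
  have : E (Δ c) x = -Real.exp (-x) * S c x + Real.exp (-x) * S (sh c) x := by
    unfold E
    have : S (Δ c) x = S (sh c) x - S c x := by
      have := S_sub h.sh h x
      exact this
    rw [this]; ring
  rw [this]
  exact key

theorem Good.iter {c : ℕ → ℝ} (h : Good c) (k : ℕ) : Good (Δ^[k] c) := by
  induction k with
  | zero => simpa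
  | succ n ih => rw [Function.iterate_succ_apply']; exact ih.delta

theorem iteratedDeriv_E {c : ℕ → ℝ} (h : Good c) (k : ℕ) :
    iteratedDeriv k (E c) = E (Δ^[k] c) := by
  induction k with
  | zero => simp [iteratedDeriv_zero]
  | succ n ih =>
    rw [iteratedDeriv_succ, ih]
    funext y
    rw [Function.iterate_succ_apply']
    exact (hasDerivAt_E (h.iter n) y).deriv



def bb : ℕ → ℝ := fun j => Real.log (j + 1)
def ff : ℕ → ℝ := fun j => Real.log (Nat.factorial j)
def cId : ℕ → ℝ := fun j => (j : ℝ)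

theorem good_cId : Good cId := by
  refine ⟨1, 2, zero_le_one, one_le_two, fun j => ?_⟩
  rw [one_mul, cId, Nat.abs_cast]
  exact_mod_cast (Nat.lt_two_pow_self (n := j)).le

theorem good_bb : Good bb := by
  refine ⟨2, 2, by norm_num, one_le_two, fun j => ?_⟩
  have h1 : (0:ℝ) < (j:ℝ) + 1 := by positivity
  rw [bb, abs_of_nonneg (Real.log_nonneg (by push_cast; linarith))]
  have h2 : Real.log ((j:ℝ)+1) ≤ (j:ℝ) + 1 := (Real.log_le_sub_one_of_pos h1).trans (by linarith)
  have h3 : ((j:ℝ)+1) ≤ 2 * 2 ^ j := by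
    have ha : (j:ℝ) ≤ 2 ^ j := by exact_mod_cast (Nat.lt_two_pow_self (n := j)).le
    have hc : (1:ℝ) ≤ 2 ^ j := one_le_pow₀ one_le_two
    linarith
  linarith

theorem good_ff : Good ff := by
  refine ⟨1, 4, zero_le_one, by norm_num, fun j => ?_⟩
  have h0 : (0:ℝ) < (Nat.factorial j : ℝ) := by positivity
  rw [ff, one_mul, abs_of_nonneg (Real.log_nonneg (by exact_mod_cast Nat.factorial_pos j))]
  rcases Nat.eq_zero_or_pos j with rfl | hj
  · norm_num [ff]
  have h1 : (Nat.factorial j : ℝ) ≤ (j:ℝ) ^ j := by exact_mod_cast Nat.factorial_le_pow j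
  have h2 : Real.log (Nat.factorial j) ≤ (j:ℝ) * Real.log j := by
    calc Real.log (Nat.factorial j) ≤ Real.log ((j:ℝ) ^ j) := Real.log_le_log h0 h1
      _ = (j:ℝ) * Real.log j := by rw [Real.log_pow]
  have hj1 : (1:ℝ) ≤ (j:ℝ) := by exact_mod_cast hj
  have h3 : Real.log (j:ℝ) ≤ (j:ℝ) := (Real.log_le_sub_one_of_pos (by linarith)).trans (by linarith)
  have h4 : (j:ℝ) * Real.log j ≤ (j:ℝ) * (j:ℝ) := by nlinarith
  have h5 : (j:ℝ) ≤ 2 ^ j := by exact_mod_cast (Nat.lt_two_pow_self (n := j)).le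
  have h6 : (j:ℝ) * (j:ℝ) ≤ (2:ℝ) ^ j * 2 ^ j := by nlinarith
  have h7 : (2:ℝ) ^ j * 2 ^ j = 4 ^ j := by
    rw [← mul_pow]; norm_num
  linarith [h2.trans (h4.trans (h6.trans_eq h7))]

theorem delta_ff : (fun j => ff (j+1) - ff j) = bb := by
  funext j
  have h1 : (0:ℝ) < (Nat.factorial j : ℝ) := by positivity
  rw [ff, ff, bb, Nat.factorial_succ]
  push_cast
  rw [Real.log_mul (by positivity) h1.ne']
  ring

theorem tsum_exp_base (x : ℝ) : ∑' j : ℕ, x ^ j / (Nat.factorial j) = Real.exp x := by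
  rw [Real.exp_eq_exp_ℝ, NormedSpace.exp_eq_tsum_div]

theorem T1 (x : ℝ) : ∑' j : ℕ, Real.exp (-x) * (x ^ j / (Nat.factorial j)) = 1 := by
  rw [tsum_mul_left, tsum_exp_base, ← Real.exp_add]
  simp

theorem summable_mul_pow (x : ℝ) : Summable (fun j : ℕ => (j:ℝ) * (x ^ j / (Nat.factorial j))) := by
  have := good_cId.summable x
  apply this.congr
  intro j
  rw [cId]; ring

theorem T2 (x : ℝ) : ∑' j : ℕ, (j:ℝ) * (x ^ j / (Nat.factorial j)) = x * Real.exp x := by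
  rw [Summable.tsum_eq_zero_add (summable_mul_pow x)]
  simp only [Nat.cast_zero, zero_mul, zero_add]
  have : ∀ j : ℕ, ((j:ℝ)+1) * (x ^ (j+1) / (Nat.factorial (j+1))) = x * (x ^ j / (Nat.factorial j)) := by
    intro j
    have h1 : (0:ℝ) < (Nat.factorial j : ℝ) := by positivity
    rw [Nat.factorial_succ]
    push_cast
    field_simp
    ring
  have key : ∀ j : ℕ, (((j+1 : ℕ)):ℝ) * (x ^ (j+1) / (Nat.factorial (j+1)))
      = x * (x ^ j / (Nat.factorial j)) := by
    intro j; push_cast; exact this j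
  rw [tsum_congr key, tsum_mul_left, tsum_exp_base]

/-- the entropy function from the statement -/
def H : ℝ → ℝ := fun y : ℝ => -∑' j : ℕ,
  (y ^ j * Real.exp (-y) / (Nat.factorial j)) * Real.log (y ^ j * Real.exp (-y) / (Nat.factorial j))

theorem H_closed_form {x : ℝ} (hx : 0 < x) :
    H x = x - x * Real.log x + E ff x := by
  have hfj : ∀ j : ℕ, (0:ℝ) < (Nat.factorial j : ℝ) := fun j => by positivity
  have hterm : ∀ j : ℕ,
      (x ^ j * Real.exp (-x) / (Nat.factorial j)) * Real.log (x ^ j * Real.exp (-x) / (Nat.factorial j))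
      = (Real.log x) * ((j:ℝ) * (Real.exp (-x) * (x ^ j / (Nat.factorial j))))
        - x * (Real.exp (-x) * (x ^ j / (Nat.factorial j)))
        - ff j * (Real.exp (-x) * (x ^ j / (Nat.factorial j))) := by
    intro j
    have hxj : (0:ℝ) < x ^ j := pow_pos hx j
    have hlog : Real.log (x ^ j * Real.exp (-x) / (Nat.factorial j))
        = (j:ℝ) * Real.log x + (-x) - Real.log (Nat.factorial j) := by
      rw [Real.log_div (by positivity) (hfj j).ne', Real.log_mul hxj.ne' (Real.exp_ne_zero _),
        Real.log_pow, Real.log_exp]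
    rw [hlog, ff]
    ring
  -- summabilities
  have s1 : Summable (fun j : ℕ => Real.exp (-x) * (x ^ j / (Nat.factorial j))) :=
    (Real.summable_pow_div_factorial x).mul_left _
  have s2 : Summable (fun j : ℕ => (j:ℝ) * (Real.exp (-x) * (x ^ j / (Nat.factorial j)))) :=
    ((summable_mul_pow x).mul_left (Real.exp (-x))).congr (fun j => by ring)
  have s3 : Summable (fun j : ℕ => ff j * (Real.exp (-x) * (x ^ j / (Nat.factorial j)))) :=
    ((good_ff.summable x).mul_left (Real.exp (-x))).congr (fun j => by ring)
  have s2' : Summable (fun j : ℕ => Real.log x * ((j:ℝ) * (Real.exp (-x) * (x ^ j / (Nat.factorial j))))) :=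
    s2.mul_left _
  have sx : Summable (fun j : ℕ => x * (Real.exp (-x) * (x ^ j / (Nat.factorial j)))) := s1.mul_left x
  unfold H
  rw [tsum_congr hterm]
  rw [Summable.tsum_sub (s2'.sub sx) s3, Summable.tsum_sub s2' sx, tsum_mul_left, tsum_mul_left]
  have e2 : ∑' j : ℕ, (j:ℝ) * (Real.exp (-x) * (x ^ j / (Nat.factorial j))) = x := by
    have : ∀ j : ℕ, (j:ℝ) * (Real.exp (-x) * (x ^ j / (Nat.factorial j)))
        = Real.exp (-x) * ((j:ℝ) * (x ^ j / (Nat.factorial j))) := fun j => by ring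
    rw [tsum_congr this, tsum_mul_left, T2, Real.exp_neg]
    field_simp
  have e1 : ∑' j : ℕ, Real.exp (-x) * (x ^ j / (Nat.factorial j)) = 1 := T1 x
  have e3 : ∑' j : ℕ, ff j * (Real.exp (-x) * (x ^ j / (Nat.factorial j))) = E ff x := by
    have : ∀ j : ℕ, ff j * (Real.exp (-x) * (x ^ j / (Nat.factorial j)))
        = Real.exp (-x) * (ff j * x ^ j / (Nat.factorial j)) := fun j => by ring
    rw [tsum_congr this, tsum_mul_left, E, S]
  rw [e1, e2, e3]
  ring



def A : ℝ → ℝ := fun y => y - y * Real.log y + E ff y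
def φ₀ : ℝ → ℝ := fun y => -Real.log y + E bb y

def rho : ℕ → ℝ → ℝ
  | 0 => φ₀
  | (k+1) => fun y => (-1)^(k+1) * (Nat.factorial k) / y^(k+1) + E (Δ^[k+1] bb) y

theorem deltaff' : Δ ff = bb := delta_ff

theorem derivA {x : ℝ} (hx : 0 < x) : HasDerivAt A (φ₀ x) x := by
  have h1 : HasDerivAt (fun y : ℝ => y * Real.log y) (Real.log x + 1) x :=
    Real.hasDerivAt_mul_log hx.ne'
  have h2 := hasDerivAt_E good_ff x
  rw [deltaff'] at h2
  have h3 := ((hasDerivAt_id x).sub h1).add h2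
  have : (1 - (Real.log x + 1)) + E bb x = φ₀ x := by unfold φ₀; ring
  rw [← this]
  exact h3

theorem derivRho {k : ℕ} {x : ℝ} (hx : 0 < x) : HasDerivAt (rho k) (rho (k+1) x) x := by
  cases k with
  | zero =>
    have h1 : HasDerivAt (fun y : ℝ => -Real.log y) (-x⁻¹) x :=
      ((Real.hasDerivAt_log hx.ne')).neg
    have h2 := hasDerivAt_E good_bb x
    have h3 := h1.add h2
    have heq : -x⁻¹ + E (Δ bb) x = rho 1 x := by
      show _ = (-1)^(0+1) * ((Nat.factorial 0 : ℕ):ℝ) / x^(0+1) + E (Δ^[0+1] bb) x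
      norm_num
      rw [inv_eq_one_div]
      ring_nf
    rw [← heq]
    exact h3
  | succ k =>
    have hpow : HasDerivAt (fun y : ℝ => y ^ (k+1)) (((k:ℝ)+1) * x ^ k) x := by
      simpa using hasDerivAt_pow (k+1) x
    have hne : x ^ (k+1) ≠ 0 := pow_ne_zero _ hx.ne'
    have hinv : HasDerivAt (fun y : ℝ => (y ^ (k+1))⁻¹)
        (-(((k:ℝ)+1) * x ^ k) / (x ^ (k+1))^2) x := hpow.inv hne
    have hc : HasDerivAt (fun y : ℝ => (-1)^(k+1) * (Nat.factorial k : ℝ) * (y^(k+1))⁻¹)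
        ((-1)^(k+1) * (Nat.factorial k : ℝ) * (-(((k:ℝ)+1) * x ^ k) / (x ^ (k+1))^2)) x :=
      hinv.const_mul _
    have h2 := hasDerivAt_E (good_bb.iter (k+1)) x
    have h3 := hc.add h2
    have e1 : (fun y : ℝ => (-1)^(k+1) * (Nat.factorial k : ℝ) * (y^(k+1))⁻¹ + E (Δ^[k+1] bb) y)
        = rho (k+1) := by
      funext y
      show _ = (-1)^(k+1) * (Nat.factorial k : ℝ) / y^(k+1) + E (Δ^[k+1] bb) y
      rw [div_eq_mul_inv]
    have e2 : (-1)^(k+1) * (Nat.factorial k : ℝ) * (-(((k:ℝ)+1) * x ^ k) / (x ^ (k+1))^2)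
        + E (Δ (Δ^[k+1] bb)) x = rho (k+2) x := by
      show _ = (-1)^(k+2) * ((Nat.factorial (k+1) : ℕ):ℝ) / x^(k+2) + E (Δ^[k+2] bb) x
      rw [← Function.iterate_succ_apply' Δ (k+1)]
      congr 1
      rw [Nat.factorial_succ]
      push_cast
      have hx2 : x ≠ 0 := hx.ne'
      field_simp
      ring
    have h4 := e1 ▸ (show HasDerivAt (fun y : ℝ => (-1)^(k+1) * (Nat.factorial k : ℝ) * (y^(k+1))⁻¹ + E (Δ^[k+1] bb) y) _ x from h3)
    rw [e2] at h4
    exact h4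

theorem iter_phi (k : ℕ) {x : ℝ} (hx : 0 < x) :
    iteratedDeriv k φ₀ x = rho k x := by
  induction k generalizing x with
  | zero => simp [rho]
  | succ n ih =>
    rw [iteratedDeriv_succ]
    have hev : iteratedDeriv n φ₀ =ᶠ[nhds x] rho n := by
      filter_upwards [isOpen_Ioi.mem_nhds (show x ∈ Ioi (0:ℝ) from hx)] with y hy
      exact ih hy
    rw [hev.deriv_eq]
    exact (derivRho hx).deriv

theorem iteratedDeriv_H (k : ℕ) {x : ℝ} (hx : 0 < x) :
    iteratedDeriv (k+1) H x = rho k x := by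
  have h1 : H =ᶠ[nhds x] A := by
    filter_upwards [isOpen_Ioi.mem_nhds (show x ∈ Ioi (0:ℝ) from hx)] with y hy
    exact H_closed_form hy
  rw [Filter.EventuallyEq.iteratedDeriv_eq _ h1, iteratedDeriv_succ']
  have h2 : deriv A =ᶠ[nhds x] φ₀ := by
    filter_upwards [isOpen_Ioi.mem_nhds (show x ∈ Ioi (0:ℝ) from hx)] with y hy
    exact (derivA hy).deriv
  rw [Filter.EventuallyEq.iteratedDeriv_eq _ h2]
  exact iter_phi k hx



/-- the key kernel -/
def dd (k j : ℕ) : ℝ := ∫ t in Ioo (0:ℝ) 1, t^j * (1-t)^k / (-Real.log t)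

theorem neg_log_pos {t : ℝ} (ht : t ∈ Ioo (0:ℝ) 1) : 0 < -Real.log t := by
  have := Real.log_neg ht.1 ht.2
  linarith

theorem one_sub_le_neg_log {t : ℝ} (ht : t ∈ Ioo (0:ℝ) 1) : 1 - t ≤ -Real.log t := by
  have := Real.log_le_sub_one_of_pos ht.1
  linarith

theorem dd_integrand_nonneg {k j : ℕ} {t : ℝ} (ht : t ∈ Ioo (0:ℝ) 1) :
    0 ≤ t^j * (1-t)^k / (-Real.log t) := by
  have h1 := neg_log_pos ht
  have h2 : (0:ℝ) ≤ t^j := pow_nonneg ht.1.le j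
  have h3 : (0:ℝ) ≤ (1-t)^k := pow_nonneg (by linarith [ht.2]) k
  positivity

theorem dd_integrand_le {k j : ℕ} (hk : 1 ≤ k) {t : ℝ} (ht : t ∈ Ioo (0:ℝ) 1) :
    t^j * (1-t)^k / (-Real.log t) ≤ t^j * (1-t)^(k-1) := by
  have h1 := neg_log_pos ht
  have h2 : (0:ℝ) ≤ t^j := pow_nonneg ht.1.le j
  have h4 : (0:ℝ) ≤ 1 - t := by linarith [ht.2]
  have h3 : (0:ℝ) ≤ (1-t)^(k-1) := pow_nonneg h4 _
  rw [div_le_iff₀ h1]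
  have e : (1-t)^k = (1-t)^(k-1) * (1-t) := by
    conv_lhs => rw [show k = (k-1)+1 by omega]
    rw [pow_succ]
  rw [e]
  calc t^j * ((1-t)^(k-1) * (1-t)) = (t^j * (1-t)^(k-1)) * (1-t) := by ring
    _ ≤ (t^j * (1-t)^(k-1)) * (-Real.log t) := by
        apply mul_le_mul_of_nonneg_left (one_sub_le_neg_log ht) (by positivity)
    _ = t^j * (1-t)^(k-1) * (-Real.log t) := rfl

theorem dd_integrand_le_one {k j : ℕ} (hk : 1 ≤ k) {t : ℝ} (ht : t ∈ Ioo (0:ℝ) 1) :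
    t^j * (1-t)^k / (-Real.log t) ≤ 1 := by
  refine (dd_integrand_le hk ht).trans ?_
  have h4 : (0:ℝ) ≤ 1 - t := by linarith [ht.2]
  calc t^j * (1-t)^(k-1) ≤ 1 * 1 := by
        apply mul_le_mul (pow_le_one₀ ht.1.le ht.2.le) (pow_le_one₀ h4 (by linarith [ht.1])) (by positivity) zero_le_one
    _ = 1 := by norm_num

theorem dd_integrable {k j : ℕ} (hk : 1 ≤ k) :
    IntegrableOn (fun t => t^j * (1-t)^k / (-Real.log t)) (Ioo (0:ℝ) 1) := by
  have hmeas : AEStronglyMeasurable (fun t : ℝ => t^j * (1-t)^k / (-Real.log t))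
      (volume : Measure ℝ) := by
    apply Measurable.aestronglyMeasurable
    apply Measurable.div
    · exact ((measurable_id.pow_const j).mul ((measurable_const.sub measurable_id).pow_const k))
    · exact Real.measurable_log.neg
  apply Measure.integrableOn_of_bounded (measure_Ioo_lt_top).ne hmeas (M := 1)
  rw [ae_restrict_iff' measurableSet_Ioo]
  filter_upwards with t ht
  rw [Real.norm_eq_abs, abs_of_nonneg (dd_integrand_nonneg ht)]
  exact dd_integrand_le_one hk ht

theorem poly_integrable {j m : ℕ} :
    IntegrableOn (fun t : ℝ => t^j * (1-t)^m) (Ioo (0:ℝ) 1) := by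
  have : IntegrableOn (fun t : ℝ => t^j * (1-t)^m) (Icc (0:ℝ) 1) :=
    Continuous.integrableOn_Icc (by exact (continuous_pow j).mul ((continuous_const.sub continuous_id).pow m))
  exact this.mono_set Ioo_subset_Icc_self

/-- Beta function value at natural numbers -/
theorem beta_nat (m : ℕ) : ∀ j : ℕ, (∫ t in (0:ℝ)..1, t^j * (1-t)^m)
    = (Nat.factorial j) * (Nat.factorial m) / (Nat.factorial (j+m+1)) := by
  induction m with
  | zero =>
    intro j
    simp only [pow_zero, mul_one, integral_pow]
    rw [Nat.factorial_succ]
    push_cast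
    have hj1 : (0:ℝ) < (j:ℝ)+1 := by positivity
    have hf : (0:ℝ) < (Nat.factorial j : ℝ) := by positivity
    rw [one_pow, zero_pow (Nat.succ_ne_zero j)]
    field_simp
    simp
  | succ m ih =>
    intro j
    have hu : ∀ t ∈ uIcc (0:ℝ) 1, HasDerivAt (fun t : ℝ => (1-t)^(m+1))
        (-(((m:ℝ)+1) * (1-t)^m)) t := by
      intro t _
      have h := ((hasDerivAt_id t).const_sub 1).pow (m+1)
      refine h.congr_deriv ?_
      rw [Nat.add_sub_cancel]
      simp only [id]
      push_cast; ring
    have hv : ∀ t ∈ uIcc (0:ℝ) 1, HasDerivAt (fun t : ℝ => t^(j+1) / ((j:ℝ)+1))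
        (t^j) t := by
      intro t _
      have h := (hasDerivAt_pow (j+1) t).div_const ((j:ℝ)+1)
      refine h.congr_deriv ?_
      rw [Nat.add_sub_cancel]
      push_cast
      field_simp
    have hiu : IntervalIntegrable (fun t : ℝ => -(((m:ℝ)+1) * (1-t)^m)) volume 0 1 := by
      apply Continuous.intervalIntegrable; continuity
    have hiv : IntervalIntegrable (fun t : ℝ => t^j) volume 0 1 := by
      apply Continuous.intervalIntegrable; continuity
    have hparts := intervalIntegral.integral_mul_deriv_eq_deriv_mul hu hv hiu hiv
    have e1 : (∫ t in (0:ℝ)..1, t^j * (1-t)^(m+1)) = ∫ t in (0:ℝ)..1, (1-t)^(m+1) * t^j := by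
      apply intervalIntegral.integral_congr; intro t _; ring
    have e2 : (∫ t in (0:ℝ)..1, -(((m:ℝ)+1) * (1-t)^m) * (t^(j+1) / ((j:ℝ)+1)))
        = -((((m:ℝ)+1)/((j:ℝ)+1)) * ∫ t in (0:ℝ)..1, t^(j+1) * (1-t)^m) := by
      rw [← intervalIntegral.integral_const_mul, ← intervalIntegral.integral_neg]
      apply intervalIntegral.integral_congr; intro t _
      ring
    rw [e1, hparts, e2, ih (j+1)]
    norm_num
    have hidx : j+1+m+1 = j+(m+1)+1 := by omega
    rw [hidx, Nat.factorial_succ (j), Nat.factorial_succ (m)]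
    have hj1 : (0:ℝ) < (j:ℝ)+1 := by positivity
    have hm1 : (0:ℝ) < (m:ℝ)+1 := by positivity
    have hf : (0:ℝ) < (Nat.factorial (j+(m+1)+1) : ℝ) := by positivity
    push_cast
    field_simp



theorem dd_one (j : ℕ) : dd 1 j = Real.log ((j:ℝ)+2) - Real.log ((j:ℝ)+1) := by
  have hμfin : IsFiniteMeasure (volume.restrict (Ioo (0:ℝ) 1)) := by
    constructor
    rw [Measure.restrict_apply_univ]
    exact measure_Ioo_lt_top
  have hνfin : IsFiniteMeasure (volume.restrict (Ioo ((j:ℝ)) ((j:ℝ)+1))) := by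
    constructor
    rw [Measure.restrict_apply_univ]
    exact measure_Ioo_lt_top
  set μ := volume.restrict (Ioo (0:ℝ) 1) with hμ
  set ν := volume.restrict (Ioo ((j:ℝ)) ((j:ℝ)+1)) with hν
  set F : ℝ → ℝ → ℝ := fun t s => Real.exp (s * Real.log t) with hF
  have hmeas : AEStronglyMeasurable (Function.uncurry F) (μ.prod ν) := by
    apply Measurable.aestronglyMeasurable
    exact Real.measurable_exp.comp (measurable_snd.mul (Real.measurable_log.comp measurable_fst))
  have hInt : Integrable (Function.uncurry F) (μ.prod ν) := by
    refine ⟨hmeas, ?_⟩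
    apply MeasureTheory.HasFiniteIntegral.of_bounded (C := 1)
    rw [hμ, hν, Measure.prod_restrict]
    rw [ae_restrict_iff' (measurableSet_Ioo.prod measurableSet_Ioo)]
    filter_upwards with p hp
    obtain ⟨ht, hs⟩ := hp
    simp only [Function.uncurry, hF, Real.norm_eq_abs, Real.abs_exp]
    apply Real.exp_le_one_iff.mpr
    apply mul_nonpos_of_nonneg_of_nonpos
    · have : ((j:ℝ)) < p.2 := hs.1
      have : (0:ℝ) ≤ (j:ℝ) := Nat.cast_nonneg j
      linarith
    · exact Real.log_nonpos ht.1.le ht.2.le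
  have hswap := MeasureTheory.integral_integral_swap hInt
  -- LHS equals dd 1 j
  have hL : (∫ t, ∫ s, F t s ∂ν ∂μ) = dd 1 j := by
    rw [hμ, dd]
    apply setIntegral_congr_fun measurableSet_Ioo
    intro t ht
    show (∫ s, F t s ∂ν) = t ^ j * (1-t)^1 / (-Real.log t)
    have hc : Real.log t < 0 := Real.log_neg ht.1 ht.2
    have hcne : Real.log t ≠ 0 := hc.ne
    have hderiv : ∀ s ∈ uIcc ((j:ℝ)) ((j:ℝ)+1),
        HasDerivAt (fun s => Real.exp (s * Real.log t) / Real.log t)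
          (Real.exp (s * Real.log t)) s := by
      intro s _
      have h := (((hasDerivAt_id s).mul_const (Real.log t)).exp).div_const (Real.log t)
      refine h.congr_deriv ?_
      simp only [id]
      field_simp
    have hmono : IntervalIntegrable (fun s => Real.exp (s * Real.log t)) volume ((j:ℝ)) ((j:ℝ)+1) := by
      apply Continuous.intervalIntegrable
      exact Real.continuous_exp.comp (continuous_id.mul continuous_const)
    have hFTC := intervalIntegral.integral_eq_sub_of_hasDerivAt hderiv hmono
    have hle : ((j:ℝ)) ≤ (j:ℝ)+1 := by linarith
    have eIoo : (∫ s, F t s ∂ν) = ∫ s in ((j:ℝ))..((j:ℝ)+1), Real.exp (s * Real.log t) := by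
      rw [hν, intervalIntegral.integral_of_le hle, integral_Ioc_eq_integral_Ioo]
    rw [eIoo, hFTC]
    have e1 : Real.exp (((j:ℝ)+1) * Real.log t) = t^(j+1) := by
      have : ((j:ℝ)+1) = ((j+1 : ℕ) : ℝ) := by push_cast; ring
      rw [this, Real.exp_nat_mul, Real.exp_log ht.1]
    have e2 : Real.exp (((j:ℝ)) * Real.log t) = t^j := by
      rw [Real.exp_nat_mul, Real.exp_log ht.1]
    rw [e1, e2]
    have : t ^ j * (1 - t) ^ 1 / -Real.log t = (t^(j+1) - t^j)/Real.log t := by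
      rw [pow_one, div_neg, ← neg_div]
      congr 1
      ring
    rw [this, div_sub_div_same]
  -- RHS
  have hR : (∫ s, ∫ t, F t s ∂μ ∂ν) = Real.log ((j:ℝ)+2) - Real.log ((j:ℝ)+1) := by
    have hstep : ∀ s ∈ Ioo ((j:ℝ)) ((j:ℝ)+1), (∫ t, F t s ∂μ) = 1/(s+1) := by
      intro s hs
      show (∫ t, F t s ∂μ) = 1/(s+1)
      have hs0 : (0:ℝ) ≤ s := le_trans (Nat.cast_nonneg j) hs.1.le
      have congr1 : (∫ t, F t s ∂μ) = ∫ t in Ioo (0:ℝ) 1, t ^ s := by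
        rw [hμ]
        apply setIntegral_congr_fun measurableSet_Ioo
        intro t ht
        show F t s = t ^ s
        rw [hF, Real.rpow_def_of_pos ht.1, mul_comm]
      rw [congr1]
      have : (∫ t in Ioo (0:ℝ) 1, t ^ s) = ∫ t in (0:ℝ)..1, t ^ s := by
        rw [intervalIntegral.integral_of_le zero_le_one, integral_Ioc_eq_integral_Ioo]
      rw [this, integral_rpow (Or.inl (by linarith : (-1:ℝ) < s))]
      rw [Real.one_rpow, Real.zero_rpow (by linarith : s + 1 ≠ 0)]
      norm_num
    rw [setIntegral_congr_fun measurableSet_Ioo hstep]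
    have hle : ((j:ℝ)) ≤ (j:ℝ)+1 := by linarith
    have : (∫ s in Ioo ((j:ℝ)) ((j:ℝ)+1), 1/(s+1)) = ∫ s in ((j:ℝ))..((j:ℝ)+1), 1/(s+1) := by
      rw [intervalIntegral.integral_of_le hle, integral_Ioc_eq_integral_Ioo]
    rw [this]
    have hcomp := intervalIntegral.integral_comp_add_right (a := (j:ℝ)) (b := (j:ℝ)+1)
      (fun u : ℝ => 1/u) 1
    rw [hcomp, integral_one_div (by
      intro hmem
      rw [uIcc_of_le (by linarith)] at hmem
      have h1 : (0:ℝ) < (j:ℝ)+1 := by positivity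
      have := hmem.1
      linarith)]
    rw [← Real.log_div (by positivity) (by positivity)]
    congr 1
    ring
  rw [← hL, hswap, hR]


theorem dd_rec {k : ℕ} (hk : 1 ≤ k) (j : ℕ) : dd (k+1) j = dd k j - dd k (j+1) := by
  unfold dd
  rw [← integral_sub (dd_integrable hk) (dd_integrable hk)]
  apply setIntegral_congr_fun measurableSet_Ioo
  intro t _
  show t^j * (1-t)^(k+1) / (-Real.log t)
      = t^j * (1-t)^k / (-Real.log t) - t^(j+1) * (1-t)^k / (-Real.log t)
  rw [← sub_div]
  congr 1
  ring

theorem dd_nonneg (k j : ℕ) : 0 ≤ dd k j := by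
  apply setIntegral_nonneg measurableSet_Ioo
  intro t ht
  exact dd_integrand_nonneg ht

theorem delta_iter_bb : ∀ k : ℕ, 1 ≤ k → ∀ j : ℕ, Δ^[k] bb j = (-1:ℝ)^(k+1) * dd k j := by
  intro k hk
  induction k, hk using Nat.le_induction with
  | base =>
    intro j
    have : Δ^[1] bb j = bb (j+1) - bb j := by
      rw [Function.iterate_one]; rfl
    rw [this, dd_one]
    have e1 : bb (j+1) = Real.log ((j:ℝ)+2) := by unfold bb; push_cast; ring_nf
    have e2 : bb j = Real.log ((j:ℝ)+1) := rfl
    rw [e1, e2]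
    norm_num
  | succ k hk ih =>
    intro j
    have : Δ^[k+1] bb j = Δ^[k] bb (j+1) - Δ^[k] bb j := by
      rw [Function.iterate_succ_apply' Δ k bb]; rfl
    rw [this, ih, ih, dd_rec hk j]
    ring

theorem good_dd {k : ℕ} (hk : 1 ≤ k) : Good (fun j => dd k j) := by
  obtain ⟨M, q, hM, hq, hb⟩ := good_bb.iter k
  refine ⟨M, q, hM, hq, fun j => ?_⟩
  have h := hb j
  rw [delta_iter_bb k hk j, abs_mul, abs_pow, abs_neg, abs_one, one_pow, one_mul] at h
  exact h

theorem dd_le_beta {k : ℕ} (hk : 1 ≤ k) (j : ℕ) :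
    dd k j ≤ (Nat.factorial j) * (Nat.factorial (k-1)) / (Nat.factorial (j+k)) := by
  have h1 : dd k j ≤ ∫ t in Ioo (0:ℝ) 1, t^j * (1-t)^(k-1) := by
    apply setIntegral_mono_on (dd_integrable hk) poly_integrable measurableSet_Ioo
    intro t ht
    exact dd_integrand_le hk ht
  have h2 : (∫ t in Ioo (0:ℝ) 1, t^j * (1-t)^(k-1)) = ∫ t in (0:ℝ)..1, t^j * (1-t)^(k-1) := by
    rw [intervalIntegral.integral_of_le zero_le_one, integral_Ioc_eq_integral_Ioo]
  have h3 := beta_nat (k-1) j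
  have hidx : j + (k-1) + 1 = j + k := by omega
  rw [hidx] at h3
  rw [h2, h3] at h1
  exact h1

theorem sum_dd_le {k : ℕ} (hk : 1 ≤ k) {x : ℝ} (hx : 0 < x) :
    Real.exp (-x) * ∑' j, dd k j * x^j / (Nat.factorial j)
      ≤ (Nat.factorial (k-1)) / x^k := by
  have hsum1 : Summable (fun j => dd k j * x^j / (Nat.factorial j)) :=
    (good_dd hk).summable x
  have hsub : Summable (fun j : ℕ => x^(j+k) / (Nat.factorial (j+k))) := by
    have : Function.Injective (fun j : ℕ => j + k) := add_left_injective k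
    exact (Real.summable_pow_div_factorial x).comp_injective this
  set cst : ℝ := (Nat.factorial (k-1) : ℝ) with hcst
  have hcst0 : (0:ℝ) < cst := by rw [hcst]; positivity
  have hxk : (0:ℝ) < x^k := pow_pos hx k
  have hsum2 : Summable (fun j : ℕ => (cst / x^k) * (x^(j+k) / (Nat.factorial (j+k)))) :=
    hsub.mul_left _
  have step1 : ∑' j, dd k j * x^j / (Nat.factorial j)
      ≤ ∑' j, (cst / x^k) * (x^(j+k) / (Nat.factorial (j+k))) := by
    apply Summable.tsum_le_tsum _ hsum1 hsum2
    intro j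
    have hfj : (0:ℝ) < (Nat.factorial j : ℝ) := by positivity
    have hfjk : (0:ℝ) < (Nat.factorial (j+k) : ℝ) := by positivity
    have hxj : (0:ℝ) < x^j := pow_pos hx j
    have hb := dd_le_beta hk j
    have e : (cst / x^k) * (x^(j+k) / (Nat.factorial (j+k)))
        = ((Nat.factorial j : ℝ) * cst / (Nat.factorial (j+k))) * x^j / (Nat.factorial j) := by
      rw [pow_add]
      field_simp
      try ring
    rw [e]
    gcongr
  have inner : ∑' j : ℕ, x^(j+k) / (Nat.factorial (j+k)) ≤ Real.exp x := by
    rw [← tsum_exp_base x]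
    exact tsum_comp_le_tsum_of_inj (Real.summable_pow_div_factorial x)
      (fun n => div_nonneg (pow_nonneg hx.le n) (Nat.cast_nonneg _))
      (add_left_injective k)
  have step2 : ∑' j, (cst / x^k) * (x^(j+k) / (Nat.factorial (j+k)))
      ≤ (cst / x^k) * Real.exp x := by
    rw [tsum_mul_left]
    exact mul_le_mul_of_nonneg_left inner (by positivity)
  calc Real.exp (-x) * ∑' j, dd k j * x^j / (Nat.factorial j)
      ≤ Real.exp (-x) * ((cst / x^k) * Real.exp x) := by
        apply mul_le_mul_of_nonneg_left (step1.trans step2) (Real.exp_nonneg _)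
    _ = cst / x^k := by
        rw [Real.exp_neg]
        field_simp [Real.exp_ne_zero]



theorem rho0_nonneg {x : ℝ} (hx : 0 < x) : 0 ≤ -Real.log x + E bb x := by
  set lhsf : ℕ → ℝ := fun j => (Real.log x + 1) * (x^j / (Nat.factorial j))
    - x^(j+1) / (Nat.factorial (j+1)) with hlhsf
  have hsucc : Summable (fun j : ℕ => x^(j+1)/(Nat.factorial (j+1))) := by
    have : Function.Injective (fun j : ℕ => j + 1) := add_left_injective 1
    exact (Real.summable_pow_div_factorial x).comp_injective this
  have hA : Summable (fun j : ℕ => (Real.log x + 1) * (x^j/(Nat.factorial j))) :=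
    (Real.summable_pow_div_factorial x).mul_left _
  have hlhs : Summable lhsf := hA.sub hsucc
  have htail : ∑' j : ℕ, x^(j+1)/(Nat.factorial (j+1)) = Real.exp x - 1 := by
    have h0 := Summable.tsum_eq_zero_add (Real.summable_pow_div_factorial x)
    rw [tsum_exp_base] at h0
    simp only [pow_zero, Nat.factorial_zero, Nat.cast_one] at h0
    linarith
  have htsum : ∑' j, lhsf j = (Real.log x + 1) * Real.exp x - (Real.exp x - 1) := by
    rw [hlhsf, Summable.tsum_sub hA hsucc, tsum_mul_left, tsum_exp_base, htail]
  have hperle : ∀ j : ℕ, lhsf j ≤ bb j * x^j / (Nat.factorial j) := by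
    intro j
    have hj1 : (0:ℝ) < (j:ℝ)+1 := by positivity
    have hfj : (0:ℝ) < (Nat.factorial j : ℝ) := by positivity
    have hxj : (0:ℝ) ≤ x^j / (Nat.factorial j) := by positivity
    have hlog : Real.log x + 1 - x/((j:ℝ)+1) ≤ bb j := by
      have h1 : Real.log (x/((j:ℝ)+1)) ≤ x/((j:ℝ)+1) - 1 :=
        Real.log_le_sub_one_of_pos (div_pos hx hj1)
      rw [Real.log_div hx.ne' hj1.ne'] at h1
      have hb : bb j = Real.log ((j:ℝ)+1) := rfl
      linarith
    have e : lhsf j = (Real.log x + 1 - x/((j:ℝ)+1)) * (x^j / (Nat.factorial j)) := by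
      show (Real.log x + 1) * (x^j / (Nat.factorial j)) - x^(j+1) / (Nat.factorial (j+1)) = _
      have : x^(j+1) / (Nat.factorial (j+1) : ℝ) = (x/((j:ℝ)+1)) * (x^j / (Nat.factorial j)) := by
        rw [Nat.factorial_succ, pow_succ]
        push_cast
        field_simp
      rw [this]
      ring
    rw [e]
    calc (Real.log x + 1 - x/((j:ℝ)+1)) * (x^j / (Nat.factorial j))
        ≤ bb j * (x^j / (Nat.factorial j)) := mul_le_mul_of_nonneg_right hlog hxj
      _ = bb j * x^j / (Nat.factorial j) := by ring
  have hSle : (Real.log x + 1) * Real.exp x - (Real.exp x - 1) ≤ S bb x := by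
    rw [← htsum, S]
    exact Summable.tsum_le_tsum hperle hlhs (good_bb.summable x)
  have hkey : Real.log x + Real.exp (-x) ≤ E bb x := by
    have := mul_le_mul_of_nonneg_left hSle (Real.exp_nonneg (-x))
    rw [E]
    calc Real.log x + Real.exp (-x)
        = Real.exp (-x) * ((Real.log x + 1) * Real.exp x - (Real.exp x - 1)) := by
          rw [Real.exp_neg]
          field_simp [Real.exp_ne_zero]
          ring
      _ ≤ Real.exp (-x) * S bb x := this
  have : (0:ℝ) < Real.exp (-x) := Real.exp_pos _
  linarith

theorem main_aux : ∀ (k : ℕ) (x : ℝ), 0 < x →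
    0 ≤ (-1 : ℝ) ^ k * iteratedDeriv (k + 1) H x := by
  intro k x hx
  rw [iteratedDeriv_H k hx]
  cases k with
  | zero =>
    rw [pow_zero, one_mul]
    exact rho0_nonneg hx
  | succ k =>
    set Sd : ℝ := ∑' j, dd (k+1) j * x^j / (Nat.factorial j) with hSd
    have hS : S (Δ^[k+1] bb) x = (-1:ℝ)^(k+2) * Sd := by
      rw [S, hSd, ← tsum_mul_left]
      apply tsum_congr
      intro j
      rw [delta_iter_bb (k+1) (by omega) j]
      ring
    have neg1sq : ((-1:ℝ)^(k+1))*((-1:ℝ)^(k+1)) = 1 := by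
      rw [← pow_add]
      exact Even.neg_one_pow ⟨k+1, by ring⟩
    have oddpow : ((-1:ℝ)^(k+1))*((-1:ℝ)^(k+2)) = -1 := by
      rw [← pow_add]
      exact Odd.neg_one_pow ⟨k+1, by ring⟩
    have expand : (-1:ℝ)^(k+1) * rho (k+1) x
        = ((-1:ℝ)^(k+1)*(-1:ℝ)^(k+1)) * ((Nat.factorial k : ℝ)/x^(k+1))
          + ((-1:ℝ)^(k+1)*(-1:ℝ)^(k+2)) * (Real.exp (-x) * Sd) := by
      show (-1:ℝ)^(k+1) * ((-1)^(k+1) * (Nat.factorial k : ℝ) / x^(k+1) + E (Δ^[k+1] bb) x) = _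
      rw [E, hS]
      ring
    rw [expand, neg1sq, oddpow]
    have hb := sum_dd_le (k := k+1) (by omega) hx
    simp only [Nat.add_sub_cancel] at hb
    rw [← hSd] at hb
    linarith

end PoissonAux
end
end PoissonEntropyProof

theorem poisson_entropy_deriv_completely_monotonic :
    ∀ (k : ℕ) (x : ℝ), 0 < x →
      0 ≤ (-1 : ℝ) ^ k *
        iteratedDeriv (k + 1)
          (fun y : ℝ => -∑' j : ℕ,
            (y ^ j * Real.exp (-y) / (Nat.factorial j)) *
              Real.log (y ^ j * Real.exp (-y) / (Nat.factorial j))) x := by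
  intro k x hx
  exact PoissonEntropyProof.PoissonAux.main_aux k x hx
end

section
/- For the Shannon entropy H(x) = -∑_{k=0}^∞ (x^k e^{-x}/k!) log(x^k e^{-x}/k!) of the Poisson distribution, H'(x) = -log x - ∫₀^1 (1 - e^{-s x}) ds / log(1-s) for x > 0. -/
open Real MeasureTheory intervalIntegral Filter Topology Metric
-- assume b.lean contents available: test standalone with copies

lemma nat_le_two_pow (k : ℕ) : (k : ℝ) ≤ 2 ^ k := by
  exact_mod_cast (Nat.lt_two_pow_self (n := k)).le

lemma log_factorial_le (k : ℕ) : Real.log (Nat.factorial k) ≤ (k : ℝ) ^ 2 := by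
  calc Real.log (Nat.factorial k) ≤ Real.log ((k : ℝ) ^ k) := by
        rcases Nat.eq_zero_or_pos k with h | h
        · simp [h]
        apply Real.log_le_log (by positivity)
        exact_mod_cast Nat.factorial_le_pow k
    _ ≤ (k : ℝ) ^ 2 := by
        rw [Real.log_pow]
        rcases Nat.eq_zero_or_pos k with h | h
        · simp [h]
        have : Real.log k ≤ k := by
          calc Real.log k ≤ (k : ℝ) - 1 :=
            Real.log_le_sub_one_of_pos (by exact_mod_cast h)
          _ ≤ k := by linarith
        calc (k : ℝ) * Real.log k ≤ (k:ℝ) * k := by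
              apply mul_le_mul_of_nonneg_left this (by positivity)
          _ = (k : ℝ) ^ 2 := by ring

lemma summable_master (y : ℝ) (c : ℕ → ℝ) (hc : ∀ k, |c k| ≤ 8 ^ k) :
    Summable fun k : ℕ => y ^ k / (Nat.factorial k) * c k := by
  apply Summable.of_norm_bounded (Real.summable_pow_div_factorial (8 * |y|))
  intro k
  rw [Real.norm_eq_abs, abs_mul, abs_div, abs_pow, Nat.abs_cast, mul_pow]
  rw [div_mul_eq_mul_div, mul_comm ((8:ℝ)^k)]
  apply div_le_div_of_nonneg_right ?_ (by positivity)
  exact mul_le_mul le_rfl (hc k) (abs_nonneg _) (by positivity)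

lemma bound_k (k : ℕ) : |(k : ℝ)| ≤ 8 ^ k := by
  rw [Nat.abs_cast]
  calc (k:ℝ) ≤ 2 ^ k := nat_le_two_pow k
    _ ≤ 8 ^ k := by apply pow_le_pow_left₀ (by norm_num) (by norm_num)

lemma bound_logfact (k : ℕ) : |Real.log (Nat.factorial k)| ≤ 8 ^ k := by
  rw [abs_of_nonneg (Real.log_nonneg (by exact_mod_cast Nat.one_le_iff_ne_zero.2 (Nat.factorial_ne_zero k)))]
  calc Real.log (Nat.factorial k) ≤ (k:ℝ)^2 := log_factorial_le k
    _ ≤ (2^k)^2 := by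
        apply pow_le_pow_left₀ (Nat.cast_nonneg k) (nat_le_two_pow k)
    _ = 4 ^ k := by rw [← pow_mul, mul_comm, pow_mul]; norm_num
    _ ≤ 8 ^ k := by apply pow_le_pow_left₀ (by norm_num) (by norm_num)

lemma bound_log_succ (k : ℕ) : |Real.log ((k:ℝ) + 1)| ≤ 8 ^ k := by
  rw [abs_of_nonneg (Real.log_nonneg (by linarith [Nat.cast_nonneg (α := ℝ) k]))]
  calc Real.log ((k:ℝ)+1) ≤ ((k:ℝ)+1) - 1 :=
        Real.log_le_sub_one_of_pos (by positivity)
    _ = k := by ring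
    _ ≤ 2^k := nat_le_two_pow k
    _ ≤ 8 ^ k := by apply pow_le_pow_left₀ (by norm_num) (by norm_num)

lemma tsum_exp (y : ℝ) : ∑' n : ℕ, y ^ n / (Nat.factorial n) = Real.exp y := by
  rw [Real.exp_eq_exp_ℝ, NormedSpace.exp_eq_tsum_div]

lemma summable_exp (y : ℝ) : Summable fun n : ℕ => y ^ n / (Nat.factorial n) :=
  Real.summable_pow_div_factorial y

lemma shift_term (y : ℝ) (k : ℕ) :
    ((k:ℝ) + 1) * (y ^ (k+1) / (Nat.factorial (k+1))) = y * (y ^ k / Nat.factorial k) := by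
  rw [Nat.factorial_succ]
  have h1 : (Nat.factorial k : ℝ) ≠ 0 := by exact_mod_cast Nat.factorial_ne_zero k
  push_cast
  field_simp
  ring

lemma summable_k_exp (y : ℝ) : Summable fun k : ℕ => (k : ℝ) * (y ^ k / Nat.factorial k) := by
  have := summable_master y (fun k => (k:ℝ)) bound_k
  simpa [mul_comm] using this

lemma tsum_k_exp (y : ℝ) : ∑' k : ℕ, (k : ℝ) * (y ^ k / Nat.factorial k) = y * Real.exp y := by
  rw [Summable.tsum_eq_zero_add (summable_k_exp y)]
  simp only [Nat.cast_zero, zero_mul, zero_add]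
  have : ∀ k : ℕ, ((k:ℕ)+1 : ℝ) * (y ^ (k+1) / (Nat.factorial (k+1))) = y * (y ^ k / Nat.factorial k) := shift_term y
  calc ∑' k : ℕ, ((k+1 : ℕ) : ℝ) * (y ^ (k+1) / Nat.factorial (k+1))
      = ∑' k : ℕ, y * (y ^ k / Nat.factorial k) := by
        exact tsum_congr fun k => by simpa using shift_term y k
    _ = y * Real.exp y := by rw [tsum_mul_left, tsum_exp]

noncomputable def cc (k : ℕ) : ℝ := Real.log (Nat.factorial k)

lemma bound_logfact4 (k : ℕ) : |cc k| ≤ 4 ^ k := by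
  rw [cc, abs_of_nonneg (Real.log_nonneg (by exact_mod_cast Nat.one_le_iff_ne_zero.2 (Nat.factorial_ne_zero k)))]
  calc Real.log (Nat.factorial k) ≤ (k:ℝ)^2 := log_factorial_le k
    _ ≤ (2^k)^2 := by
        apply pow_le_pow_left₀ (Nat.cast_nonneg k) (nat_le_two_pow k)
    _ = 4 ^ k := by rw [← pow_mul, mul_comm, pow_mul]; norm_num

lemma cc_succ (k : ℕ) : cc (k+1) = cc k + Real.log ((k:ℝ)+1) := by
  rw [cc, cc, Nat.factorial_succ]
  push_cast
  rw [Real.log_mul (by positivity) (by exact_mod_cast Nat.factorial_ne_zero k)]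
  ring

lemma hasDerivAt_f (k : ℕ) (y : ℝ) :
    HasDerivAt (fun z : ℝ => z ^ k * Real.exp (-z) / (Nat.factorial k) * cc k)
      (((k:ℝ) * y ^ (k-1) - y ^ k) * Real.exp (-y) / (Nat.factorial k) * cc k) y := by
  have h1 : HasDerivAt (fun z : ℝ => Real.exp (-z)) (-Real.exp (-y)) y := by
    simpa using (hasDerivAt_neg y).exp
  have h2 := ((hasDerivAt_pow k y).fun_mul h1).div_const ((Nat.factorial k : ℝ))
  have h3 := h2.mul_const (cc k)
  refine h3.congr_deriv (Eq.symm ?_)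
  ring

lemma f'_bound {x : ℝ} (hx : 0 < x) (k : ℕ) {y : ℝ} (hy : y ∈ Set.Ioo (-1:ℝ) (x+1)) :
    ‖((k:ℝ) * y ^ (k-1) - y ^ k) * Real.exp (-y) / (Nat.factorial k) * cc k‖
      ≤ Real.exp 1 * ((8*(x+1)) ^ k / Nat.factorial k) := by
  set R : ℝ := x + 1 with hRdef
  have hR : 1 ≤ R := by simp [hRdef]; linarith
  have hyR : |y| ≤ R := abs_le.2 ⟨by simp [hRdef] at *; linarith [hy.1], hy.2.le⟩
  have h1 : |(k:ℝ) * y ^ (k-1) - y ^ k| ≤ 2^k * R^k := by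
    calc |(k:ℝ) * y ^ (k-1) - y ^ k| ≤ |(k:ℝ) * y ^ (k-1)| + |y ^ k| := abs_sub _ _
      _ = (k:ℝ) * |y| ^ (k-1) + |y| ^ k := by rw [abs_mul, abs_pow, abs_pow, Nat.abs_cast]
      _ ≤ (k:ℝ) * R ^ (k-1) + R ^ k := by
          gcongr <;> first | exact pow_le_pow_left₀ (abs_nonneg y) hyR _ | skip
      _ ≤ (k:ℝ) * R ^ k + R ^ k := by
          gcongr <;> first | exact hR | exact Nat.sub_le k 1
      _ = ((k:ℝ) + 1) * R ^ k := by ring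
      _ ≤ 2^k * R^k := by
          gcongr
          have := Nat.lt_two_pow_self (n := k)
          have : (k:ℝ) + 1 ≤ ((2^k : ℕ) : ℝ) := by exact_mod_cast this
          simpa using this
  have h2 : Real.exp (-y) ≤ Real.exp 1 := Real.exp_le_exp.2 (by linarith [hy.1])
  have h3 : |cc k| ≤ 4 ^ k := bound_logfact4 k
  have hpow : (8*R)^k = 2^k * R^k * 4^k := by
    rw [show (8:ℝ)*R = 2*R*4 by ring, mul_pow, mul_pow]
  calc ‖((k:ℝ) * y ^ (k-1) - y ^ k) * Real.exp (-y) / (Nat.factorial k) * cc k‖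
      = |(k:ℝ) * y ^ (k-1) - y ^ k| * Real.exp (-y) / (Nat.factorial k) * |cc k| := by
        rw [Real.norm_eq_abs, abs_mul, abs_div, abs_mul, Nat.abs_cast,
          abs_of_pos (Real.exp_pos _)]
    _ ≤ (2^k * R^k) * Real.exp 1 / (Nat.factorial k) * 4^k := by
        have hfac : (0:ℝ) < (Nat.factorial k : ℝ) := by exact_mod_cast Nat.factorial_pos k
        gcongr
    _ = Real.exp 1 * ((8*R) ^ k / Nat.factorial k) := by
        rw [hpow]; ring

lemma summable_f (y : ℝ) : Summable fun k : ℕ => y ^ k * Real.exp (-y) / (Nat.factorial k) * cc k := by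
  have := (summable_master y cc (fun k => (bound_logfact4 k).trans (by
    apply pow_le_pow_left₀ (by norm_num) (by norm_num)))).mul_right (Real.exp (-y))
  apply this.congr
  intro k
  ring

lemma hasDerivAt_S {x : ℝ} (hx : 0 < x) :
    HasDerivAt (fun y : ℝ => ∑' k : ℕ, y ^ k * Real.exp (-y) / (Nat.factorial k) * cc k)
      (∑' k : ℕ, ((k:ℝ) * x ^ (k-1) - x ^ k) * Real.exp (-x) / (Nat.factorial k) * cc k) x := by
  apply hasDerivAt_tsum_of_isPreconnected
    (u := fun k : ℕ => Real.exp 1 * ((8*(x+1)) ^ k / Nat.factorial k))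
    ((Real.summable_pow_div_factorial (8*(x+1))).mul_left _)
    isOpen_Ioo (convex_Ioo (-1:ℝ) (x+1)).isPreconnected
    (fun k y _ => hasDerivAt_f k y)
    (fun k y hy => f'_bound hx k hy)
    (Set.mem_Ioo.2 ⟨by linarith, by linarith⟩)
    (summable_f x)
    (Set.mem_Ioo.2 ⟨by linarith, by linarith⟩)

lemma summable_g2 (x : ℝ) :
    Summable fun k : ℕ => x ^ k * Real.exp (-x) / (Nat.factorial k) * cc k := summable_f x

lemma summable_pL (x : ℝ) :
    Summable fun k : ℕ => x ^ k * Real.exp (-x) / (Nat.factorial k) * Real.log ((k:ℝ)+1) := by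
  have := (summable_master x (fun k => Real.log ((k:ℝ)+1)) bound_log_succ).mul_right
    (Real.exp (-x))
  apply this.congr
  intro k; ring

lemma g1_succ {x : ℝ} (hx : x ≠ 0) (k : ℕ) :
    ((k+1:ℕ):ℝ) * x ^ ((k+1)-1) * Real.exp (-x) / (Nat.factorial (k+1)) * cc (k+1)
      = x ^ k * Real.exp (-x) / (Nat.factorial k) * cc k
        + x ^ k * Real.exp (-x) / (Nat.factorial k) * Real.log ((k:ℝ)+1) := by
  rw [cc_succ, Nat.factorial_succ, Nat.add_sub_cancel]
  have h1 : (Nat.factorial k : ℝ) ≠ 0 := by exact_mod_cast Nat.factorial_ne_zero k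
  push_cast
  field_simp

lemma tsum_f'_eq {x : ℝ} (hx : 0 < x) :
    ∑' k : ℕ, ((k:ℝ) * x ^ (k-1) - x ^ k) * Real.exp (-x) / (Nat.factorial k) * cc k
      = ∑' k : ℕ, x ^ k * Real.exp (-x) / (Nat.factorial k) * Real.log ((k:ℝ)+1) := by
  set g1 : ℕ → ℝ := fun k => (k:ℝ) * x ^ (k-1) * Real.exp (-x) / (Nat.factorial k) * cc k with hg1def
  set g2 : ℕ → ℝ := fun k => x ^ k * Real.exp (-x) / (Nat.factorial k) * cc k with hg2def
  set pL : ℕ → ℝ := fun k => x ^ k * Real.exp (-x) / (Nat.factorial k) * Real.log ((k:ℝ)+1) with hpLdef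
  have hsucc : ∀ k : ℕ, g1 (k+1) = g2 k + pL k := fun k => by
    have := g1_succ hx.ne' k
    simp only [hg1def, hg2def, hpLdef, Nat.add_sub_cancel]
    push_cast at this ⊢
    convert this using 2
  have hg2 : Summable g2 := summable_g2 x
  have hpL : Summable pL := summable_pL x
  have hg1s : Summable fun k => g1 (k+1) := (hg2.add hpL).congr fun k => (hsucc k).symm
  have hg1 : Summable g1 := (summable_nat_add_iff 1).1 hg1s
  have hterm : ∀ k : ℕ, ((k:ℝ) * x ^ (k-1) - x ^ k) * Real.exp (-x) / (Nat.factorial k) * cc k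
      = g1 k - g2 k := fun k => by simp only [hg1def, hg2def]; ring
  calc ∑' k : ℕ, ((k:ℝ) * x ^ (k-1) - x ^ k) * Real.exp (-x) / (Nat.factorial k) * cc k
      = ∑' k : ℕ, (g1 k - g2 k) := tsum_congr hterm
    _ = (∑' k, g1 k) - ∑' k, g2 k := Summable.tsum_sub hg1 hg2
    _ = (g1 0 + ∑' k, g1 (k+1)) - ∑' k, g2 k := by rw [Summable.tsum_eq_zero_add hg1]
    _ = (∑' k, (g2 k + pL k)) - ∑' k, g2 k := by
        rw [tsum_congr hsucc]
        simp [hg1def]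
    _ = ((∑' k, g2 k) + ∑' k, pL k) - ∑' k, g2 k := by rw [Summable.tsum_add hg2 hpL]
    _ = ∑' k, pL k := by ring

lemma tsum_P (x : ℝ) : ∑' k : ℕ, x ^ k * Real.exp (-x) / (Nat.factorial k) = 1 := by
  calc ∑' k : ℕ, x ^ k * Real.exp (-x) / (Nat.factorial k)
      = ∑' k : ℕ, (x ^ k / (Nat.factorial k)) * Real.exp (-x) :=
        tsum_congr fun k => by ring
    _ = Real.exp x * Real.exp (-x) := by rw [tsum_mul_right, tsum_exp]
    _ = 1 := by rw [← Real.exp_add]; simp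

lemma entropy_eq {y : ℝ} (hy : 0 < y) :
    -∑' j : ℕ, (y ^ j * Real.exp (-y) / (Nat.factorial j)) *
        Real.log (y ^ j * Real.exp (-y) / (Nat.factorial j))
      = -(y * Real.log y) + y + ∑' k : ℕ, y ^ k * Real.exp (-y) / (Nat.factorial k) * cc k := by
  have hfne : ∀ j : ℕ, ((Nat.factorial j : ℝ)) ≠ 0 := fun j => by
    exact_mod_cast Nat.factorial_ne_zero j
  have hlog : ∀ j : ℕ, Real.log (y ^ j * Real.exp (-y) / (Nat.factorial j))
      = j * Real.log y - y - cc j := by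
    intro j
    rw [Real.log_div (by positivity) (hfne j),
      Real.log_mul (by positivity) (Real.exp_ne_zero _), Real.log_pow, Real.log_exp, cc]
    push_cast
    ring
  have hterm : ∀ j : ℕ, (y ^ j * Real.exp (-y) / (Nat.factorial j)) *
        Real.log (y ^ j * Real.exp (-y) / (Nat.factorial j))
      = Real.log y * (((j:ℝ) * (y ^ j / (Nat.factorial j))) * Real.exp (-y))
        - y * ((y ^ j / (Nat.factorial j)) * Real.exp (-y))
        - (y ^ j * Real.exp (-y) / (Nat.factorial j) * cc j) := by
    intro j; rw [hlog j]; ring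
  have sA : Summable fun j : ℕ => ((j:ℝ) * (y ^ j / (Nat.factorial j))) * Real.exp (-y) :=
    (summable_k_exp y).mul_right _
  have sB : Summable fun j : ℕ => (y ^ j / (Nat.factorial j)) * Real.exp (-y) :=
    (summable_exp y).mul_right _
  have sC : Summable fun j : ℕ => y ^ j * Real.exp (-y) / (Nat.factorial j) * cc j :=
    summable_f y
  have tA : ∑' j : ℕ, ((j:ℝ) * (y ^ j / (Nat.factorial j))) * Real.exp (-y) = y := by
    rw [tsum_mul_right, tsum_k_exp, mul_assoc, ← Real.exp_add]
    simp
  have tB : ∑' j : ℕ, (y ^ j / (Nat.factorial j)) * Real.exp (-y) = 1 := by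
    rw [tsum_mul_right, tsum_exp, ← Real.exp_add]; simp
  have sA' : Summable fun j : ℕ => Real.log y * (((j:ℝ) * (y ^ j / (Nat.factorial j))) * Real.exp (-y)) := sA.mul_left _
  have sB' : Summable fun j : ℕ => y * ((y ^ j / (Nat.factorial j)) * Real.exp (-y)) := sB.mul_left _
  rw [tsum_congr hterm, Summable.tsum_sub (sA'.sub sB') sC, Summable.tsum_sub sA' sB', tsum_mul_left,
    tsum_mul_left, tA, tB]
  ring

lemma genfun_summable (x s : ℝ) :
    Summable fun k : ℕ => (x ^ k * Real.exp (-x) / (Nat.factorial k)) * (1-s)^k := by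
  apply ((summable_exp (x*(1-s))).mul_right (Real.exp (-x))).congr
  intro k
  rw [mul_pow]
  ring

lemma genfun (x s : ℝ) :
    ∑' k : ℕ, (x ^ k * Real.exp (-x) / (Nat.factorial k)) * (1-s)^k
      = Real.exp (-s * x) := by
  calc ∑' k : ℕ, (x ^ k * Real.exp (-x) / (Nat.factorial k)) * (1-s)^k
      = ∑' k : ℕ, ((x*(1-s)) ^ k / (Nat.factorial k)) * Real.exp (-x) :=
        tsum_congr fun k => by rw [mul_pow]; ring
    _ = Real.exp (x*(1-s)) * Real.exp (-x) := by rw [tsum_mul_right, tsum_exp]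
    _ = Real.exp (-s * x) := by rw [← Real.exp_add]; ring_nf

noncomputable def G (t : ℝ) : ℝ := ∫ u in (0:ℝ)..1, (1 - u ^ t) / Real.log u

lemma G_meas (t : ℝ) : Measurable fun u : ℝ => (1 - u ^ t) / Real.log u := by
  exact ((measurable_const.sub (measurable_id.pow_const t)).div Real.measurable_log)

lemma G_bound {t u : ℝ} (ht : 0 ≤ t) (hu0 : 0 ≤ u) (hu1 : u ≤ 1) :
    |(1 - u ^ t) / Real.log u| ≤ t := by
  rcases eq_or_lt_of_le hu0 with h0 | h0
  · simp [← h0, Real.log_zero, abs_le, ht]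
  rcases eq_or_lt_of_le hu1 with h1 | h1
  · simp [h1, Real.one_rpow, abs_le, ht]
  have hlog : Real.log u < 0 := Real.log_neg h0 h1
  have hnum0 : 0 ≤ 1 - u ^ t := by
    have : u ^ t ≤ 1 := Real.rpow_le_one hu0 hu1 ht
    linarith
  have hnum1 : 1 - u ^ t ≤ t * (-Real.log u) := by
    have h := Real.add_one_le_exp (t * Real.log u)
    rw [Real.rpow_def_of_pos h0, mul_comm (Real.log u) t]
    nlinarith
  rw [abs_le]
  constructor
  · rw [neg_le, ← neg_div]
    rw [div_le_iff_of_neg hlog]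
    nlinarith
  · have h2 : (1 - u ^ t) / Real.log u ≤ 0 :=
      div_nonpos_of_nonneg_of_nonpos hnum0 hlog.le
    linarith

lemma G_integrable {t : ℝ} (ht : 0 ≤ t) :
    IntervalIntegrable (fun u : ℝ => (1 - u ^ t) / Real.log u) volume 0 1 := by
  rw [intervalIntegrable_iff_integrableOn_Ioc_of_le zero_le_one]
  apply Measure.integrableOn_of_bounded (M := t) (by simp)
    (G_meas t).aestronglyMeasurable
  filter_upwards [ae_restrict_mem measurableSet_Ioc] with u hu
  exact G_bound ht hu.1.le hu.2

lemma G_hasDeriv {t₀ : ℝ} (ht : 0 ≤ t₀) : HasDerivAt G (-(t₀ + 1)⁻¹) t₀ := by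
  have key := (intervalIntegral.hasDerivAt_integral_of_dominated_loc_of_deriv_le
    (F := fun t u => (1 - u ^ t) / Real.log u) (F' := fun t u => -(u ^ t))
    (a := 0) (b := 1) (μ := volume) (x₀ := t₀) (bound := fun u => u ^ (t₀ - 2⁻¹))
    (ball_mem_nhds t₀ (by norm_num : (0:ℝ) < 2⁻¹))
    (Eventually.of_forall fun t => (G_meas t).aestronglyMeasurable)
    (G_integrable ht)
    ((measurable_id.pow_const t₀).neg.aestronglyMeasurable)
    ?_ (intervalIntegrable_rpow' (by linarith)) ?_).2
  · refine key.congr_deriv (Eq.symm ?_)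
    rw [intervalIntegral.integral_neg, integral_rpow (Or.inl (by linarith))]
    rw [Real.one_rpow, Real.zero_rpow (by linarith)]
    norm_num
  · refine Eventually.of_forall fun u hu t htb => ?_
    rw [Set.uIoc_of_le zero_le_one] at hu
    rw [mem_ball, Real.dist_eq, abs_lt] at htb
    show ‖-u ^ t‖ ≤ u ^ (t₀ - 2⁻¹)
    rw [norm_neg, Real.norm_eq_abs, abs_of_nonneg (Real.rpow_nonneg hu.1.le t)]
    exact Real.rpow_le_rpow_of_exponent_ge hu.1 hu.2 (by linarith [htb.1])
  · have hne : ∀ᵐ u : ℝ ∂(volume : Measure ℝ), u ≠ 1 := by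
      simp only [ae_iff, ne_eq, not_not, Set.setOf_eq_eq_singleton]
      exact measure_singleton 1
    filter_upwards [hne] with u hu1 hu t _
    rw [Set.uIoc_of_le zero_le_one] at hu
    have h1 : u < 1 := lt_of_le_of_ne hu.2 hu1
    have hlog : Real.log u ≠ 0 := (Real.log_neg hu.1 h1).ne
    have hd := (((hasDerivAt_id t).mul_const (Real.log u)).exp.const_sub 1).div_const
      (Real.log u)
    simp only [id_eq, one_mul] at hd
    have heq : (fun s : ℝ => (1 - u ^ s) / Real.log u)
        = fun s : ℝ => (1 - Real.exp (s * Real.log u)) / Real.log u := by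
      funext s; rw [Real.rpow_def_of_pos hu.1, mul_comm]
    show HasDerivAt (fun t : ℝ => (1 - u ^ t) / Real.log u) (-u ^ t) t
    rw [heq]
    refine hd.congr_deriv (Eq.symm ?_)
    rw [Real.rpow_def_of_pos hu.1, mul_comm]
    field_simp

lemma G_nat (k : ℕ) : G k = -Real.log (k + 1) := by
  have h1 : ∫ t in (0:ℝ)..k, -(t + 1)⁻¹ = G k - G 0 := by
    apply intervalIntegral.integral_eq_sub_of_hasDerivAt
    · intro t htm
      rw [Set.uIcc_of_le (by positivity : (0:ℝ) ≤ k)] at htm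
      exact G_hasDeriv htm.1
    · apply ContinuousOn.intervalIntegrable
      apply ContinuousOn.neg
      apply ContinuousOn.inv₀ (by fun_prop)
      intro t htm
      rw [Set.uIcc_of_le (by positivity : (0:ℝ) ≤ k)] at htm
      nlinarith [htm.1]
  have hG0 : G 0 = 0 := by
    unfold G
    simp [Real.rpow_zero]
  have h2 : ∫ t in (0:ℝ)..k, -(t + 1)⁻¹ = -Real.log (k + 1) := by
    rw [intervalIntegral.integral_neg]
    have := intervalIntegral.integral_comp_add_right (a := (0:ℝ)) (b := k)
      (fun u : ℝ => u⁻¹) 1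
    rw [this, zero_add]
    rw [integral_inv (by
      rw [Set.uIcc_of_le (by simp : (1:ℝ) ≤ (k:ℝ) + 1)]
      rintro ⟨h, -⟩; linarith)]
    simp
  rw [hG0, sub_zero] at h1
  rw [← h1, h2]

lemma G_subst (t : ℝ) :
    ∫ s in (0:ℝ)..1, (1 - (1 - s) ^ t) / Real.log (1 - s) = G t := by
  have := intervalIntegral.integral_comp_sub_left (a := (0:ℝ)) (b := 1)
    (fun u : ℝ => (1 - u ^ t) / Real.log u) 1
  simpa [G] using this

lemma nat_pow_bound (k : ℕ) {u : ℝ} (hu0 : 0 ≤ u) (hu1 : u ≤ 1) :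
    |(1 - u ^ k) / Real.log u| ≤ (k:ℝ) := by
  have := G_bound (t := (k:ℝ)) (u := u) (Nat.cast_nonneg k) hu0 hu1
  rwa [Real.rpow_natCast] at this

lemma integral_swap {x : ℝ} (hx : 0 < x) :
    ∫ s in (0:ℝ)..1, (1 - Real.exp (-s * x)) / Real.log (1 - s)
      = -∑' k : ℕ, x ^ k * Real.exp (-x) / (Nat.factorial k) * Real.log ((k:ℝ)+1) := by
  set P : ℕ → ℝ := fun k => x ^ k * Real.exp (-x) / (Nat.factorial k) with hP
  have hP0 : ∀ k, 0 ≤ P k := fun k => by positivity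
  set h : ℕ → ℝ → ℝ := fun k s => P k * ((1 - (1-s)^k) / Real.log (1-s)) with hh
  have hmeas : ∀ k : ℕ, Measurable (h k) := by
    intro k
    apply Measurable.const_mul
    exact ((measurable_const.sub ((measurable_const.sub measurable_id).pow_const k)).div
      ((measurable_const.sub measurable_id).log))
  have hbnd : ∀ k : ℕ, ∀ s ∈ Set.Ioc (0:ℝ) 1, ‖h k s‖ ≤ P k * k := by
    intro k s hs
    rw [hh, Real.norm_eq_abs, abs_mul, abs_of_nonneg (hP0 k)]
    exact mul_le_mul_of_nonneg_left
      (nat_pow_bound k (by linarith [hs.2]) (by linarith [hs.1])) (hP0 k)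
  have hsum_intnorm : Summable fun k : ℕ => P k * k := by
    apply ((summable_k_exp x).mul_right (Real.exp (-x))).congr
    intro k; rw [hP]; ring
  have hsum_nonneg : ∀ k : ℕ, (0:ℝ) ≤ P k * k := fun k =>
    mul_nonneg (hP0 k) (Nat.cast_nonneg k)
  -- interval integral to set integral
  rw [intervalIntegral.integral_of_le zero_le_one]
  have haeq : ∀ᵐ s ∂(volume.restrict (Set.Ioc (0:ℝ) 1)),
      (1 - Real.exp (-s * x)) / Real.log (1 - s) = ∑' k : ℕ, h k s := by
    have hone : ∀ᵐ s : ℝ ∂(volume.restrict (Set.Ioc (0:ℝ) 1)), s ≠ 1 := by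
      apply ae_restrict_of_ae
      simp only [ae_iff, ne_eq, not_not, Set.setOf_eq_eq_singleton]
      exact measure_singleton 1
    filter_upwards [ae_restrict_mem measurableSet_Ioc, hone] with s hs hs1
    have hlogne : Real.log (1 - s) ≠ 0 := by
      apply (Real.log_neg _ _).ne
      · have : s < 1 := lt_of_le_of_ne hs.2 hs1
        linarith
      · linarith [hs.1]
    have hsummand : ∀ k : ℕ, h k s = (P k - P k * (1-s)^k) * (Real.log (1-s))⁻¹ := by
      intro k; rw [hh]; field_simp
    rw [tsum_congr hsummand, tsum_mul_right,
      Summable.tsum_sub (by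
        apply ((summable_exp x).mul_right (Real.exp (-x))).congr
        intro k; rw [hP]; ring) (genfun_summable x s),
      tsum_P, genfun]
    rw [div_eq_mul_inv]
  rw [integral_congr_ae haeq]
  rw [MeasureTheory.integral_tsum (fun k => (hmeas k).aestronglyMeasurable) ?_]
  · have hint : ∀ k : ℕ, ∫ s in Set.Ioc (0:ℝ) 1, h k s = P k * (-Real.log ((k:ℝ)+1)) := by
      intro k
      rw [← intervalIntegral.integral_of_le zero_le_one]
      have : ∀ s : ℝ, h k s = P k * ((1 - (1-s)^((k:ℝ))) / Real.log (1-s)) := by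
        intro s; rw [hh, Real.rpow_natCast]
      simp_rw [this]
      rw [intervalIntegral.integral_const_mul, G_subst, G_nat]
    rw [tsum_congr hint]
    rw [← tsum_neg]
    apply tsum_congr
    intro k
    rw [hP]
    ring
  · -- lintegral bound
    have hle : ∀ k : ℕ, ∫⁻ s in Set.Ioc (0:ℝ) 1, ‖h k s‖₊ ∂volume
        ≤ ENNReal.ofReal (P k * k) := by
      intro k
      have : ∫⁻ s in Set.Ioc (0:ℝ) 1, ‖h k s‖₊ ∂volume
          ≤ ∫⁻ _ in Set.Ioc (0:ℝ) 1, ENNReal.ofReal (P k * k) ∂volume := by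
        apply lintegral_mono_ae
        filter_upwards [ae_restrict_mem measurableSet_Ioc] with s hs
        rw [← enorm_eq_nnnorm, ← ofReal_norm]
        exact ENNReal.ofReal_le_ofReal (hbnd k s hs)
      calc ∫⁻ s in Set.Ioc (0:ℝ) 1, ‖h k s‖₊ ∂volume
          ≤ ∫⁻ _ in Set.Ioc (0:ℝ) 1, ENNReal.ofReal (P k * k) ∂volume := this
        _ = ENNReal.ofReal (P k * k) := by
            rw [MeasureTheory.lintegral_const, Measure.restrict_apply_univ, Real.volume_Ioc]
            norm_num
    apply ne_top_of_le_ne_top (b := ENNReal.ofReal (∑' k, P k * k))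
    · exact ENNReal.ofReal_ne_top
    · calc ∑' k : ℕ, ∫⁻ s in Set.Ioc (0:ℝ) 1, ‖h k s‖₊ ∂volume
          ≤ ∑' k : ℕ, ENNReal.ofReal (P k * k) := ENNReal.tsum_le_tsum hle
        _ = ENNReal.ofReal (∑' k, P k * k) :=
            (ENNReal.ofReal_tsum_of_nonneg hsum_nonneg hsum_intnorm).symm

theorem poisson_entropy_deriv_eq (x : ℝ) (hx : 0 < x) :
    deriv (fun y : ℝ => -∑' j : ℕ,
        (y ^ j * Real.exp (-y) / (Nat.factorial j)) *
          Real.log (y ^ j * Real.exp (-y) / (Nat.factorial j))) x =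
      -Real.log x - ∫ s in (0:ℝ)..1, (1 - Real.exp (-s * x)) / Real.log (1 - s) := by
  have heq : (fun y : ℝ => -∑' j : ℕ,
        (y ^ j * Real.exp (-y) / (Nat.factorial j)) *
          Real.log (y ^ j * Real.exp (-y) / (Nat.factorial j)))
      =ᶠ[𝓝 x] fun y : ℝ => -(y * Real.log y) + y
        + ∑' k : ℕ, y ^ k * Real.exp (-y) / (Nat.factorial k) * cc k := by
    filter_upwards [isOpen_Ioi.mem_nhds (Set.mem_Ioi.2 hx)] with y hy
    exact entropy_eq hy
  rw [heq.deriv_eq]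
  have hmul : HasDerivAt (fun y : ℝ => y * Real.log y) (Real.log x + 1) x :=
    Real.hasDerivAt_mul_log hx.ne'
  have hd : HasDerivAt (fun y : ℝ => -(y * Real.log y) + y
        + ∑' k : ℕ, y ^ k * Real.exp (-y) / (Nat.factorial k) * cc k)
      (-(Real.log x + 1) + 1
        + ∑' k : ℕ, ((k:ℝ) * x ^ (k-1) - x ^ k) * Real.exp (-x) / (Nat.factorial k) * cc k) x :=
    (hmul.neg.add (hasDerivAt_id x)).add (hasDerivAt_S hx)
  rw [hd.deriv, tsum_f'_eq hx, integral_swap hx]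
  ring
end

section
/- For x > 0, log x ≤ ∑_{k=0}^∞ e^{-x} (x^k / k!) log(k+1) ≤ log(x+1). -/
open Real

private lemma tsum_exp_series (x : ℝ) : ∑' n : ℕ, x ^ n / n.factorial = Real.exp x := by
  rw [Real.exp_eq_exp_ℝ, NormedSpace.exp_eq_tsum_div]

private lemma sum_p (x : ℝ) : Summable (fun k : ℕ => Real.exp (-x) * (x ^ k / k.factorial)) :=
  (Real.summable_pow_div_factorial x).mul_left _

private lemma tsum_p (x : ℝ) : ∑' k : ℕ, Real.exp (-x) * (x ^ k / k.factorial) = 1 := by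
  rw [tsum_mul_left, tsum_exp_series, ← Real.exp_add]
  simp

private lemma shift_id (x : ℝ) (k : ℕ) :
    Real.exp (-x) * (x ^ (k+1) / (k+1).factorial) * ((k:ℝ)+1)
      = x * (Real.exp (-x) * (x ^ k / k.factorial)) := by
  have h : ((k+1).factorial : ℝ) = ((k:ℝ)+1) * k.factorial := by
    rw [Nat.factorial_succ]; push_cast; ring
  have h2 : ((k:ℝ)+1) ≠ 0 := by positivity
  have h3 : (k.factorial : ℝ) ≠ 0 := by exact_mod_cast k.factorial_ne_zero
  rw [h]; field_simp
  ring

private lemma sum_pk (x : ℝ) :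
    Summable (fun k : ℕ => Real.exp (-x) * (x ^ k / k.factorial) * k) := by
  apply (summable_nat_add_iff 1).mp
  have : (fun n : ℕ => Real.exp (-x) * (x ^ (n+1) / (n+1).factorial) * ((n:ℝ)+1))
      = fun n : ℕ => x * (Real.exp (-x) * (x ^ n / n.factorial)) := by
    funext n; exact shift_id x n
  simp only [Nat.cast_add, Nat.cast_one, this]
  exact (sum_p x).mul_left x

private lemma tsum_pk (x : ℝ) :
    ∑' k : ℕ, Real.exp (-x) * (x ^ k / k.factorial) * k = x := by
  rw [Summable.tsum_eq_zero_add (sum_pk x)]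
  simp only [Nat.cast_zero, mul_zero, zero_add, Nat.cast_add, Nat.cast_one]
  have : (fun n : ℕ => Real.exp (-x) * (x ^ (n+1) / (n+1).factorial) * ((n:ℝ)+1))
      = fun n : ℕ => x * (Real.exp (-x) * (x ^ n / n.factorial)) := by
    funext n; exact shift_id x n
  rw [this, tsum_mul_left, tsum_p, mul_one]

private lemma sum_q (x : ℝ) :
    Summable (fun k : ℕ => Real.exp (-x) * (x ^ (k+1) / (k+1).factorial)) :=
  (summable_nat_add_iff 1).mpr (sum_p x)

private lemma tsum_q (x : ℝ) :
    ∑' k : ℕ, Real.exp (-x) * (x ^ (k+1) / (k+1).factorial) = 1 - Real.exp (-x) := by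
  have h := Summable.tsum_eq_zero_add (sum_p x)
  rw [tsum_p x] at h
  simp only [pow_zero, Nat.factorial_zero, Nat.cast_one] at h
  linarith [h]

theorem log_le_poisson_expectation_le_log (x : ℝ) (hx : 0 < x) :
    Real.log x ≤ ∑' k : ℕ, Real.exp (-x) * (x ^ k / (Nat.factorial k)) * Real.log (k + 1) ∧
    ∑' k : ℕ, Real.exp (-x) * (x ^ k / (Nat.factorial k)) * Real.log (k + 1) ≤ Real.log (x + 1) := by
  set p : ℕ → ℝ := fun k => Real.exp (-x) * (x ^ k / k.factorial) with hp
  have hppos : ∀ k, 0 < p k := by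
    intro k; apply mul_pos (Real.exp_pos _); positivity
  -- summability of the main series
  have hflog : ∀ k : ℕ, 0 ≤ Real.log ((k:ℝ) + 1) := by
    intro k
    apply Real.log_nonneg; exact_mod_cast Nat.one_le_iff_ne_zero.mpr (Nat.succ_ne_zero k)
  have hlogle : ∀ k : ℕ, Real.log ((k:ℝ) + 1) ≤ (k:ℝ) := by
    intro k
    have := Real.log_le_sub_one_of_pos (x := (k:ℝ)+1) (by positivity)
    linarith
  have hsumf : Summable (fun k : ℕ => p k * Real.log ((k:ℝ) + 1)) := by
    apply Summable.of_nonneg_of_le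
      (fun k => mul_nonneg (hppos k).le (hflog k))
      (fun k => mul_le_mul_of_nonneg_left (hlogle k) (hppos k).le)
      (sum_pk x)
  constructor
  · -- lower bound
    have key : ∀ k : ℕ, p k * (Real.log x + 1 - x / ((k:ℝ)+1)) ≤ p k * Real.log ((k:ℝ)+1) := by
      intro k
      apply mul_le_mul_of_nonneg_left _ (hppos k).le
      have hk1 : (0:ℝ) < (k:ℝ)+1 := by positivity
      have ht : (0:ℝ) < ((k:ℝ)+1)/x := by positivity
      have h1 : Real.log (x / ((k:ℝ)+1)) ≤ x / ((k:ℝ)+1) - 1 :=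
        Real.log_le_sub_one_of_pos (by positivity)
      rw [Real.log_div (ne_of_gt hx) (ne_of_gt hk1)] at h1
      linarith
    have hq : ∀ k : ℕ, p k * (x / ((k:ℝ)+1)) = Real.exp (-x) * (x ^ (k+1) / (k+1).factorial) := by
      intro k
      have h : ((k+1).factorial : ℝ) = ((k:ℝ)+1) * k.factorial := by
        rw [Nat.factorial_succ]; push_cast; ring
      have h2 : ((k:ℝ)+1) ≠ 0 := by positivity
      have h3 : (k.factorial : ℝ) ≠ 0 := by exact_mod_cast k.factorial_ne_zero
      simp only [hp, h]
      field_simp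
      ring
    have hg : (fun k : ℕ => p k * (Real.log x + 1 - x / ((k:ℝ)+1)))
        = fun k : ℕ => p k * (Real.log x + 1) - Real.exp (-x) * (x ^ (k+1) / (k+1).factorial) := by
      funext k; rw [← hq k]; ring
    have hsumg : Summable (fun k : ℕ => p k * (Real.log x + 1 - x / ((k:ℝ)+1))) := by
      rw [hg]
      exact ((sum_p x).mul_right _).sub (sum_q x)
    have htg : ∑' k : ℕ, p k * (Real.log x + 1 - x / ((k:ℝ)+1)) = Real.log x + Real.exp (-x) := by
      rw [hg, Summable.tsum_sub ((sum_p x).mul_right _) (sum_q x), tsum_mul_right, tsum_p, tsum_q]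
      ring
    calc Real.log x ≤ Real.log x + Real.exp (-x) := by linarith [Real.exp_pos (-x)]
      _ = ∑' k : ℕ, p k * (Real.log x + 1 - x / ((k:ℝ)+1)) := htg.symm
      _ ≤ ∑' k : ℕ, p k * Real.log ((k:ℝ)+1) := Summable.tsum_le_tsum key hsumg hsumf
      _ = _ := by rfl
  · -- upper bound
    have hx1 : (0:ℝ) < x + 1 := by linarith
    have key : ∀ k : ℕ, p k * Real.log ((k:ℝ)+1)
        ≤ p k * (Real.log (x+1) - x/(x+1)) + (p k * k) * (1/(x+1)) := by
      intro k
      have hk1 : (0:ℝ) < (k:ℝ)+1 := by positivity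
      have h1 : Real.log (((k:ℝ)+1) / (x+1)) ≤ ((k:ℝ)+1)/(x+1) - 1 :=
        Real.log_le_sub_one_of_pos (by positivity)
      rw [Real.log_div (ne_of_gt hk1) (ne_of_gt hx1)] at h1
      have h2 : Real.log ((k:ℝ)+1) ≤ Real.log (x+1) - x/(x+1) + (k:ℝ) * (1/(x+1)) := by
        have : ((k:ℝ)+1)/(x+1) - 1 = -(x/(x+1)) + (k:ℝ) * (1/(x+1)) := by
          field_simp; ring
        linarith [h1, this ▸ h1]
      calc p k * Real.log ((k:ℝ)+1)
          ≤ p k * (Real.log (x+1) - x/(x+1) + (k:ℝ) * (1/(x+1))) :=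
            mul_le_mul_of_nonneg_left h2 (hppos k).le
        _ = p k * (Real.log (x+1) - x/(x+1)) + (p k * k) * (1/(x+1)) := by ring
    have hsumh : Summable (fun k : ℕ => p k * (Real.log (x+1) - x/(x+1)) + (p k * k) * (1/(x+1))) :=
      ((sum_p x).mul_right _).add ((sum_pk x).mul_right _)
    have hth : ∑' k : ℕ, (p k * (Real.log (x+1) - x/(x+1)) + (p k * k) * (1/(x+1)))
        = Real.log (x+1) := by
      rw [Summable.tsum_add ((sum_p x).mul_right _) ((sum_pk x).mul_right _),
        tsum_mul_right, tsum_mul_right, tsum_p, tsum_pk]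
      field_simp
      ring
    calc ∑' k : ℕ, Real.exp (-x) * (x ^ k / (Nat.factorial k)) * Real.log ((k:ℝ)+1)
        ≤ ∑' k : ℕ, (p k * (Real.log (x+1) - x/(x+1)) + (p k * k) * (1/(x+1))) :=
          Summable.tsum_le_tsum key hsumf hsumh
      _ = Real.log (x+1) := hth
end

section
/- For the binomial basis functions p_{n,k}(x) = C(n,k) x^k (1-x)^{n-k}, the function S_n(x) = ∑_{k=0}^n p_{n,k}(x)² satisfies S_n(1/2 - t) = S_n(1/2 + t) for all t, is decreasing on [0, 1/2] and increasing on [1/2, 1]. -/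
open Finset

section Aux

open Polynomial

private lemma coeff_lin_pow (a b : ℝ) (n k : ℕ) (hk : k ≤ n) :
    ((C a + C b * X) ^ n).coeff k = (n.choose k : ℝ) * b ^ k * a ^ (n - k) := by
  have key : ∀ m : ℕ, (C a) ^ m * (C b * X) ^ (n - m) * (n.choose m : ℝ[X])
      = C (a ^ m * b ^ (n - m) * (n.choose m : ℝ)) * X ^ (n - m) := by
    intro m
    simp only [mul_pow, ← C_pow, ← C_eq_natCast, C_mul]
    ring
  rw [add_pow, finset_sum_coeff]
  rw [Finset.sum_eq_single (n - k)]
  · rw [key, coeff_C_mul, coeff_X_pow, if_pos (Nat.sub_sub_self hk).symm,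
        Nat.sub_sub_self hk, mul_one, Nat.choose_symm hk]
    ring
  · intro m hm hne
    rw [key, coeff_C_mul, coeff_X_pow, if_neg, mul_zero]
    have hm' : m ≤ n := by simpa using Nat.lt_succ_iff.mp (mem_range.mp hm)
    omega
  · intro h
    exact absurd (mem_range.mpr (by omega)) h

private lemma key_identity (n : ℕ) (x : ℝ) :
    ∑ k ∈ Finset.range (n + 1), ((n.choose k : ℝ) * x ^ k * (1 - x) ^ (n - k)) ^ 2
    = ∑ j ∈ Finset.range (n + 1),
        (n.choose j : ℝ) * ((2 * j).choose j : ℝ) * (x * (1 - x)) ^ j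
          * ((1 - 2 * x) ^ 2) ^ (n - j) := by
  set y : ℝ := 1 - x with hy
  set P : ℝ[X] := (C y + C x * X) * (C x + C y * X) with hP
  have hL : (P ^ n).coeff n
      = ∑ k ∈ Finset.range (n + 1), ((n.choose k : ℝ) * x ^ k * y ^ (n - k)) ^ 2 := by
    rw [hP, mul_pow, coeff_mul, Finset.Nat.sum_antidiagonal_eq_sum_range_succ_mk]
    refine Finset.sum_congr rfl fun k hk => ?_
    have hk' : k ≤ n := Nat.lt_succ_iff.mp (mem_range.mp hk)
    rw [coeff_lin_pow _ _ _ _ hk', coeff_lin_pow _ _ _ _ (Nat.sub_le n k),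
        Nat.sub_sub_self hk', Nat.choose_symm hk']
    ring
  have hP2 : P = C (x * y) * (1 + X) ^ 2 + C ((1 - 2 * x) ^ 2) * X := by
    have h12 : (1 : ℝ) - 2 * x = y - x := by rw [hy]; ring
    rw [h12]
    simp only [C_mul, map_sub, map_pow, map_add, map_one]
    ring
  have hR : (P ^ n).coeff n
      = ∑ j ∈ Finset.range (n + 1),
          (n.choose j : ℝ) * ((2 * j).choose j : ℝ) * (x * y) ^ j
            * ((1 - 2 * x) ^ 2) ^ (n - j) := by
    rw [hP2, add_pow, finset_sum_coeff]
    refine Finset.sum_congr rfl fun j hj => ?_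
    have hj' : j ≤ n := Nat.lt_succ_iff.mp (mem_range.mp hj)
    have hterm : (C (x * y) * (1 + X) ^ 2) ^ j * (C ((1 - 2 * x) ^ 2) * X) ^ (n - j)
        * (n.choose j : ℝ[X])
        = (C ((x * y) ^ j * ((1 - 2 * x) ^ 2) ^ (n - j) * (n.choose j : ℝ))
            * (1 + X) ^ (2 * j)) * X ^ (n - j) := by
      simp only [mul_pow, ← C_pow, ← C_eq_natCast, C_mul, ← pow_mul]
      ring
    rw [hterm, coeff_mul_X_pow', if_pos (Nat.sub_le n j), Nat.sub_sub_self hj',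
        coeff_C_mul, coeff_one_add_X_pow]
    ring
  rw [← hL, hR]

private lemma catalan_like (j : ℕ) : (2*j+1).choose j ≤ 2 * (2*j).choose j := by
  cases j with
  | zero => simp
  | succ k =>
    have h1 : (2*(k+1)+1).choose (k+1) = (2*(k+1)).choose k + (2*(k+1)).choose (k+1) :=
      Nat.choose_succ_succ _ _
    have h2 : (2*(k+1)).choose k ≤ (2*(k+1)).choose (k+1) := by
      have := Nat.choose_le_middle k (2*(k+1))
      simpa [Nat.mul_div_cancel_left] using this
    omega

private lemma coeff_ineq (n j : ℕ) :
    (j+1) * ((n.choose (j+1)) * ((2*(j+1)).choose (j+1)))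
      ≤ 4 * (n - j) * ((n.choose j) * ((2*j).choose j)) := by
  have h2j : 2*(j+1) = 2*j+1+1 := by ring
  rw [h2j]
  have ha : (j+1) * n.choose (j+1) = (n-j) * n.choose j := by
    rw [mul_comm, Nat.choose_succ_right_eq, mul_comm]
  have hs : (j+1) * ((2*j+1+1).choose (j+1)) = (2*j+1+1) * ((2*j+1).choose j) := by
    have := Nat.add_one_mul_choose_eq (2*j+1) j
    rw [this]; ring
  refine Nat.le_of_mul_le_mul_left ?_ (Nat.succ_pos j)
  calc (j+1) * ((j+1) * (n.choose (j+1) * ((2*j+1+1).choose (j+1))))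
      = ((j+1) * n.choose (j+1)) * ((j+1) * ((2*j+1+1).choose (j+1))) := by ring
    _ = ((n-j) * n.choose j) * ((2*j+1+1) * ((2*j+1).choose j)) := by rw [ha, hs]
    _ ≤ ((n-j) * n.choose j) * ((2*j+1+1) * (2*((2*j).choose j))) :=
        Nat.mul_le_mul_left _ (Nat.mul_le_mul_left _ (catalan_like j))
    _ = (j+1) * (4 * (n-j) * (n.choose j * ((2*j).choose j))) := by ring

private lemma hasDerivAt_T (n : ℕ) (x : ℝ) :
    HasDerivAt (fun y : ℝ => ∑ j ∈ Finset.range (n + 1),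
        (n.choose j : ℝ) * ((2 * j).choose j : ℝ) * (y * (1 - y)) ^ j
          * ((1 - 2 * y) ^ 2) ^ (n - j))
      ((1 - 2 * x) * ∑ j ∈ Finset.range n,
        (((j : ℝ) + 1) * ((n.choose (j+1) : ℝ) * ((2 * (j+1)).choose (j+1) : ℝ))
          - 4 * ((n - j : ℕ) : ℝ) * ((n.choose j : ℝ) * ((2 * j).choose j : ℝ)))
        * (x * (1 - x)) ^ j * ((1 - 2 * x) ^ 2) ^ (n - 1 - j)) x := by
  have hA : HasDerivAt (fun y : ℝ => y * (1 - y)) (1 - 2 * x) x := by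
    have := (hasDerivAt_id x).mul ((hasDerivAt_const x (1:ℝ)).sub (hasDerivAt_id x))
    exact this.congr_deriv (by simp only [Pi.sub_apply, id]; ring)
  have h0 : HasDerivAt (fun y : ℝ => 1 - 2 * y) (-2 : ℝ) x := by
    have := (hasDerivAt_const x (1:ℝ)).sub ((hasDerivAt_const x (2:ℝ)).mul (hasDerivAt_id x))
    exact this.congr_deriv (by ring)
  have hD : ∀ j, HasDerivAt
      (fun y : ℝ => (n.choose j : ℝ) * ((2 * j).choose j : ℝ) * (y * (1 - y)) ^ j
          * ((1 - 2 * y) ^ 2) ^ (n - j))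
      ((n.choose j : ℝ) * ((2 * j).choose j : ℝ)
          * ((j : ℝ) * (x * (1 - x)) ^ (j - 1) * (1 - 2 * x)) * ((1 - 2 * x) ^ 2) ^ (n - j)
        + (n.choose j : ℝ) * ((2 * j).choose j : ℝ) * (x * (1 - x)) ^ j
          * (((n - j : ℕ) : ℝ) * ((1 - 2 * x) ^ 2) ^ (n - j - 1) * (-4 * (1 - 2 * x)))) x := by
    intro j
    have := ((hA.pow j).const_mul ((n.choose j : ℝ) * ((2 * j).choose j : ℝ))).mul
        ((h0.pow 2).pow (n - j))
    exact this.congr_deriv (by simp only [Pi.pow_apply, Pi.mul_apply]; push_cast; ring)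
  have Hsum := HasDerivAt.fun_sum (u := Finset.range (n+1)) (fun j _ => hD j)
  refine Hsum.congr_deriv (Eq.symm ?_)
  rw [Finset.sum_add_distrib, Finset.sum_range_succ', Finset.sum_range_succ]
  simp only [Nat.cast_zero, zero_mul, mul_zero, zero_add, Nat.sub_self, add_zero,
    Nat.add_sub_cancel]
  rw [Finset.mul_sum, ← Finset.sum_add_distrib]
  refine Finset.sum_congr rfl fun j hj => ?_
  have hjn : j < n := Finset.mem_range.mp hj
  have e2 : n - (j + 1) = n - 1 - j := by omega
  have e3 : n - j - 1 = n - 1 - j := by omega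
  rw [e2, e3]
  push_cast
  ring

private lemma deriv_sign (n : ℕ) (x : ℝ) (hx0 : 0 ≤ x) (hx1 : x ≤ 1) :
    (∑ j ∈ Finset.range n,
        (((j : ℝ) + 1) * ((n.choose (j+1) : ℝ) * ((2 * (j+1)).choose (j+1) : ℝ))
          - 4 * ((n - j : ℕ) : ℝ) * ((n.choose j : ℝ) * ((2 * j).choose j : ℝ)))
        * (x * (1 - x)) ^ j * ((1 - 2 * x) ^ 2) ^ (n - 1 - j)) ≤ 0 := by
  apply Finset.sum_nonpos
  intro j _
  have he : (((j : ℝ) + 1) * ((n.choose (j+1) : ℝ) * ((2 * (j+1)).choose (j+1) : ℝ))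
      - 4 * ((n - j : ℕ) : ℝ) * ((n.choose j : ℝ) * ((2 * j).choose j : ℝ))) ≤ 0 := by
    rw [sub_nonpos]
    have := coeff_ineq n j
    calc ((j : ℝ) + 1) * ((n.choose (j+1) : ℝ) * ((2 * (j+1)).choose (j+1) : ℝ))
        = (((j+1) * ((n.choose (j+1)) * ((2*(j+1)).choose (j+1))) : ℕ) : ℝ) := by push_cast; ring
      _ ≤ ((4 * (n - j) * ((n.choose j) * ((2*j).choose j)) : ℕ) : ℝ) := by exact_mod_cast this
      _ = 4 * ((n - j : ℕ) : ℝ) * ((n.choose j : ℝ) * ((2 * j).choose j : ℝ)) := by push_cast; ring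
  have hA : (0:ℝ) ≤ (x * (1 - x)) ^ j := pow_nonneg (mul_nonneg hx0 (by linarith)) j
  have hB : (0:ℝ) ≤ ((1 - 2 * x) ^ 2) ^ (n - 1 - j) := pow_nonneg (sq_nonneg _) _
  calc (((j : ℝ) + 1) * ((n.choose (j+1) : ℝ) * ((2 * (j+1)).choose (j+1) : ℝ))
          - 4 * ((n - j : ℕ) : ℝ) * ((n.choose j : ℝ) * ((2 * j).choose j : ℝ)))
        * (x * (1 - x)) ^ j * ((1 - 2 * x) ^ 2) ^ (n - 1 - j)
      ≤ 0 * (x * (1 - x)) ^ j * ((1 - 2 * x) ^ 2) ^ (n - 1 - j) := by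
        apply mul_le_mul_of_nonneg_right _ hB
        exact mul_le_mul_of_nonneg_right he hA
    _ = 0 := by ring

end Aux

theorem binomial_index_coincidence_symm_monotone (n : ℕ) (hn : 1 ≤ n) :
    (∀ t : ℝ, ∑ k ∈ Finset.range (n + 1),
        ((n.choose k : ℝ) * (1/2 - t) ^ k * (1 - (1/2 - t)) ^ (n - k)) ^ 2 =
      ∑ k ∈ Finset.range (n + 1),
        ((n.choose k : ℝ) * (1/2 + t) ^ k * (1 - (1/2 + t)) ^ (n - k)) ^ 2) ∧
    AntitoneOn (fun x : ℝ => ∑ k ∈ Finset.range (n + 1),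
        ((n.choose k : ℝ) * x ^ k * (1 - x) ^ (n - k)) ^ 2) (Set.Icc 0 (1/2)) ∧
    MonotoneOn (fun x : ℝ => ∑ k ∈ Finset.range (n + 1),
        ((n.choose k : ℝ) * x ^ k * (1 - x) ^ (n - k)) ^ 2) (Set.Icc (1/2) 1) := by
  have hfun : (fun x : ℝ => ∑ k ∈ Finset.range (n + 1),
      ((n.choose k : ℝ) * x ^ k * (1 - x) ^ (n - k)) ^ 2)
      = (fun x : ℝ => ∑ j ∈ Finset.range (n + 1),
        (n.choose j : ℝ) * ((2 * j).choose j : ℝ) * (x * (1 - x)) ^ j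
          * ((1 - 2 * x) ^ 2) ^ (n - j)) := funext fun x => key_identity n x
  refine ⟨?_, ?_, ?_⟩
  · intro t
    have h1 := key_identity n (1/2 - t)
    have h2 := key_identity n (1/2 + t)
    rw [h1, h2]
    refine Finset.sum_congr rfl fun j _ => ?_
    have hb1 : (1/2 - t) * (1 - (1/2 - t)) = (1/2 + t) * (1 - (1/2 + t)) := by ring
    have hb2 : (1 - 2 * (1/2 - t)) ^ 2 = (1 - 2 * (1/2 + t)) ^ 2 := by ring
    rw [hb1, hb2]
  · rw [hfun]
    apply antitoneOn_of_deriv_nonpos (convex_Icc _ _)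
    · exact fun x _ => (hasDerivAt_T n x).continuousAt.continuousWithinAt
    · exact fun x _ => (hasDerivAt_T n x).differentiableAt.differentiableWithinAt
    · intro x hx
      rw [interior_Icc] at hx
      rw [(hasDerivAt_T n x).deriv]
      have h1 : (0:ℝ) ≤ 1 - 2 * x := by have := hx.2; linarith
      have h2 := deriv_sign n x (le_of_lt hx.1) (by have := hx.2; linarith)
      exact mul_nonpos_of_nonneg_of_nonpos h1 h2
  · rw [hfun]
    apply monotoneOn_of_deriv_nonneg (convex_Icc _ _)
    · exact fun x _ => (hasDerivAt_T n x).continuousAt.continuousWithinAt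
    · exact fun x _ => (hasDerivAt_T n x).differentiableAt.differentiableWithinAt
    · intro x hx
      rw [interior_Icc] at hx
      rw [(hasDerivAt_T n x).deriv]
      have h1 : 1 - 2 * x ≤ 0 := by have := hx.1; linarith
      have h2 := deriv_sign n x (by have := hx.1; linarith) (le_of_lt hx.2)
      nlinarith [h1, h2]
end

section
/- For every integer n ≥ 1, the function S_n(x) = ∑_{k=0}^n (C(n,k) x^k (1-x)^{n-k})² is convex on [0,1]. -/
open Finset

lemma root_sum {m : ℕ} {ζ : ℂ} (hζ : IsPrimitiveRoot ζ m) (a : ℕ) :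
    ∑ j ∈ range m, ζ ^ (j * a) = if m ∣ a then (m : ℂ) else 0 := by
  by_cases h : m ∣ a
  · simp only [h, if_true]
    rw [Finset.sum_congr rfl (fun j _ => by
      rw [hζ.pow_eq_one_iff_dvd]; exact (h.mul_left j))]
    simp
  · have h1 : ζ ^ a ≠ 1 := by rw [Ne, hζ.pow_eq_one_iff_dvd]; exact h
    simp only [h, if_false]
    have h2 : ∑ j ∈ range m, ζ ^ (j * a) = ∑ j ∈ range m, (ζ ^ a) ^ j := by
      refine Finset.sum_congr rfl fun j _ => ?_
      rw [← pow_mul, mul_comm]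
    have h3 : (ζ ^ a) ^ m = 1 := by
      rw [← pow_mul, mul_comm, pow_mul, hζ.pow_eq_one, one_pow]
    rw [h2, geom_sum_eq h1, h3]
    simp

lemma dvd_iff_eq {m n k l : ℕ} (hnm : n < m) (hk : k ≤ n) (hl : l ≤ n) :
    m ∣ (k + l * (m - 1)) ↔ k = l := by
  have hm : 1 ≤ m := by omega
  constructor
  · intro hdvd
    obtain ⟨c, hc⟩ := hdvd
    have hcZ : (k : ℤ) + l * ((m : ℤ) - 1) = m * c := by
      have := congrArg (Nat.cast : ℕ → ℤ) hc
      push_cast [Nat.cast_sub hm] at this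
      linarith [this]
    have hd : (m : ℤ) ∣ ((k : ℤ) - l) := ⟨c - l, by linarith [hcZ]⟩
    have h0 : (k : ℤ) - l = 0 := by
      refine Int.eq_zero_of_abs_lt_dvd hd ?_
      rw [abs_lt]
      constructor <;> [push_cast; push_cast] <;> omega
    omega
  · intro h
    subst h
    refine ⟨k, ?_⟩
    cases m with
    | zero => omega
    | succ m' => simp only [Nat.succ_sub_one]; ring

lemma key_complex {m n : ℕ} (hnm : n < m) {ζ : ℂ} (hζ : IsPrimitiveRoot ζ m) (a b : ℂ) :
    ∑ j ∈ range m, ((a * ζ ^ j + b) ^ n * (a * ζ ^ (j * (m - 1)) + b) ^ n)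
      = (m : ℂ) * ∑ k ∈ range (n + 1), ((n.choose k : ℂ) * a ^ k * b ^ (n - k)) ^ 2 := by
  have expand : ∀ j, (a * ζ ^ j + b) ^ n * (a * ζ ^ (j * (m - 1)) + b) ^ n
      = ∑ k ∈ range (n + 1), ∑ l ∈ range (n + 1),
          ((n.choose k : ℂ) * (n.choose l : ℂ) * a ^ (k + l) * b ^ (n - k) * b ^ (n - l))
            * ζ ^ (j * (k + l * (m - 1))) := by
    intro j
    rw [add_pow, add_pow, Finset.sum_mul_sum]
    refine Finset.sum_congr rfl fun k hk => Finset.sum_congr rfl fun l hl => ?_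
    have e1 : ζ ^ (j * (k + l * (m - 1))) = (ζ ^ j) ^ k * (ζ ^ (j * (m - 1))) ^ l := by
      rw [← pow_mul, ← pow_mul, ← pow_add]
      congr 1
      ring
    rw [e1]
    ring
  calc ∑ j ∈ range m, ((a * ζ ^ j + b) ^ n * (a * ζ ^ (j * (m - 1)) + b) ^ n)
      = ∑ k ∈ range (n + 1), ∑ l ∈ range (n + 1),
          ((n.choose k : ℂ) * (n.choose l : ℂ) * a ^ (k + l) * b ^ (n - k) * b ^ (n - l))
            * ∑ j ∈ range m, ζ ^ (j * (k + l * (m - 1))) := by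
        rw [Finset.sum_congr rfl fun j _ => expand j, Finset.sum_comm]
        refine Finset.sum_congr rfl fun k _ => ?_
        rw [Finset.sum_comm]
        exact Finset.sum_congr rfl fun l _ => (Finset.mul_sum _ _ _).symm
    _ = ∑ k ∈ range (n + 1), ((n.choose k : ℂ) * a ^ k * b ^ (n - k)) ^ 2 * m := by
        refine Finset.sum_congr rfl fun k hk => ?_
        rw [Finset.mem_range] at hk
        have step : ∀ l ∈ range (n + 1),
            ((n.choose k : ℂ) * (n.choose l : ℂ) * a ^ (k + l) * b ^ (n - k) * b ^ (n - l))
              * ∑ j ∈ range m, ζ ^ (j * (k + l * (m - 1)))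
            = if l = k then ((n.choose k : ℂ) * a ^ k * b ^ (n - k)) ^ 2 * m else 0 := by
          intro l hl
          rw [Finset.mem_range] at hl
          rw [root_sum hζ]
          simp only [dvd_iff_eq hnm (show k ≤ n by omega) (show l ≤ n by omega)]
          by_cases h : k = l
          · subst h
            rw [if_pos rfl, if_pos rfl]
            ring
          · rw [if_neg h, if_neg (fun hh => h hh.symm), mul_zero]
        rw [Finset.sum_congr rfl step, Finset.sum_ite_eq' (range (n + 1)) k,
          if_pos (Finset.mem_range.2 (by omega))]
    _ = (m : ℂ) * ∑ k ∈ range (n + 1), ((n.choose k : ℂ) * a ^ k * b ^ (n - k)) ^ 2 := by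
        rw [Finset.mul_sum]
        exact Finset.sum_congr rfl fun k _ => mul_comm _ _

lemma key_real (n : ℕ) (x : ℝ) :
    ((2 * n + 1 : ℕ) : ℝ) * ∑ k ∈ range (n + 1), ((n.choose k : ℝ) * x ^ k * (1 - x) ^ (n - k)) ^ 2
      = ∑ j ∈ range (2 * n + 1),
          (x ^ 2 + (1 - x) ^ 2 + 2 * x * (1 - x)
            * (Complex.exp (2 * Real.pi * Complex.I / (2 * n + 1)) ^ j).re) ^ n := by
  set m := 2 * n + 1 with hmdef
  have hm0 : m ≠ 0 := by omega
  set ζ : ℂ := Complex.exp (2 * Real.pi * Complex.I / m) with hzeta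
  have hζ : IsPrimitiveRoot ζ m := Complex.isPrimitiveRoot_exp m hm0
  have hnm : n < m := by omega
  have key := key_complex hnm hζ (x : ℂ) ((1 - x : ℝ) : ℂ)
  have summand : ∀ j, ((x : ℂ) * ζ ^ j + ((1 - x : ℝ) : ℂ)) ^ n
        * ((x : ℂ) * ζ ^ (j * (m - 1)) + ((1 - x : ℝ) : ℂ)) ^ n
      = (((x ^ 2 + (1 - x) ^ 2 + 2 * x * (1 - x) * (ζ ^ j).re) ^ n : ℝ) : ℂ) := by
    intro j
    set w : ℂ := ζ ^ j with hw
    have hw1 : w ^ m = 1 := by rw [hw, ← pow_mul, mul_comm, pow_mul, hζ.pow_eq_one, one_pow]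
    have hwabs : ‖w‖ = 1 := Complex.norm_eq_one_of_pow_eq_one hw1 hm0
    have hpow : ζ ^ (j * (m - 1)) = w⁻¹ := by
      rw [pow_mul, ← hw]
      refine eq_inv_of_mul_eq_one_left ?_
      rw [← pow_succ]
      have : m - 1 + 1 = m := by omega
      rw [this, hw1]
    have hinv : w⁻¹ = (starRingEnd ℂ) w := Complex.inv_eq_conj hwabs
    set z : ℂ := (x : ℂ) * w + ((1 - x : ℝ) : ℂ) with hz
    have hconjz : (x : ℂ) * w⁻¹ + ((1 - x : ℝ) : ℂ) = (starRingEnd ℂ) z := by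
      rw [hinv, hz, map_add, map_mul, Complex.conj_ofReal, Complex.conj_ofReal]
    have hnsq : Complex.normSq w = 1 := by
      rw [Complex.normSq_eq_norm_sq, hwabs, one_pow]
    have hq : Complex.normSq z = x ^ 2 + (1 - x) ^ 2 + 2 * x * (1 - x) * w.re := by
      have him : w.re * w.re + w.im * w.im = 1 := by
        rw [← Complex.normSq_apply, hnsq]
      have hre : z.re = x * w.re + (1 - x) := by simp [hz]
      have him2 : z.im = x * w.im := by simp [hz]
      rw [Complex.normSq_apply, hre, him2]
      nlinarith [him]
    calc z ^ n * ((x : ℂ) * ζ ^ (j * (m - 1)) + ((1 - x : ℝ) : ℂ)) ^ n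
        = z ^ n * ((starRingEnd ℂ) z) ^ n := by rw [hpow, hconjz]
      _ = (z * (starRingEnd ℂ) z) ^ n := by rw [mul_pow]
      _ = ((Complex.normSq z : ℝ) : ℂ) ^ n := by rw [Complex.mul_conj]
      _ = (((x ^ 2 + (1 - x) ^ 2 + 2 * x * (1 - x) * w.re) ^ n : ℝ) : ℂ) := by
          rw [hq]; push_cast; ring
  rw [Finset.sum_congr rfl (fun j _ => summand j)] at key
  apply Complex.ofReal_injective
  push_cast at key ⊢
  rw [← key]
  have hcast : ((m : ℕ) : ℂ) = 2 * (n : ℂ) + 1 := by rw [hmdef]; push_cast; ring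
  rw [hzeta, hcast]

lemma quad_convex {c : ℝ} (hc : c ≤ 1) :
    ConvexOn ℝ Set.univ (fun x : ℝ => x ^ 2 + (1 - x) ^ 2 + 2 * x * (1 - x) * c) := by
  refine ⟨convex_univ, ?_⟩
  intro x _ y _ a b ha hb hab
  simp only [smul_eq_mul]
  have hid : a * (x ^ 2 + (1 - x) ^ 2 + 2 * x * (1 - x) * c)
        + b * (y ^ 2 + (1 - y) ^ 2 + 2 * y * (1 - y) * c)
        - ((a * x + b * y) ^ 2 + (1 - (a * x + b * y)) ^ 2
          + 2 * (a * x + b * y) * (1 - (a * x + b * y)) * c)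
      = (2 - 2 * c) * (a * b) * (x - y) ^ 2 := by
    have hb' : b = 1 - a := by linarith
    subst hb'
    ring
  have hpos : 0 ≤ (2 - 2 * c) * (a * b) * (x - y) ^ 2 :=
    mul_nonneg (mul_nonneg (by linarith) (mul_nonneg ha hb)) (sq_nonneg _)
  linarith [hid, hpos]

lemma quad_nonneg {c : ℝ} (hc1 : -1 ≤ c) (hc2 : c ≤ 1) (x : ℝ) :
    0 ≤ x ^ 2 + (1 - x) ^ 2 + 2 * x * (1 - x) * c := by
  nlinarith [mul_nonneg (sub_nonneg.2 hc2) (sq_nonneg (2 * x - 1)), sq_nonneg (2 * x - 1)]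

lemma convexOn_finset_sum {ι : Type*} (t : Finset ι) (f : ι → ℝ → ℝ)
    (h : ∀ i ∈ t, ConvexOn ℝ Set.univ (f i)) :
    ConvexOn ℝ Set.univ (fun x => ∑ i ∈ t, f i x) := by
  classical
  revert h
  refine Finset.induction_on t ?_ ?_
  · intro _
    simpa using convexOn_const (0 : ℝ) convex_univ
  · intro a s ha ih h
    simp only [Finset.sum_insert ha]
    exact (h a (Finset.mem_insert_self a s)).add
      (ih fun i hi => h i (Finset.mem_insert_of_mem hi))

theorem binomial_index_coincidence_convex (n : ℕ) (hn : 1 ≤ n) :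
    ConvexOn ℝ (Set.Icc (0:ℝ) 1) (fun x : ℝ => ∑ k ∈ Finset.range (n + 1),
      ((n.choose k : ℝ) * x ^ k * (1 - x) ^ (n - k)) ^ 2) := by
  have hm0 : ((2 * n + 1 : ℕ) : ℝ) ≠ 0 := by positivity
  have hrep : (fun x : ℝ => ∑ k ∈ Finset.range (n + 1),
        ((n.choose k : ℝ) * x ^ k * (1 - x) ^ (n - k)) ^ 2)
      = fun x : ℝ => (((2 * n + 1 : ℕ) : ℝ))⁻¹ * ∑ j ∈ range (2 * n + 1),
          (x ^ 2 + (1 - x) ^ 2 + 2 * x * (1 - x)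
            * (Complex.exp (2 * Real.pi * Complex.I / (2 * n + 1)) ^ j).re) ^ n := by
    funext x
    rw [← key_real n x, inv_mul_cancel_left₀ hm0]
  rw [hrep]
  have hconv : ConvexOn ℝ Set.univ (fun x : ℝ => (((2 * n + 1 : ℕ) : ℝ))⁻¹
      * ∑ j ∈ range (2 * n + 1), (x ^ 2 + (1 - x) ^ 2 + 2 * x * (1 - x)
        * (Complex.exp (2 * Real.pi * Complex.I / (2 * n + 1)) ^ j).re) ^ n) := by
    have hsum : ConvexOn ℝ Set.univ (fun x : ℝ => ∑ j ∈ range (2 * n + 1),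
        (x ^ 2 + (1 - x) ^ 2 + 2 * x * (1 - x)
          * (Complex.exp (2 * Real.pi * Complex.I / (2 * n + 1)) ^ j).re) ^ n) := by
      refine convexOn_finset_sum _ _ fun j _ => ?_
      set ζ : ℂ := Complex.exp (2 * Real.pi * Complex.I / (2 * n + 1)) with hzeta
      have hζ : IsPrimitiveRoot ζ (2 * n + 1) := by
        have := Complex.isPrimitiveRoot_exp (2 * n + 1) (by omega)
        convert this using 2
        push_cast
        ring
      have h1 : (ζ ^ j) ^ (2 * n + 1) = 1 := by
        rw [← pow_mul, mul_comm, pow_mul, hζ.pow_eq_one, one_pow]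
      have habs : ‖ζ ^ j‖ = 1 :=
        Complex.norm_eq_one_of_pow_eq_one h1 (by omega)
      have hre : |(ζ ^ j).re| ≤ 1 := by rw [← habs]; exact Complex.abs_re_le_norm _
      rw [abs_le] at hre
      exact (quad_convex hre.2).pow (fun x _ => quad_nonneg hre.1 hre.2 x) n
    exact hsum.smul (by positivity)
  exact hconv.subset (Set.subset_univ _) (convex_Icc 0 1)
end

section
/- For real n > 0, the function S(x) = ∑_{k=0}^∞ (C(n+k-1, k) x^k (1+x)^{-n-k})² is completely monotonic on [0, ∞): (-1)^m S^{(m)}(x) > 0 for all x ≥ 0 and all integers m ≥ 0. Consequently S is logarithmically convex, the Rényi entropy R = -log S is increasing and concave, and the derivative of the Tsallis entropy T = 1 - S is completely monotonic. -/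
open Real Finset MeasureTheory Set Filter
open scoped ENNReal Topology

namespace NBCM

/-- the summand of the index-of-coincidence series -/
noncomputable def qk (n x : ℝ) (k : ℕ) : ℝ :=
  (((∏ i ∈ Finset.range k, (n + i)) / (Nat.factorial k)) * x ^ k * (1 + x) ^ (-n - k)) ^ 2

noncomputable def Sfun (n : ℝ) : ℝ → ℝ := fun y : ℝ => ∑' k : ℕ, qk n y k

noncomputable def phi (p : ℝ × ℝ × ℝ) : ℝ :=
  p.1 + p.2.1 - 2 * Real.sqrt (p.1 * p.2.1) * Real.cos p.2.2

def box : Set (ℝ × ℝ × ℝ) := (Set.Ioi 0) ×ˢ ((Set.Ioi 0) ×ˢ (Set.Ioc 0 π))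

noncomputable def dens (n : ℝ) (p : ℝ × ℝ × ℝ) : ℝ :=
  p.1 ^ (n - 1) * Real.exp (-p.1) * (p.2.1 ^ (n - 1) * Real.exp (-p.2.1)) /
    (π * Real.Gamma n ^ 2)

noncomputable def dens2 (n x : ℝ) (p : ℝ × ℝ × ℝ) : ℝ :=
  p.1 ^ (n - 1) * Real.exp (-((1 + x) * p.1)) *
    (p.2.1 ^ (n - 1) * Real.exp (-((1 + x) * p.2.1))) / (π * Real.Gamma n ^ 2)

noncomputable def uu (x : ℝ) (p : ℝ × ℝ × ℝ) : ℝ :=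
  2 * Real.sqrt (p.1 * p.2.1) * x * Real.cos p.2.2

noncomputable def gk (n x : ℝ) (k : ℕ) (p : ℝ × ℝ × ℝ) : ℝ :=
  uu x p ^ (2 * k) / ((2 * k).factorial : ℝ) * dens2 n x p

noncomputable def G (n : ℝ) (m : ℕ) (x : ℝ) : ℝ≥0∞ :=
  ∫⁻ p in box, ENNReal.ofReal (phi p ^ m * Real.exp (-x * phi p) * dens n p)

noncomputable def Fm (n : ℝ) (m : ℕ) (x : ℝ) : ℝ :=
  ∫ p in box, phi p ^ m * Real.exp (-x * phi p) * dens n p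

lemma measurable_phi : Measurable phi := by
  apply Measurable.sub
  · exact measurable_fst.add (measurable_snd.fst)
  · exact (((measurable_const.mul (measurable_fst.mul measurable_snd.fst).sqrt)).mul
      measurable_snd.snd.cos)

lemma measurable_dens (n : ℝ) : Measurable (dens n) := by
  unfold dens
  fun_prop

lemma measurable_dens2 (n x : ℝ) : Measurable (dens2 n x) := by
  unfold dens2
  fun_prop

lemma measurable_uu (x : ℝ) : Measurable (uu x) := by
  unfold uu
  fun_prop

lemma measurable_gk (n x : ℝ) (k : ℕ) : Measurable (gk n x k) := by
  unfold gk uu dens2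
  fun_prop

lemma measurable_integrand (n : ℝ) (m : ℕ) (x : ℝ) :
    Measurable (fun p => phi p ^ m * Real.exp (-x * phi p) * dens n p) := by
  unfold phi dens
  fun_prop

lemma meas_rpow_exp (a c : ℝ) :
    Measurable (fun s : ℝ => ENNReal.ofReal (s ^ (a - 1) * Real.exp (-(c * s)))) := by
  apply Measurable.ennreal_ofReal
  exact ((measurable_id.pow (measurable_const : Measurable fun _ : ℝ => a - 1)).mul
    (((measurable_const : Measurable fun _ : ℝ => c).mul measurable_id).neg.exp))

lemma mbox : MeasurableSet box :=
  measurableSet_Ioi.prod (measurableSet_Ioi.prod measurableSet_Ioc)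

lemma sqrt_facts {p : ℝ × ℝ × ℝ} (hp : p ∈ box) :
    Real.sqrt (p.1 * p.2.1) = Real.sqrt p.1 * Real.sqrt p.2.1 ∧
    Real.sqrt p.1 ^ 2 = p.1 ∧ Real.sqrt p.2.1 ^ 2 = p.2.1 := by
  obtain ⟨hs, ht, hθ⟩ := hp
  exact ⟨Real.sqrt_mul (le_of_lt hs) _, Real.sq_sqrt (le_of_lt hs), Real.sq_sqrt (le_of_lt ht)⟩

lemma phi_nonneg {p : ℝ × ℝ × ℝ} (hp : p ∈ box) : 0 ≤ phi p := by
  obtain ⟨e0, e1, e2⟩ := sqrt_facts hp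
  have h1 : Real.cos p.2.2 ≤ 1 := Real.cos_le_one _
  have s1 : 0 ≤ Real.sqrt p.1 := Real.sqrt_nonneg _
  have s2 : 0 ≤ Real.sqrt p.2.1 := Real.sqrt_nonneg _
  unfold phi
  rw [e0]
  nlinarith [sq_nonneg (Real.sqrt p.1 - Real.sqrt p.2.1), mul_nonneg s1 s2,
    mul_nonneg (mul_nonneg s1 s2) (sub_nonneg.2 h1)]

lemma phi_le {p : ℝ × ℝ × ℝ} (hp : p ∈ box) : phi p ≤ 2 * (p.1 + p.2.1) := by
  obtain ⟨e0, e1, e2⟩ := sqrt_facts hp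
  have h2 : -1 ≤ Real.cos p.2.2 := Real.neg_one_le_cos _
  have s1 : 0 ≤ Real.sqrt p.1 := Real.sqrt_nonneg _
  have s2 : 0 ≤ Real.sqrt p.2.1 := Real.sqrt_nonneg _
  unfold phi
  rw [e0]
  nlinarith [sq_nonneg (Real.sqrt p.1 - Real.sqrt p.2.1), mul_nonneg s1 s2,
    mul_nonneg (mul_nonneg s1 s2) (by linarith : (0:ℝ) ≤ 1 + Real.cos p.2.2)]

lemma dens_nonneg {n : ℝ} (hn : 0 < n) {p : ℝ × ℝ × ℝ} (hp : p ∈ box) : 0 ≤ dens n p := by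
  obtain ⟨hs, ht, hθ⟩ := hp
  have hΓ : 0 < Real.Gamma n := Real.Gamma_pos_of_pos hn
  unfold dens
  have h1 : (0:ℝ) ≤ p.1 ^ (n-1) := Real.rpow_nonneg (le_of_lt hs) _
  have h2 : (0:ℝ) ≤ p.2.1 ^ (n-1) := Real.rpow_nonneg (le_of_lt ht) _
  positivity

lemma dens2_nonneg {n : ℝ} (hn : 0 < n) (x : ℝ) {p : ℝ × ℝ × ℝ} (hp : p ∈ box) :
    0 ≤ dens2 n x p := by
  obtain ⟨hs, ht, hθ⟩ := hp
  have hΓ : 0 < Real.Gamma n := Real.Gamma_pos_of_pos hn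
  unfold dens2
  have h1 : (0:ℝ) ≤ p.1 ^ (n-1) := Real.rpow_nonneg (le_of_lt hs) _
  have h2 : (0:ℝ) ≤ p.2.1 ^ (n-1) := Real.rpow_nonneg (le_of_lt ht) _
  positivity

/-- the product measure decomposition of `volume.restrict box` -/
lemma box_restrict :
    ((volume.restrict (Ioi (0:ℝ))).prod
      ((volume.restrict (Ioi (0:ℝ))).prod (volume.restrict (Ioc (0:ℝ) π))))
      = (volume : Measure (ℝ × ℝ × ℝ)).restrict box := by
  rw [Measure.prod_restrict, Measure.prod_restrict, ← Measure.volume_eq_prod,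
    ← Measure.volume_eq_prod]
  rfl

lemma lint_box (f g h : ℝ → ℝ≥0∞) (hf : Measurable f) (hg : Measurable g) (hh : Measurable h) :
    ∫⁻ p in box, f p.1 * g p.2.1 * h p.2.2 =
      (∫⁻ s in Ioi (0:ℝ), f s) * (∫⁻ t in Ioi (0:ℝ), g t) * (∫⁻ θ in Ioc (0:ℝ) π, h θ) := by
  rw [← box_restrict]
  have e1 : ∀ p : ℝ × ℝ × ℝ, f p.1 * g p.2.1 * h p.2.2 = f p.1 * (g p.2.1 * h p.2.2) :=
    fun p => mul_assoc _ _ _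
  simp_rw [e1]
  calc ∫⁻ p : ℝ × ℝ × ℝ, f p.1 * (g p.2.1 * h p.2.2)
        ∂((volume.restrict (Ioi (0:ℝ))).prod
          ((volume.restrict (Ioi (0:ℝ))).prod (volume.restrict (Ioc (0:ℝ) π))))
      = (∫⁻ s in Ioi (0:ℝ), f s) *
        ∫⁻ q : ℝ × ℝ, g q.1 * h q.2
          ∂((volume.restrict (Ioi (0:ℝ))).prod (volume.restrict (Ioc (0:ℝ) π))) :=
        MeasureTheory.lintegral_prod_mul hf.aemeasurable
          ((hg.comp measurable_fst).mul (hh.comp measurable_snd)).aemeasurable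
    _ = (∫⁻ s in Ioi (0:ℝ), f s) *
        ((∫⁻ t in Ioi (0:ℝ), g t) * ∫⁻ θ in Ioc (0:ℝ) π, h θ) := by
        rw [MeasureTheory.lintegral_prod_mul hg.aemeasurable hh.aemeasurable]
    _ = _ := by rw [mul_assoc]

lemma lint_box_iter (f : ℝ × ℝ × ℝ → ℝ≥0∞) (hf : Measurable f) :
    ∫⁻ p in box, f p =
      ∫⁻ s in Ioi (0:ℝ), ∫⁻ t in Ioi (0:ℝ), ∫⁻ θ in Ioc (0:ℝ) π, f (s, t, θ) := by
  rw [← box_restrict]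
  rw [MeasureTheory.lintegral_prod _ hf.aemeasurable]
  congr 1
  funext s
  exact MeasureTheory.lintegral_prod (fun y => f (s, y))
    (hf.comp (measurable_prodMk_left)).aemeasurable

/-- Gamma integral, `ℝ≥0∞` version -/
lemma integrableOn_gamma {a c : ℝ} (ha : 0 < a) (hc : 0 < c) :
    IntegrableOn (fun s : ℝ => s ^ (a - 1) * Real.exp (-(c * s))) (Ioi 0) := by
  have h := integrableOn_rpow_mul_exp_neg_mul_rpow (p := 1) (s := a - 1) (b := c)
    (by linarith) one_pos hc
  refine h.congr_fun (fun s hs => ?_) measurableSet_Ioi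
  beta_reduce
  rw [Real.rpow_one]
  ring_nf

lemma lint_gamma {a c : ℝ} (ha : 0 < a) (hc : 0 < c) :
    ∫⁻ s in Ioi (0:ℝ), ENNReal.ofReal (s ^ (a - 1) * Real.exp (-(c * s)))
      = ENNReal.ofReal ((1 / c) ^ a * Real.Gamma a) := by
  rw [← MeasureTheory.ofReal_integral_eq_lintegral_ofReal (integrableOn_gamma ha hc)]
  · rw [Real.integral_rpow_mul_exp_neg_mul_Ioi ha hc]
  · filter_upwards [ae_restrict_mem measurableSet_Ioi] with s hs
    have : (0:ℝ) ≤ s ^ (a-1) := Real.rpow_nonneg (le_of_lt hs) _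
    positivity

/-- Wallis-type formula -/
lemma wallis_prod (k : ℕ) :
    ∏ i ∈ Finset.range k, ((2 * (i:ℝ) + 1) / (2 * i + 2))
      = ((2 * k).factorial : ℝ) / ((k.factorial : ℝ) ^ 2 * 4 ^ k) := by
  induction k with
  | zero => simp
  | succ k ih =>
    rw [Finset.prod_range_succ, ih]
    have h1 : ((2 * (k+1)).factorial : ℝ)
        = (2 * k + 2) * ((2 * k + 1) * ((2 * k).factorial : ℝ)) := by
      have : 2 * (k+1) = (2 * k + 1) + 1 := by ring
      rw [this]
      push_cast [Nat.factorial_succ]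
      ring
    have h2 : ((k+1).factorial : ℝ) = (k + 1) * (k.factorial : ℝ) := by
      push_cast [Nat.factorial_succ]; ring
    have hf1 : ((k.factorial : ℝ)) ≠ 0 := by positivity
    have hf2 : ((2*k).factorial : ℝ) ≠ 0 := by positivity
    rw [h1, h2]
    field_simp
    ring

lemma W_eq (k : ℕ) :
    ∫ θ in (0:ℝ)..π, Real.cos θ ^ (2 * k)
      = π * (((2 * k).factorial : ℝ) / ((k.factorial : ℝ) ^ 2 * 4 ^ k)) := by
  have hsplit : ∫ θ in (0:ℝ)..π, Real.cos θ ^ (2 * k)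
      = (∫ θ in (0:ℝ)..(π/2), Real.cos θ ^ (2 * k))
        + ∫ θ in (π/2)..π, Real.cos θ ^ (2 * k) := by
    rw [intervalIntegral.integral_add_adjacent_intervals] <;>
      exact (Real.continuous_cos.pow _).intervalIntegrable _ _
  have hsecond : ∫ θ in (π/2)..π, Real.cos θ ^ (2 * k)
      = ∫ θ in (0:ℝ)..(π/2), Real.cos θ ^ (2 * k) := by
    have := intervalIntegral.integral_comp_sub_left (a := (0:ℝ)) (b := π/2)
      (fun θ => Real.cos θ ^ (2 * k)) π
    rw [show π - π/2 = π/2 by ring, show π - 0 = π by ring] at this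
    rw [← this]
    refine intervalIntegral.integral_congr (fun θ _ => ?_)
    rw [Real.cos_pi_sub]
    rw [show 2 * k = 2 * k from rfl]
    rw [neg_pow, pow_mul, pow_mul]
    simp [neg_pow]
  rw [hsplit, hsecond, ← two_mul, EulerSine.integral_cos_pow_eq, ← mul_assoc]
  norm_num
  rw [integral_sin_pow_even, wallis_prod]

lemma lint_cos (k : ℕ) :
    ∫⁻ θ in Ioc (0:ℝ) π, ENNReal.ofReal (Real.cos θ ^ (2 * k))
      = ENNReal.ofReal (π * (((2 * k).factorial : ℝ) / ((k.factorial : ℝ) ^ 2 * 4 ^ k))) := by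
  rw [← W_eq k, intervalIntegral.integral_of_le Real.pi_pos.le]
  rw [← MeasureTheory.ofReal_integral_eq_lintegral_ofReal]
  · exact (Real.continuous_cos.pow _).integrableOn_Ioc
  · filter_upwards with θ
    rw [pow_mul]
    positivity

lemma prod_eq_Gamma {n : ℝ} (hn : 0 < n) (k : ℕ) :
    ∏ i ∈ Finset.range k, (n + i) = Real.Gamma (n + k) / Real.Gamma n := by
  have hΓ : Real.Gamma n ≠ 0 := (Real.Gamma_pos_of_pos hn).ne'
  induction k with
  | zero => simp [div_self hΓ]
  | succ k ih =>
    rw [Finset.prod_range_succ, ih]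
    have hpos : (0:ℝ) < n + k := by positivity
    have : Real.Gamma (n + (k+1 : ℕ)) = (n + k) * Real.Gamma (n + k) := by
      have := Real.Gamma_add_one hpos.ne'
      push_cast
      rw [show n + ((k:ℝ) + 1) = (n + k) + 1 by ring, this]
    rw [this]
    field_simp

/-- the crucial per-`k` identity -/
lemma per_k {n : ℝ} (hn : 0 < n) {x : ℝ} (hx : -1 < x) (k : ℕ) :
    ∫⁻ p in box, ENNReal.ofReal (gk n x k p) = ENNReal.ofReal (qk n x k) := by
  have hΓ : 0 < Real.Gamma n := Real.Gamma_pos_of_pos hn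
  have h1x : (0:ℝ) < 1 + x := by linarith
  have ha : (0:ℝ) < n + k := by positivity
  set a : ℝ := n + (k:ℝ) with ha_def
  set Ck : ℝ := (4 * x ^ 2) ^ k / (((2*k).factorial : ℝ) * (π * Real.Gamma n ^ 2)) with hCk
  have hfac : ((2*k).factorial : ℝ) ≠ 0 := by positivity
  have hCk0 : (0:ℝ) ≤ Ck := by positivity
  have step1 : ∫⁻ p in box, ENNReal.ofReal (gk n x k p)
      = ∫⁻ p in box, (ENNReal.ofReal (p.1 ^ (a - 1) * Real.exp (-((1+x) * p.1))))
          * ENNReal.ofReal (p.2.1 ^ (a - 1) * Real.exp (-((1+x) * p.2.1)))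
          * ENNReal.ofReal (Ck * Real.cos p.2.2 ^ (2*k)) := by
    refine setLIntegral_congr_fun mbox (fun p hp => ?_)
    obtain ⟨hs, ht, hθ⟩ := hp
    have hB1 : (0:ℝ) ≤ p.1 ^ (a - 1) * Real.exp (-((1+x) * p.1)) := by
      have := Real.rpow_nonneg (le_of_lt hs) (a - 1); positivity
    have hB2 : (0:ℝ) ≤ p.2.1 ^ (a - 1) * Real.exp (-((1+x) * p.2.1)) := by
      have := Real.rpow_nonneg (le_of_lt ht) (a - 1); positivity
    rw [← ENNReal.ofReal_mul hB1, ← ENNReal.ofReal_mul (mul_nonneg hB1 hB2)]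
    congr 1
    have er1 : p.1 ^ (a - 1) = p.1 ^ (n - 1) * p.1 ^ (k:ℕ) := by
      rw [← Real.rpow_natCast p.1 k, ← Real.rpow_add hs]
      congr 1; rw [ha_def]; ring
    have er2 : p.2.1 ^ (a - 1) = p.2.1 ^ (n - 1) * p.2.1 ^ (k:ℕ) := by
      rw [← Real.rpow_natCast p.2.1 k, ← Real.rpow_add ht]
      congr 1; rw [ha_def]; ring
    have key : (2 * Real.sqrt (p.1 * p.2.1) * x * Real.cos p.2.2) ^ (2*k)
        = 4 ^ k * (p.1 ^ k * p.2.1 ^ k) * (x ^ 2) ^ k * Real.cos p.2.2 ^ (2*k) := by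
      rw [pow_mul, pow_mul,
        show (2 * Real.sqrt (p.1 * p.2.1) * x * Real.cos p.2.2) ^ 2
          = 4 * (p.1 * p.2.1) * x ^ 2 * Real.cos p.2.2 ^ 2 by
          rw [mul_pow, mul_pow, mul_pow,
            Real.sq_sqrt (mul_nonneg (le_of_lt hs) (le_of_lt ht))]; ring,
        mul_pow, mul_pow, mul_pow, mul_pow]
    unfold gk uu dens2
    rw [er1, er2, key, hCk]
    have hπ : (π : ℝ) ≠ 0 := Real.pi_pos.ne'
    field_simp
    ring
  rw [step1]
  rw [lint_box (fun s => ENNReal.ofReal (s ^ (a - 1) * Real.exp (-((1+x) * s))))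
    (fun t => ENNReal.ofReal (t ^ (a - 1) * Real.exp (-((1+x) * t))))
    (fun θ => ENNReal.ofReal (Ck * Real.cos θ ^ (2*k)))
    (meas_rpow_exp a (1+x)) (meas_rpow_exp a (1+x))
    ((measurable_const.mul (Real.measurable_cos.pow_const _)).ennreal_ofReal)]
  rw [lint_gamma ha h1x]
  have hcos : ∫⁻ θ in Ioc (0:ℝ) π, ENNReal.ofReal (Ck * Real.cos θ ^ (2*k))
      = ENNReal.ofReal (Ck * (π * (((2 * k).factorial : ℝ) / ((k.factorial : ℝ) ^ 2 * 4 ^ k)))) := by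
    simp_rw [ENNReal.ofReal_mul hCk0]
    rw [lintegral_const_mul' _ _ ENNReal.ofReal_ne_top, lint_cos]
  rw [hcos]
  rw [← ENNReal.ofReal_mul (by positivity), ← ENNReal.ofReal_mul (by positivity)]
  congr 1
  -- final scalar identity
  have hπ : (π : ℝ) ≠ 0 := Real.pi_pos.ne'
  have hΓ' : Real.Gamma n ≠ 0 := hΓ.ne'
  have hkf : ((k.factorial : ℝ)) ≠ 0 := by positivity
  have h4k : ((4:ℝ) ^ k) ≠ 0 := by positivity
  have hE : (1 / (1+x)) ^ a = (1+x) ^ (-n - (k:ℝ)) := by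
    rw [one_div, Real.inv_rpow (le_of_lt h1x), ← Real.rpow_neg (le_of_lt h1x)]
    congr 1; rw [ha_def]; ring
  unfold qk
  rw [prod_eq_Gamma hn k, hE, hCk]
  rw [ha_def]
  field_simp
  ring

lemma inner_theta (b K : ℝ) (hK : 0 ≤ K) :
    ∫⁻ θ in Ioc (0:ℝ) π, ENNReal.ofReal (Real.cosh (b * Real.cos θ) * K)
      = ∫⁻ θ in Ioc (0:ℝ) π, ENNReal.ofReal (Real.exp (b * Real.cos θ) * K) := by
  have hc1 : Continuous fun θ : ℝ => Real.cosh (b * Real.cos θ) := by fun_prop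
  have hc2 : Continuous fun θ : ℝ => Real.exp (b * Real.cos θ) := by fun_prop
  have base : ∫ θ in (0:ℝ)..π, Real.exp (b * Real.cos (π - θ))
      = ∫ θ in (0:ℝ)..π, Real.exp (b * Real.cos θ) := by
    have h := intervalIntegral.integral_comp_sub_left (a := (0:ℝ)) (b := π)
      (fun θ => Real.exp (b * Real.cos θ)) π
    rw [show π - π = (0:ℝ) by ring, show π - 0 = π by ring] at h
    exact h
  have real_eq : ∫ θ in (0:ℝ)..π, Real.cosh (b * Real.cos θ)
      = ∫ θ in (0:ℝ)..π, Real.exp (b * Real.cos θ) := by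
    have h1 : ∀ θ : ℝ, Real.cosh (b * Real.cos θ)
        = (Real.exp (b * Real.cos θ) + Real.exp (b * Real.cos (π - θ))) / 2 := by
      intro θ
      rw [Real.cos_pi_sub, Real.cosh_eq]
      ring_nf
    rw [intervalIntegral.integral_congr (fun θ _ => h1 θ)]
    rw [intervalIntegral.integral_div]
    have i2 : IntervalIntegrable (fun θ : ℝ => Real.exp (b * Real.cos (π - θ))) volume 0 π :=
      (by fun_prop : Continuous fun θ : ℝ => Real.exp (b * Real.cos (π - θ))).intervalIntegrable _ _
    rw [intervalIntegral.integral_add (hc2.intervalIntegrable _ _) i2, base]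
    ring
  have conv : ∀ f : ℝ → ℝ, Continuous f → (∀ θ, 0 < f θ) →
      ∫⁻ θ in Ioc (0:ℝ) π, ENNReal.ofReal (f θ * K)
        = ENNReal.ofReal ((∫ θ in (0:ℝ)..π, f θ) * K) := by
    intro f hf hpos
    rw [intervalIntegral.integral_of_le Real.pi_pos.le, ← integral_mul_const]
    rw [MeasureTheory.ofReal_integral_eq_lintegral_ofReal]
    · exact ((hf.mul continuous_const).integrableOn_Ioc)
    · filter_upwards with θ
      exact mul_nonneg (hpos θ).le hK
  rw [conv _ hc1 (fun θ => Real.cosh_pos _), conv _ hc2 (fun θ => Real.exp_pos _), real_eq]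

lemma cosh_to_exp {n : ℝ} (hn : 0 < n) (x : ℝ) :
    ∫⁻ p in box, ENNReal.ofReal (Real.cosh (uu x p) * dens2 n x p)
      = ∫⁻ p in box, ENNReal.ofReal (Real.exp (uu x p) * dens2 n x p) := by
  have m1 : Measurable fun p : ℝ × ℝ × ℝ => ENNReal.ofReal (Real.cosh (uu x p) * dens2 n x p) := by
    apply Measurable.ennreal_ofReal
    exact ((measurable_uu x).cosh.mul (measurable_dens2 n x))
  have m2 : Measurable fun p : ℝ × ℝ × ℝ => ENNReal.ofReal (Real.exp (uu x p) * dens2 n x p) := by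
    apply Measurable.ennreal_ofReal
    exact ((measurable_uu x).exp.mul (measurable_dens2 n x))
  rw [lint_box_iter _ m1, lint_box_iter _ m2]
  refine setLIntegral_congr_fun measurableSet_Ioi (fun s hs => ?_)
  refine setLIntegral_congr_fun measurableSet_Ioi (fun t ht => ?_)
  have hK : 0 ≤ s ^ (n - 1) * Real.exp (-((1 + x) * s)) *
      (t ^ (n - 1) * Real.exp (-((1 + x) * t))) / (π * Real.Gamma n ^ 2) := by
    have h1 : (0:ℝ) ≤ s ^ (n-1) := Real.rpow_nonneg (le_of_lt hs) _
    have h2 : (0:ℝ) ≤ t ^ (n-1) := Real.rpow_nonneg (le_of_lt ht) _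
    have hΓ : 0 < Real.Gamma n := Real.Gamma_pos_of_pos hn
    positivity
  exact inner_theta (2 * Real.sqrt (s * t) * x) _ hK

/-- main identity, `ℝ≥0∞` version -/
lemma sum_qk_eq_G {n : ℝ} (hn : 0 < n) {x : ℝ} (hx : -1 < x) :
    ∑' k, ENNReal.ofReal (qk n x k) = G n 0 x := by
  have step1 : ∀ k, ENNReal.ofReal (qk n x k) = ∫⁻ p in box, ENNReal.ofReal (gk n x k p) :=
    fun k => (per_k hn hx k).symm
  simp_rw [step1]
  rw [← MeasureTheory.lintegral_tsum (fun k => (measurable_gk n x k).ennreal_ofReal.aemeasurable)]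
  have step2 : ∫⁻ p in box, ∑' k, ENNReal.ofReal (gk n x k p)
      = ∫⁻ p in box, ENNReal.ofReal (Real.cosh (uu x p) * dens2 n x p) := by
    refine setLIntegral_congr_fun mbox (fun p hp => ?_)
    have hD : 0 ≤ dens2 n x p := dens2_nonneg hn x hp
    have hnn : ∀ k : ℕ, 0 ≤ gk n x k p := by
      intro k
      unfold gk
      have : (0:ℝ) ≤ uu x p ^ (2*k) := by
        rw [pow_mul]
        positivity
      positivity
    have hsum : Summable (fun k : ℕ => uu x p ^ (2*k) / (((2*k).factorial : ℝ)) * dens2 n x p) :=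
      (Real.hasSum_cosh (uu x p)).summable.mul_right _
    rw [← ENNReal.ofReal_tsum_of_nonneg hnn hsum]
    congr 1
    unfold gk
    rw [tsum_mul_right, (Real.hasSum_cosh (uu x p)).tsum_eq]
  rw [step2, cosh_to_exp hn x]
  unfold G
  refine setLIntegral_congr_fun mbox (fun p hp => ?_)
  congr 1
  have eA : Real.exp (uu x p) * (Real.exp (-((1+x) * p.1)) * Real.exp (-((1+x) * p.2.1)))
      = Real.exp (-x * phi p) * (Real.exp (-p.1) * Real.exp (-p.2.1)) := by
    rw [← Real.exp_add, ← Real.exp_add, ← Real.exp_add, ← Real.exp_add]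
    congr 1
    unfold phi uu
    ring
  rw [pow_zero, one_mul]
  unfold dens dens2
  linear_combination (p.1 ^ (n-1) * p.2.1 ^ (n-1) / (π * Real.Gamma n ^ 2)) * eA

lemma pow_le_factorial_mul_exp {u : ℝ} (hu : 0 ≤ u) (m : ℕ) :
    u ^ m ≤ (m.factorial : ℝ) * Real.exp u := by
  have h1 : u ^ m / (m.factorial : ℝ) ≤ Real.exp u := by
    refine le_trans ?_ (Real.sum_le_exp_of_nonneg hu (m+1))
    exact Finset.single_le_sum (f := fun i => u ^ i / (i.factorial : ℝ))
      (fun i _ => by positivity) (Finset.self_mem_range_succ m)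
  have hfp : (0:ℝ) < (m.factorial : ℝ) := by positivity
  calc u ^ m = (m.factorial : ℝ) * (u ^ m / (m.factorial : ℝ)) := by field_simp
  _ ≤ (m.factorial : ℝ) * Real.exp u := by
      exact mul_le_mul_of_nonneg_left h1 hfp.le

lemma G_lt_top {n : ℝ} (hn : 0 < n) (m : ℕ) {a : ℝ} (ha : -(1/2 : ℝ) < a) :
    G n m a < ⊤ := by
  have hΓ : 0 < Real.Gamma n := Real.Gamma_pos_of_pos hn
  set δ : ℝ := (2*a+1)/4 with hδ_def
  have hδ : 0 < δ := by rw [hδ_def]; linarith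
  set b : ℝ := a - δ with hb_def
  have hbhalf : -(1/2 : ℝ) < b := by rw [hb_def, hδ_def]; linarith
  set c : ℝ := 2 * max 0 (-b) with hc_def
  have hc0 : 0 ≤ c := by rw [hc_def]; positivity
  have hc1 : c < 1 := by
    rw [hc_def]
    rcases max_cases 0 (-b) with ⟨h1, h2⟩ | ⟨h1, h2⟩ <;> rw [h1] <;> linarith
  set CC : ℝ := (m.factorial : ℝ) / δ ^ m / (π * Real.Gamma n ^ 2) with hCC_def
  have hCC0 : 0 ≤ CC := by rw [hCC_def]; positivity
  have key : ∀ p ∈ box, phi p ^ m * Real.exp (-a * phi p) * dens n p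
      ≤ p.1 ^ (n - 1) * Real.exp (-((1 - c) * p.1)) *
        (p.2.1 ^ (n - 1) * Real.exp (-((1 - c) * p.2.1))) * CC := by
    intro p hp
    have hφ0 := phi_nonneg hp
    have hφle := phi_le hp
    obtain ⟨hs, ht, hθ⟩ := hp
    have hsp : (0:ℝ) < p.1 := hs
    have htp : (0:ℝ) < p.2.1 := ht
    have hd0 : 0 ≤ dens n p := dens_nonneg hn ⟨hs, ht, hθ⟩
    have e1 : phi p ^ m ≤ ((m.factorial : ℝ) / δ ^ m) * Real.exp (δ * phi p) := by
      have h := pow_le_factorial_mul_exp (mul_nonneg hδ.le hφ0) m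
      rw [mul_pow] at h
      rw [div_mul_eq_mul_div, le_div_iff₀ (by positivity)]
      calc phi p ^ m * δ ^ m = δ ^ m * phi p ^ m := by ring
        _ ≤ (m.factorial : ℝ) * Real.exp (δ * phi p) := h
    have e2 : Real.exp (δ * phi p) * Real.exp (-a * phi p) = Real.exp (-b * phi p) := by
      rw [← Real.exp_add]; congr 1; rw [hb_def]; ring
    have e3 : -b * phi p ≤ c * (p.1 + p.2.1) := by
      have h1 : -b * phi p ≤ max 0 (-b) * phi p :=
        mul_le_mul_of_nonneg_right (le_max_right _ _) hφ0
      have h2 : max 0 (-b) * phi p ≤ max 0 (-b) * (2 * (p.1 + p.2.1)) :=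
        mul_le_mul_of_nonneg_left hφle (le_max_left _ _)
      rw [hc_def]
      nlinarith [h1, h2]
    have e4 : Real.exp (-b * phi p) ≤ Real.exp (c * (p.1 + p.2.1)) := Real.exp_le_exp.2 e3
    have eE : Real.exp (c * (p.1 + p.2.1)) * (Real.exp (-p.1) * Real.exp (-p.2.1))
        = Real.exp (-((1 - c) * p.1)) * Real.exp (-((1 - c) * p.2.1)) := by
      rw [← Real.exp_add, ← Real.exp_add, ← Real.exp_add]; congr 1; ring
    calc phi p ^ m * Real.exp (-a * phi p) * dens n p
        ≤ (((m.factorial : ℝ) / δ ^ m) * Real.exp (δ * phi p)) * Real.exp (-a * phi p)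
            * dens n p := by
          refine mul_le_mul_of_nonneg_right
            (mul_le_mul_of_nonneg_right e1 (Real.exp_nonneg _)) hd0
      _ = ((m.factorial : ℝ) / δ ^ m) * Real.exp (-b * phi p) * dens n p := by
          rw [mul_assoc ((m.factorial : ℝ) / δ ^ m), e2]
      _ ≤ ((m.factorial : ℝ) / δ ^ m) * Real.exp (c * (p.1 + p.2.1)) * dens n p := by
          refine mul_le_mul_of_nonneg_right
            (mul_le_mul_of_nonneg_left e4 (by positivity)) hd0
      _ = p.1 ^ (n - 1) * Real.exp (-((1 - c) * p.1)) *
            (p.2.1 ^ (n - 1) * Real.exp (-((1 - c) * p.2.1))) * CC := by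
          unfold dens
          rw [hCC_def]
          have hπ : (π:ℝ) ≠ 0 := Real.pi_pos.ne'
          field_simp
          rw [show p.1 * (1 - c) = (1 - c) * p.1 by ring, show p.2.1 * (1 - c) = (1 - c) * p.2.1 by ring]
          linear_combination eE
  have mono : G n m a ≤ ∫⁻ p in box,
      (fun s => ENNReal.ofReal (s ^ (n - 1) * Real.exp (-((1-c) * s)))) p.1 *
      (fun t => ENNReal.ofReal (t ^ (n - 1) * Real.exp (-((1-c) * t)))) p.2.1 *
      (fun _ : ℝ => ENNReal.ofReal CC) p.2.2 := by
    unfold G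
    refine lintegral_mono_ae ((ae_restrict_iff' mbox).2 (ae_of_all _ (fun p hp => ?_)))
    simp only
    have hx1 : (0:ℝ) ≤ p.1 ^ (n-1) * Real.exp (-((1-c) * p.1)) := by
      have := Real.rpow_nonneg (le_of_lt hp.1) (n-1); positivity
    have hx2 : (0:ℝ) ≤ p.2.1 ^ (n-1) * Real.exp (-((1-c) * p.2.1)) := by
      have := Real.rpow_nonneg (le_of_lt hp.2.1) (n-1); positivity
    rw [← ENNReal.ofReal_mul hx1, ← ENNReal.ofReal_mul (mul_nonneg hx1 hx2)]
    exact ENNReal.ofReal_le_ofReal (key p hp)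
  refine lt_of_le_of_lt mono ?_
  rw [lint_box _ _ _ (meas_rpow_exp n (1-c)) (meas_rpow_exp n (1-c)) measurable_const]
  rw [lint_gamma hn (by linarith : (0:ℝ) < 1 - c)]
  refine ENNReal.mul_lt_top (ENNReal.mul_lt_top ENNReal.ofReal_lt_top ENNReal.ofReal_lt_top) ?_
  rw [MeasureTheory.setLIntegral_const]
  exact ENNReal.mul_lt_top ENNReal.ofReal_lt_top (by simp [Real.volume_Ioc])

lemma G_pos {n : ℝ} (hn : 0 < n) (m : ℕ) (x : ℝ) : 0 < G n m x := by
  have hΓ : 0 < Real.Gamma n := Real.Gamma_pos_of_pos hn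
  set B : Set (ℝ × ℝ × ℝ) := Ioc (1:ℝ) 2 ×ˢ (Ioc (1:ℝ) 2 ×ˢ Ioc (2:ℝ) 3) with hB_def
  have hBm : MeasurableSet B := measurableSet_Ioc.prod (measurableSet_Ioc.prod measurableSet_Ioc)
  have hsub : B ⊆ box := by
    rintro p ⟨h1, h2, h3⟩
    refine ⟨lt_trans one_pos h1.1, lt_trans one_pos h2.1, lt_trans two_pos h3.1,
      le_trans h3.2 (le_of_lt Real.pi_gt_three)⟩
  set m1 : ℝ := min 1 (2 ^ (n - 1)) with hm1_def
  have hm1 : 0 < m1 := by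
    rw [hm1_def]
    exact lt_min one_pos (Real.rpow_pos_of_pos two_pos _)
  have hrmin : ∀ s : ℝ, s ∈ Ioc (1:ℝ) 2 → m1 ≤ s ^ (n - 1) := by
    intro s hs
    rcases le_total 0 (n - 1) with hcase | hcase
    · refine le_trans (min_le_left _ _) ?_
      calc (1:ℝ) = 1 ^ (n-1) := (Real.one_rpow _).symm
        _ ≤ s ^ (n-1) := Real.rpow_le_rpow zero_le_one (le_of_lt hs.1) hcase
    · refine le_trans (min_le_right _ _) ?_
      have hs0 : (0:ℝ) < s := lt_trans one_pos hs.1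
      have h2s : (2:ℝ) = s * (2 / s) := by field_simp
      calc (2:ℝ) ^ (n-1) = (s * (2/s)) ^ (n-1) := by rw [← h2s]
        _ = s ^ (n-1) * (2/s) ^ (n-1) := Real.mul_rpow hs0.le (by positivity)
        _ ≤ s ^ (n-1) * 1 := by
            refine mul_le_mul_of_nonneg_left ?_ (Real.rpow_nonneg hs0.le _)
            exact Real.rpow_le_one_of_one_le_of_nonpos
              ((one_le_div hs0).2 hs.2) hcase
        _ = s ^ (n-1) := mul_one _
  set c₀ : ℝ := 1 * Real.exp (-(8 * |x|)) *
      (m1 * Real.exp (-2) * (m1 * Real.exp (-2)) / (π * Real.Gamma n ^ 2)) with hc₀_def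
  have hc₀ : 0 < c₀ := by rw [hc₀_def]; positivity
  have hlow : ∀ p ∈ B, ENNReal.ofReal c₀
      ≤ ENNReal.ofReal (phi p ^ m * Real.exp (-x * phi p) * dens n p) := by
    intro p hp
    obtain ⟨h1, h2, h3⟩ := hp
    have hbox := hsub ⟨h1, h2, h3⟩
    have hφ0 := phi_nonneg hbox
    have hφ2 : 2 ≤ phi p := by
      have hcos : Real.cos p.2.2 ≤ 0 := by
        refine Real.cos_nonpos_of_pi_div_two_le_of_le ?_ ?_
        · linarith [Real.pi_le_four, h3.1]
        · linarith [Real.pi_gt_three, h3.2]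
      have hsq : 0 ≤ Real.sqrt (p.1 * p.2.1) := Real.sqrt_nonneg _
      unfold phi
      nlinarith [mul_nonneg (mul_nonneg (by norm_num : (0:ℝ) ≤ 2) hsq)
        (neg_nonneg.2 hcos), h1.1, h2.1]
    have hφ8 : phi p ≤ 8 := by
      have := phi_le hbox
      nlinarith [h1.2, h2.2]
    have L1 : (1:ℝ) ≤ phi p ^ m := by
      simpa [one_pow] using pow_le_pow_left₀ (by norm_num : (0:ℝ) ≤ 1)
        (by linarith : (1:ℝ) ≤ phi p) m
    have L2 : Real.exp (-(8 * |x|)) ≤ Real.exp (-x * phi p) := by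
      refine Real.exp_le_exp.2 ?_
      have h1x : x * phi p ≤ |x| * phi p :=
        mul_le_mul_of_nonneg_right (le_abs_self x) hφ0
      have h2x : |x| * phi p ≤ |x| * 8 := mul_le_mul_of_nonneg_left hφ8 (abs_nonneg x)
      linarith
    have L3 : m1 * Real.exp (-2) * (m1 * Real.exp (-2)) / (π * Real.Gamma n ^ 2)
        ≤ dens n p := by
      unfold dens
      have e1 : m1 ≤ p.1 ^ (n-1) := hrmin _ h1
      have e2 : m1 ≤ p.2.1 ^ (n-1) := hrmin _ h2
      have e3 : Real.exp (-2) ≤ Real.exp (-p.1) := Real.exp_le_exp.2 (by linarith [h1.2])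
      have e4 : Real.exp (-2) ≤ Real.exp (-p.2.1) := Real.exp_le_exp.2 (by linarith [h2.2])
      have hπ2 : (0:ℝ) < π * Real.Gamma n ^ 2 := by positivity
      have r1 : (0:ℝ) ≤ p.1 ^ (n-1) := le_trans hm1.le e1
      have r2 : (0:ℝ) ≤ p.2.1 ^ (n-1) := le_trans hm1.le e2
      gcongr
    refine ENNReal.ofReal_le_ofReal ?_
    rw [hc₀_def]
    refine mul_le_mul (mul_le_mul L1 L2 (Real.exp_nonneg _) (by positivity)) L3 ?_ ?_
    · positivity
    · positivity
  have step : ENNReal.ofReal c₀ * volume B ≤ G n m x := by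
    calc ENNReal.ofReal c₀ * volume B = ∫⁻ _ in B, ENNReal.ofReal c₀ := by
          rw [MeasureTheory.setLIntegral_const]
      _ ≤ ∫⁻ p in B, ENNReal.ofReal (phi p ^ m * Real.exp (-x * phi p) * dens n p) :=
          lintegral_mono_ae ((ae_restrict_iff' hBm).2 (ae_of_all _ hlow))
      _ ≤ G n m x := lintegral_mono_set hsub
  have hvol : volume B = 1 := by
    rw [hB_def, Measure.volume_eq_prod, Measure.prod_prod, Measure.volume_eq_prod,
      Measure.prod_prod, Real.volume_Ioc]
    norm_num
  rw [hvol, mul_one] at step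
  exact lt_of_lt_of_le (ENNReal.ofReal_pos.2 hc₀) step

lemma integrand_nonneg {n : ℝ} (hn : 0 < n) (m : ℕ) (a : ℝ) :
    0 ≤ᵐ[(volume : Measure (ℝ × ℝ × ℝ)).restrict box]
      (fun p => phi p ^ m * Real.exp (-a * phi p) * dens n p) := by
  refine (ae_restrict_iff' mbox).2 (ae_of_all _ (fun p hp => ?_))
  have h1 := phi_nonneg hp
  have h2 := dens_nonneg hn hp
  positivity

lemma integrable_Fm {n : ℝ} (hn : 0 < n) (m : ℕ) {a : ℝ} (ha : -(1/2 : ℝ) < a) :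
    Integrable (fun p => phi p ^ m * Real.exp (-a * phi p) * dens n p)
      ((volume : Measure (ℝ × ℝ × ℝ)).restrict box) := by
  refine ⟨(measurable_integrand n m a).aestronglyMeasurable, ?_⟩
  rw [MeasureTheory.hasFiniteIntegral_iff_ofReal (integrand_nonneg hn m a)]
  exact G_lt_top hn m ha

lemma Fm_eq_toReal {n : ℝ} (hn : 0 < n) (m : ℕ) (x : ℝ) :
    Fm n m x = (G n m x).toReal := by
  unfold Fm G
  rw [MeasureTheory.integral_eq_lintegral_of_nonneg_ae (integrand_nonneg hn m x)
    (measurable_integrand n m x).aestronglyMeasurable]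

lemma Fm_pos {n : ℝ} (hn : 0 < n) (m : ℕ) {x : ℝ} (hx : -(1/2 : ℝ) < x) : 0 < Fm n m x := by
  rw [Fm_eq_toReal hn]
  exact ENNReal.toReal_pos (G_pos hn m x).ne' (G_lt_top hn m hx).ne

lemma qk_nonneg (n x : ℝ) (k : ℕ) : 0 ≤ qk n x k := sq_nonneg _

lemma Sfun_eq_Fm {n : ℝ} (hn : 0 < n) {x : ℝ} (hx : -(1/2 : ℝ) < x) :
    Sfun n x = Fm n 0 x := by
  have h1 : Sfun n x = (∑' k, ENNReal.ofReal (qk n x k)).toReal := by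
    rw [ENNReal.tsum_toReal_eq (fun k => ENNReal.ofReal_ne_top)]
    exact tsum_congr (fun k => (ENNReal.toReal_ofReal (qk_nonneg n x k)).symm)
  rw [h1, sum_qk_eq_G hn (by linarith : (-1:ℝ) < x), Fm_eq_toReal hn]

lemma hasDerivAt_Fm {n : ℝ} (hn : 0 < n) (m : ℕ) {x : ℝ} (hx : -(1/2 : ℝ) < x) :
    HasDerivAt (Fm n m) (-(Fm n (m + 1) x)) x := by
  set ε : ℝ := (x + 1/2) / 2 with hε_def
  have hε : 0 < ε := by rw [hε_def]; linarith
  have hxε : -(1/2 : ℝ) < x - ε := by rw [hε_def]; linarith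
  have hbound : ∀ᵐ p ∂((volume : Measure (ℝ × ℝ × ℝ)).restrict box),
      ∀ y ∈ Metric.ball x ε,
        ‖-(phi p ^ (m+1) * Real.exp (-y * phi p) * dens n p)‖
          ≤ phi p ^ (m+1) * Real.exp (-(x - ε) * phi p) * dens n p := by
    refine (ae_restrict_iff' mbox).2 (ae_of_all _ (fun p hp y hy => ?_))
    have hφ0 := phi_nonneg hp
    have hd0 := dens_nonneg hn hp
    have hval : (0:ℝ) ≤ phi p ^ (m+1) * Real.exp (-y * phi p) * dens n p := by positivity
    rw [norm_neg, Real.norm_eq_abs, abs_of_nonneg hval]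
    have hyx : x - ε < y := by
      have := Metric.mem_ball.1 hy
      rw [Real.dist_eq, abs_lt] at this
      linarith [this.1]
    have hexp : Real.exp (-y * phi p) ≤ Real.exp (-(x - ε) * phi p) := by
      refine Real.exp_le_exp.2 ?_
      have : (x - ε) * phi p ≤ y * phi p := mul_le_mul_of_nonneg_right hyx.le hφ0
      linarith
    exact mul_le_mul_of_nonneg_right
      (mul_le_mul_of_nonneg_left hexp (by positivity)) hd0
  have hdiff : ∀ᵐ p ∂((volume : Measure (ℝ × ℝ × ℝ)).restrict box),
      ∀ y ∈ Metric.ball x ε,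
        HasDerivAt (fun z => phi p ^ m * Real.exp (-z * phi p) * dens n p)
          (-(phi p ^ (m+1) * Real.exp (-y * phi p) * dens n p)) y := by
    refine ae_of_all _ (fun p y _ => ?_)
    have h1 : HasDerivAt (fun z : ℝ => -z * phi p) (-(phi p)) y := by
      simpa using (hasDerivAt_id y).neg.mul_const (phi p)
    have h3 := (h1.exp.const_mul (phi p ^ m)).mul_const (dens n p)
    refine h3.congr_deriv ?_
    rw [pow_succ]
    ring
  have key := (hasDerivAt_integral_of_dominated_loc_of_deriv_le (Metric.ball_mem_nhds x hε)
    (Filter.Eventually.of_forall (fun y => (measurable_integrand n m y).aestronglyMeasurable))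
    (integrable_Fm hn m hx)
    ((measurable_integrand n (m+1) x).neg.aestronglyMeasurable)
    hbound
    (integrable_Fm hn (m+1) hxε)
    hdiff).2
  have hneg : ∫ p in box, -(phi p ^ (m+1) * Real.exp (-x * phi p) * dens n p)
      = -(Fm n (m+1) x) := by
    rw [MeasureTheory.integral_neg]
    rfl
  rw [hneg] at key
  exact key

lemma cs_ineq {n : ℝ} (hn : 0 < n) {x : ℝ} (hx : -(1/2 : ℝ) < x) :
    Fm n 1 x ^ 2 ≤ Fm n 0 x * Fm n 2 x := by
  have hpq : Real.HolderConjugate 2 2 := ⟨by norm_num, by norm_num, by norm_num⟩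
  set f : ℝ × ℝ × ℝ → ℝ≥0∞ :=
    fun p => ENNReal.ofReal (Real.exp (-x * phi p / 2) * Real.sqrt (dens n p)) with hf_def
  set g : ℝ × ℝ × ℝ → ℝ≥0∞ :=
    fun p => ENNReal.ofReal (phi p * Real.exp (-x * phi p / 2) * Real.sqrt (dens n p)) with hg_def
  have hfm : AEMeasurable f ((volume : Measure (ℝ × ℝ × ℝ)).restrict box) := by
    apply Measurable.aemeasurable
    apply Measurable.ennreal_ofReal
    exact ((measurable_phi.const_mul (-x)).div_const 2).exp.mul (measurable_dens n).sqrt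
  have hgm : AEMeasurable g ((volume : Measure (ℝ × ℝ × ℝ)).restrict box) := by
    apply Measurable.aemeasurable
    apply Measurable.ennreal_ofReal
    exact (measurable_phi.mul ((measurable_phi.const_mul (-x)).div_const 2).exp).mul
      (measurable_dens n).sqrt
  have H := ENNReal.lintegral_mul_le_Lp_mul_Lq
    ((volume : Measure (ℝ × ℝ × ℝ)).restrict box) hpq hfm hgm
  have hE2 : ∀ p : ℝ × ℝ × ℝ, Real.exp (-x * phi p / 2) * Real.exp (-x * phi p / 2)
      = Real.exp (-x * phi p) := by
    intro p
    rw [← Real.exp_add]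
    congr 1
    ring
  have hfg : ∫⁻ p in box, f p * g p = G n 1 x := by
    refine setLIntegral_congr_fun mbox (fun p hp => ?_)
    have hd0 := dens_nonneg hn hp
    have hφ0 := phi_nonneg hp
    have h1 : (0:ℝ) ≤ Real.exp (-x * phi p / 2) * Real.sqrt (dens n p) := by positivity
    rw [hf_def, hg_def]
    simp only
    rw [← ENNReal.ofReal_mul h1]
    congr 1
    have hS2 : Real.sqrt (dens n p) * Real.sqrt (dens n p) = dens n p :=
      Real.mul_self_sqrt hd0
    rw [pow_one]
    linear_combination (phi p * Real.sqrt (dens n p) * Real.sqrt (dens n p)) * hE2 p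
      + (phi p * Real.exp (-x * phi p)) * hS2
  have hf2 : ∫⁻ p in box, f p ^ (2:ℝ) = G n 0 x := by
    refine setLIntegral_congr_fun mbox (fun p hp => ?_)
    have hd0 := dens_nonneg hn hp
    have h1 : (0:ℝ) ≤ Real.exp (-x * phi p / 2) * Real.sqrt (dens n p) := by positivity
    rw [hf_def]
    simp only
    rw [ENNReal.ofReal_rpow_of_nonneg h1 (by norm_num : (0:ℝ) ≤ 2)]
    congr 1
    rw [show ((2:ℝ)) = ((2:ℕ):ℝ) by norm_num, Real.rpow_natCast]
    have hS2 : Real.sqrt (dens n p) * Real.sqrt (dens n p) = dens n p :=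
      Real.mul_self_sqrt hd0
    rw [pow_zero, one_mul]
    calc (Real.exp (-x * phi p / 2) * Real.sqrt (dens n p)) ^ 2
        = (Real.exp (-x * phi p / 2) * Real.exp (-x * phi p / 2)) *
            (Real.sqrt (dens n p) * Real.sqrt (dens n p)) := by ring
      _ = Real.exp (-x * phi p) * dens n p := by rw [hE2 p, hS2]
  have hg2 : ∫⁻ p in box, g p ^ (2:ℝ) = G n 2 x := by
    refine setLIntegral_congr_fun mbox (fun p hp => ?_)
    have hd0 := dens_nonneg hn hp
    have hφ0 := phi_nonneg hp
    have h1 : (0:ℝ) ≤ phi p * Real.exp (-x * phi p / 2) * Real.sqrt (dens n p) := by positivity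
    rw [hg_def]
    simp only
    rw [ENNReal.ofReal_rpow_of_nonneg h1 (by norm_num : (0:ℝ) ≤ 2)]
    congr 1
    rw [show ((2:ℝ)) = ((2:ℕ):ℝ) by norm_num, Real.rpow_natCast]
    have hS2 : Real.sqrt (dens n p) * Real.sqrt (dens n p) = dens n p :=
      Real.mul_self_sqrt hd0
    calc (phi p * Real.exp (-x * phi p / 2) * Real.sqrt (dens n p)) ^ 2
        = (phi p ^ 2) * ((Real.exp (-x * phi p / 2) * Real.exp (-x * phi p / 2)) *
            (Real.sqrt (dens n p) * Real.sqrt (dens n p))) := by ring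
      _ = phi p ^ 2 * (Real.exp (-x * phi p) * dens n p) := by rw [hE2 p, hS2]
      _ = phi p ^ 2 * Real.exp (-x * phi p) * dens n p := by ring
  simp only [Pi.mul_apply] at H
  rw [hfg, hf2, hg2] at H
  -- now H : G n 1 x ≤ (G n 0 x) ^ (1/2) * (G n 2 x) ^ (1/2)
  have h0top := (G_lt_top hn 0 hx).ne
  have h2top := (G_lt_top hn 2 hx).ne
  have hRtop : (G n 0 x) ^ ((1:ℝ)/2) * (G n 2 x) ^ ((1:ℝ)/2) ≠ ⊤ := by
    refine ENNReal.mul_ne_top ?_ ?_ <;>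
      exact ENNReal.rpow_ne_top_of_nonneg (by norm_num) (by assumption)
  have hle : Fm n 1 x ≤ (Fm n 0 x) ^ ((1:ℝ)/2) * (Fm n 2 x) ^ ((1:ℝ)/2) := by
    rw [Fm_eq_toReal hn, Fm_eq_toReal hn, Fm_eq_toReal hn]
    calc (G n 1 x).toReal ≤ ((G n 0 x) ^ ((1:ℝ)/2) * (G n 2 x) ^ ((1:ℝ)/2)).toReal :=
          ENNReal.toReal_mono hRtop H
      _ = (G n 0 x).toReal ^ ((1:ℝ)/2) * (G n 2 x).toReal ^ ((1:ℝ)/2) := by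
          rw [ENNReal.toReal_mul, ← ENNReal.toReal_rpow, ← ENNReal.toReal_rpow]
  have h0 : 0 ≤ Fm n 0 x := by rw [Fm_eq_toReal hn]; exact ENNReal.toReal_nonneg
  have h2 : 0 ≤ Fm n 2 x := by rw [Fm_eq_toReal hn]; exact ENNReal.toReal_nonneg
  have h1 : 0 ≤ Fm n 1 x := by rw [Fm_eq_toReal hn]; exact ENNReal.toReal_nonneg
  calc Fm n 1 x ^ 2 ≤ ((Fm n 0 x) ^ ((1:ℝ)/2) * (Fm n 2 x) ^ ((1:ℝ)/2)) ^ 2 :=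
        pow_le_pow_left₀ h1 hle 2
    _ = Fm n 0 x * Fm n 2 x := by
        rw [mul_pow, ← Real.rpow_natCast ((Fm n 0 x) ^ ((1:ℝ)/2)) 2,
          ← Real.rpow_natCast ((Fm n 2 x) ^ ((1:ℝ)/2)) 2,
          ← Real.rpow_mul h0, ← Real.rpow_mul h2]
        norm_num

lemma iter_general {n : ℝ} (hn : 0 < n) (g : ℝ → ℝ) (j : ℕ)
    (hg : ∀ y : ℝ, -(1/2 : ℝ) < y → g y = Fm n j y) :
    ∀ (m : ℕ) (x : ℝ), -(1/2 : ℝ) < x →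
      iteratedDeriv m g x = (-1 : ℝ) ^ m * Fm n (j + m) x := by
  intro m
  induction m with
  | zero => intro x hx; simpa [iteratedDeriv_zero] using hg x hx
  | succ m ih =>
    intro x hx
    rw [iteratedDeriv_succ]
    have heq : iteratedDeriv m g =ᶠ[𝓝 x] fun y => (-1 : ℝ) ^ m * Fm n (j + m) y :=
      eventually_of_mem (Ioi_mem_nhds (show -(1/2:ℝ) < x from hx)) (fun y hy => ih y hy)
    rw [heq.deriv_eq]
    have h := ((hasDerivAt_Fm hn (j + m) hx).const_mul ((-1 : ℝ) ^ m)).deriv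
    rw [h]
    have : j + (m + 1) = (j + m) + 1 := by ring
    rw [this]
    ring

lemma hasDerivAt_Sfun {n : ℝ} (hn : 0 < n) {x : ℝ} (hx : -(1/2 : ℝ) < x) :
    HasDerivAt (Sfun n) (-(Fm n 1 x)) x := by
  apply (hasDerivAt_Fm hn 0 hx).congr_of_eventuallyEq
  exact eventually_of_mem (Ioi_mem_nhds (show -(1/2:ℝ) < x from hx))
    (fun y hy => Sfun_eq_Fm hn hy)

end NBCM

open NBCM

theorem neg_binomial_index_coincidence_completely_monotonic (n : ℝ) (hn : 0 < n) :
    (∀ (m : ℕ) (x : ℝ), 0 ≤ x →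
      0 < (-1 : ℝ) ^ m * iteratedDeriv m
        (fun y : ℝ => ∑' k : ℕ,
          (((∏ i ∈ Finset.range k, (n + i)) / (Nat.factorial k)) * y ^ k * (1 + y) ^ (-n - k)) ^ 2) x) ∧
    ConvexOn ℝ (Set.Ici (0:ℝ)) (fun y : ℝ => Real.log (∑' k : ℕ,
        (((∏ i ∈ Finset.range k, (n + i)) / (Nat.factorial k)) * y ^ k * (1 + y) ^ (-n - k)) ^ 2)) ∧
    MonotoneOn (fun y : ℝ => -Real.log (∑' k : ℕ,
        (((∏ i ∈ Finset.range k, (n + i)) / (Nat.factorial k)) * y ^ k * (1 + y) ^ (-n - k)) ^ 2))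
      (Set.Ici (0:ℝ)) ∧
    ConcaveOn ℝ (Set.Ici (0:ℝ)) (fun y : ℝ => -Real.log (∑' k : ℕ,
        (((∏ i ∈ Finset.range k, (n + i)) / (Nat.factorial k)) * y ^ k * (1 + y) ^ (-n - k)) ^ 2)) ∧
    (∀ (m : ℕ) (x : ℝ), 0 ≤ x →
      0 ≤ (-1 : ℝ) ^ m * iteratedDeriv m
        (deriv (fun y : ℝ => 1 - ∑' k : ℕ,
          (((∏ i ∈ Finset.range k, (n + i)) / (Nat.factorial k)) * y ^ k * (1 + y) ^ (-n - k)) ^ 2)) x) := by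
  have hhalf : ∀ x : ℝ, 0 ≤ x → -(1/2 : ℝ) < x := fun x hx => by linarith
  -- part 1
  have part1 : ∀ (m : ℕ) (x : ℝ), 0 ≤ x →
      0 < (-1 : ℝ) ^ m * iteratedDeriv m (Sfun n) x := by
    intro m x hx
    rw [iter_general hn (Sfun n) 0 (fun y hy => Sfun_eq_Fm hn hy) m x (hhalf x hx)]
    have : (-1 : ℝ) ^ m * ((-1 : ℝ) ^ m * Fm n (0 + m) x) = Fm n (0 + m) x := by
      rw [← mul_assoc, ← mul_pow]
      norm_num
    rw [this]
    exact Fm_pos hn _ (hhalf x hx)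
  -- derivative facts for log S
  have hSpos : ∀ x : ℝ, -(1/2 : ℝ) < x → 0 < Sfun n x := fun x hx => by
    rw [Sfun_eq_Fm hn hx]; exact Fm_pos hn 0 hx
  have hlog : ∀ x : ℝ, -(1/2 : ℝ) < x →
      HasDerivAt (fun y => Real.log (Sfun n y)) (-(Fm n 1 x) / Fm n 0 x) x := by
    intro x hx
    have h := (hasDerivAt_Sfun hn hx).log (hSpos x hx).ne'
    rwa [Sfun_eq_Fm hn hx] at h
  set g1 : ℝ → ℝ := fun y => -(Fm n 1 y) / Fm n 0 y with hg1_def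
  have hg1deriv : ∀ x : ℝ, -(1/2 : ℝ) < x →
      HasDerivAt g1 ((Fm n 2 x * Fm n 0 x - Fm n 1 x ^ 2) / (Fm n 0 x) ^ 2) x := by
    intro x hx
    have h := ((hasDerivAt_Fm hn 1 hx).neg.div (hasDerivAt_Fm hn 0 hx) (Fm_pos hn 0 hx).ne')
    refine h.congr_deriv ?_
    simp only [Pi.neg_apply]
    ring
  have hlogderiv : ∀ x : ℝ, -(1/2 : ℝ) < x →
      deriv (fun y => Real.log (Sfun n y)) x = g1 x := fun x hx => (hlog x hx).deriv
  have hIci : ∀ x : ℝ, x ∈ Set.Ici (0:ℝ) → -(1/2 : ℝ) < x := fun x hx => hhalf x hx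
  have hIoi : ∀ x : ℝ, x ∈ Set.Ioi (0:ℝ) → -(1/2 : ℝ) < x := fun x hx => by
    have : (0:ℝ) < x := hx
    linarith
  -- part 2 : log S convex on [0, ∞)
  have part2 : ConvexOn ℝ (Set.Ici (0:ℝ)) (fun y => Real.log (Sfun n y)) := by
    refine convexOn_of_deriv2_nonneg (convex_Ici 0)
      (fun x hx => (hlog x (hIci x hx)).continuousAt.continuousWithinAt) ?_ ?_ ?_
    · rw [interior_Ici]
      exact fun x hx => (hlog x (hIoi x hx)).differentiableAt.differentiableWithinAt
    · rw [interior_Ici]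
      intro x hx
      have hx' := hIoi x hx
      have heq : deriv (fun y => Real.log (Sfun n y)) =ᶠ[𝓝 x] g1 :=
        eventually_of_mem (Ioi_mem_nhds hx') (fun y hy => hlogderiv y hy)
      exact ((heq.differentiableAt_iff).2 (hg1deriv x hx').differentiableAt).differentiableWithinAt
    · rw [interior_Ici]
      intro x hx
      have hx' := hIoi x hx
      have heq : deriv (fun y => Real.log (Sfun n y)) =ᶠ[𝓝 x] g1 :=
        eventually_of_mem (Ioi_mem_nhds hx') (fun y hy => hlogderiv y hy)
      have h2 : deriv^[2] (fun y => Real.log (Sfun n y)) x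
          = deriv (deriv (fun y => Real.log (Sfun n y))) x := by
        simp [Function.iterate_succ, Function.iterate_zero]
      rw [h2, heq.deriv_eq, (hg1deriv x hx').deriv]
      have hcs := cs_ineq hn hx'
      have h0 := Fm_pos hn 0 hx'
      apply div_nonneg
      · nlinarith
      · positivity
  -- part 3 : -log S monotone on [0, ∞)
  have part3 : MonotoneOn (fun y => -Real.log (Sfun n y)) (Set.Ici (0:ℝ)) := by
    refine monotoneOn_of_deriv_nonneg (convex_Ici 0)
      (fun x hx => ((hlog x (hIci x hx)).neg.continuousAt.continuousWithinAt)) ?_ ?_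
    · rw [interior_Ici]
      exact fun x hx => (hlog x (hIoi x hx)).neg.differentiableAt.differentiableWithinAt
    · rw [interior_Ici]
      intro x hx
      have hx' := hIoi x hx
      rw [HasDerivAt.deriv (f := fun y => -Real.log (Sfun n y)) (hlog x hx').neg]
      rw [neg_div, neg_neg]
      exact div_nonneg (Fm_pos hn 1 hx').le (Fm_pos hn 0 hx').le
  -- part 5 : derivative of Tsallis entropy is completely monotonic
  have hTd : ∀ y : ℝ, -(1/2 : ℝ) < y →
      deriv (fun z : ℝ => 1 - Sfun n z) y = Fm n 1 y := by
    intro y hy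
    have h := (hasDerivAt_const y (1:ℝ)).sub (hasDerivAt_Sfun hn hy)
    rw [HasDerivAt.deriv (f := fun z : ℝ => 1 - Sfun n z) h]
    ring
  have part5 : ∀ (m : ℕ) (x : ℝ), 0 ≤ x →
      0 ≤ (-1 : ℝ) ^ m * iteratedDeriv m (deriv (fun z : ℝ => 1 - Sfun n z)) x := by
    intro m x hx
    rw [iter_general hn (deriv (fun z : ℝ => 1 - Sfun n z)) 1 hTd m x (hhalf x hx)]
    have : (-1 : ℝ) ^ m * ((-1 : ℝ) ^ m * Fm n (1 + m) x) = Fm n (1 + m) x := by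
      rw [← mul_assoc, ← mul_pow]
      norm_num
    rw [this]
    exact (Fm_pos hn _ (hhalf x hx)).le
  refine ⟨part1, part2, part3, part2.neg, part5⟩
end
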